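/- arXiv:0706.3263 — 4 statements merged into one kernel-verified Lean document; each statement's English description precedes it below -/
import Mathlib

section
/- Fix a normal orientation and a total order on edges. Let ε be a reduced totally cyclic orientation of G and let e be the largest edge of G, assumed cycle flippable in ε. Then the restriction ε′ of ε to G − e is a reduced orientation of G − e. -/
/-!  Multigraphs with labelled edges: an edge `e` has endpoints `fst e`, `snd e`.
An orientation is `ε : E → Bool`, where `ε e = true` means `e` is directed
from `fst e` (tail) to `snd e` (head), and `false` means the reverse. -/

structure OGraph (V E : Type) where
  fst : E → V
  snd : E → V

namespace OGraph

variable {V E : Type}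

/-- Head (target) of edge `e` under orientation `ε`. -/
def head (G : OGraph V E) (ε : E → Bool) (e : E) : V := cond (ε e) (G.snd e) (G.fst e)

/-- Tail (source) of edge `e` under orientation `ε`. -/
def tail (G : OGraph V E) (ε : E → Bool) (e : E) : V := cond (ε e) (G.fst e) (G.snd e)

/-- Directed reachability under `ε`. -/
def Reaches (G : OGraph V E) (ε : E → Bool) (u v : V) : Prop :=
  Relation.ReflTransGen (fun a b => ∃ e, G.tail ε e = a ∧ G.head ε e = b) u v

/-- Directed reachability avoiding the edge `e₀` (i.e. in `G - e₀`). -/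
def ReachesAvoiding (G : OGraph V E) (ε : E → Bool) (e₀ : E) (u v : V) : Prop :=
  Relation.ReflTransGen (fun a b => ∃ e, e ≠ e₀ ∧ G.tail ε e = a ∧ G.head ε e = b) u v

/-- `ε` has a directed cut: a set `S` of vertices with at least one edge leaving `S`
and no edge entering `S`. -/
def HasDirCut (G : OGraph V E) (ε : E → Bool) : Prop :=
  ∃ S : Set V, (∃ e, G.tail ε e ∈ S ∧ G.head ε e ∉ S) ∧
    ∀ e, G.head ε e ∈ S → G.tail ε e ∈ S

/-- A totally cyclic orientation: one without directed cuts. -/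
def TotallyCyclic (G : OGraph V E) (ε : E → Bool) : Prop := ¬ G.HasDirCut ε

/-- An acyclic orientation: no directed cycle, i.e. no edge whose head reaches its tail. -/
def Acyclic (G : OGraph V E) (ε : E → Bool) : Prop :=
  ∀ e, ¬ G.Reaches ε (G.head ε e) (G.tail ε e)

/-- The set of edges `D` induces a directed Eulerian subgraph w.r.t. `ε`:
in-degree equals out-degree at each vertex. -/
def IsEulerianSet (G : OGraph V E) (ε : E → Bool) (D : Set E) : Prop :=
  ∀ v, Nat.card {e : E // e ∈ D ∧ G.head ε e = v} =
       Nat.card {e : E // e ∈ D ∧ G.tail ε e = v}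

/-- The set of edges on which two orientations differ. -/
def diffSet (ε₁ ε₂ : E → Bool) : Set E := {e | ε₁ e ≠ ε₂ e}

/-- Eulerian equivalence of orientations. -/
def EulerianEquiv (G : OGraph V E) (ε₁ ε₂ : E → Bool) : Prop :=
  G.IsEulerianSet ε₁ (diffSet ε₁ ε₂)

/-- The edges crossing between `S` and its complement. -/
def cutEdges (G : OGraph V E) (S : Set V) : Set E :=
  {e | (G.fst e ∈ S ∧ G.snd e ∉ S) ∨ (G.fst e ∉ S ∧ G.snd e ∈ S)}

/-- A bond: a minimal nonempty edge cut. -/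
def IsBond (G : OGraph V E) (D : Set E) : Prop :=
  (∃ S, D = G.cutEdges S) ∧ D.Nonempty ∧
    ∀ D', (∃ S, D' = G.cutEdges S) → D'.Nonempty → D' ⊆ D → D' = D

/-- A directed bond w.r.t. `ε`: a bond all of whose edges go from `S` to its complement. -/
def IsDirectedBond (G : OGraph V E) (ε : E → Bool) (D : Set E) : Prop :=
  G.IsBond D ∧ ∃ S, D = G.cutEdges S ∧ ∀ e ∈ D, G.tail ε e ∈ S

/-- A directed cut: a disjoint union of directed bonds. -/
def IsDirectedCut (G : OGraph V E) (ε : E → Bool) (D : Set E) : Prop :=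
  ∃ (n : ℕ) (B : Fin n → Set E), (∀ i, G.IsDirectedBond ε (B i)) ∧
    (Pairwise fun i j => Disjoint (B i) (B j)) ∧ D = ⋃ i, B i

/-- Cut equivalence of orientations. -/
def CutEquiv (G : OGraph V E) (ε₁ ε₂ : E → Bool) : Prop :=
  G.IsDirectedCut ε₁ (diffSet ε₁ ε₂) ∨ G.IsDirectedCut ε₂ (diffSet ε₁ ε₂)

/-- Eulerian-cut equivalence of orientations: the differing edges split into an
edge-disjoint union of a directed Eulerian subgraph and a directed cut. -/
def EulCutEquiv (G : OGraph V E) (ε₁ ε₂ : E → Bool) : Prop :=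
  (∃ D₁ D₂ : Set E, Disjoint D₁ D₂ ∧ diffSet ε₁ ε₂ = D₁ ∪ D₂ ∧
      G.IsEulerianSet ε₁ D₁ ∧ G.IsDirectedCut ε₁ D₂) ∨
  (∃ D₁ D₂ : Set E, Disjoint D₁ D₂ ∧ diffSet ε₁ ε₂ = D₁ ∪ D₂ ∧
      G.IsEulerianSet ε₂ D₁ ∧ G.IsDirectedCut ε₂ D₂)

/-- Undirected connectivity via the edges of `A` (spanning subgraph `(V, A)`). -/
def connRel (G : OGraph V E) (A : Set E) : V → V → Prop :=
  Relation.EqvGen (fun u v => ∃ e ∈ A, (G.fst e = u ∧ G.snd e = v) ∨ (G.fst e = v ∧ G.snd e = u))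

/-- Number of connected components of the spanning subgraph `(V, A)`. -/
noncomputable def ncomp (G : OGraph V E) (A : Set E) : ℕ :=
  Nat.card (Quot (G.connRel A))

def Connected (G : OGraph V E) : Prop := ∀ u v : V, G.connRel Set.univ u v

/-- Rank of an edge set: `|V| - c(A)`. -/
noncomputable def rank (G : OGraph V E) [Fintype V] (A : Set E) : ℕ :=
  Fintype.card V - G.ncomp A

/-- The Tutte polynomial (Whitney rank expansion), evaluated at `(x, y)`. -/
noncomputable def tutte (G : OGraph V E) [Fintype V] [Fintype E] (x y : ℤ) : ℤ :=
  ∑ A : Finset E, (x - 1) ^ (G.rank (Set.univ : Set E) - G.rank (A : Set E)) *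
    (y - 1) ^ (A.card - G.rank (A : Set E))

/-- The Eulerian equivalence class (within totally cyclic orientations) of `ε`. -/
def eulClass (G : OGraph V E) (ε : E → Bool) : Set (E → Bool) :=
  {ε' | G.TotallyCyclic ε' ∧ G.EulerianEquiv ε ε'}

/-- The number of Eulerian equivalence classes of totally cyclic orientations. -/
noncomputable def numEulClasses (G : OGraph V E) : ℕ :=
  Nat.card {C : Set (E → Bool) // ∃ ε, G.TotallyCyclic ε ∧ C = G.eulClass ε}

/-- The cut equivalence class (within acyclic orientations) of `ε`. -/
def cutClass (G : OGraph V E) (ε : E → Bool) : Set (E → Bool) :=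
  {ε' | G.Acyclic ε' ∧ G.CutEquiv ε ε'}

/-- The number of cut equivalence classes of acyclic orientations. -/
noncomputable def numCutClasses (G : OGraph V E) : ℕ :=
  Nat.card {C : Set (E → Bool) // ∃ ε, G.Acyclic ε ∧ C = G.cutClass ε}

/-- Deletion of the edge `e`. -/
def deleteEdge (G : OGraph V E) (e : E) : OGraph V {f : E // f ≠ e} :=
  ⟨fun f => G.fst f.val, fun f => G.snd f.val⟩

/-- Contraction of the edge `e`: identify its two endpoints and remove `e`. -/
def contractEdge (G : OGraph V E) (e : E) :
    OGraph (Quot fun a b => a = G.fst e ∧ b = G.snd e) {f : E // f ≠ e} :=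
  ⟨fun f => Quot.mk _ (G.fst f.val), fun f => Quot.mk _ (G.snd f.val)⟩

/-- `e` is a bridge: its endpoints are disconnected in `G - e`. -/
def IsBridge (G : OGraph V E) (e : E) : Prop :=
  ¬ G.connRel {f | f ≠ e} (G.fst e) (G.snd e)

def IsLoop (G : OGraph V E) (e : E) : Prop := G.fst e = G.snd e

/-- A directed edge `e` is cycle flippable w.r.t. `ε` if there are directed paths
both from its tail to its head and from its head to its tail in `G - e`. -/
def CycleFlippable (G : OGraph V E) (ε : E → Bool) (e : E) : Prop :=
  G.ReachesAvoiding ε e (G.tail ε e) (G.head ε e) ∧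
  G.ReachesAvoiding ε e (G.head ε e) (G.tail ε e)

/-- A directed cycle: a nonempty list of distinct edges, consecutively joined
head-to-tail, closing up. -/
def IsDirectedCycle (G : OGraph V E) (ε : E → Bool) (C : List E) : Prop :=
  C ≠ [] ∧ C.Nodup ∧ C.Chain' (fun a b => G.head ε a = G.tail ε b) ∧
    ∀ h : C ≠ [], G.head ε (C.getLast h) = G.tail ε (C.head h)

/-- `ε` is reduced w.r.t. the normal orientation `εN` and the edge order: for each
edge `e`, either `ε` agrees with `εN` on `e`, or no directed cycle through `e`
has all its other edges smaller than `e`. -/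
def Reduced (G : OGraph V E) [LinearOrder E] (εN ε : E → Bool) : Prop :=
  ∀ e, ε e = εN e ∨
    ¬ ∃ C : List E, G.IsDirectedCycle ε C ∧ e ∈ C ∧ ∀ f ∈ C, f ≠ e → f < e

/-- `T` is (the edge set of) a spanning tree of `G`. -/
def IsSpanningTree (G : OGraph V E) [Fintype V] (T : Finset E) : Prop :=
  (∀ u v : V, G.connRel (↑T) u v) ∧ T.card + 1 = Fintype.card V

/-- `e ∈ T` is internally active: it is the smallest edge of the fundamental cut it defines. -/
def InternallyActive (G : OGraph V E) [Fintype V] [LinearOrder E] [DecidableEq E]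
    (T : Finset E) (e : E) : Prop :=
  e ∈ T ∧ ∀ f, G.IsSpanningTree (insert f (T.erase e)) → e ≤ f

/-- `e ∉ T` is externally active: it is the smallest edge of the fundamental cycle of `T + e`. -/
def ExternallyActive (G : OGraph V E) [Fintype V] [LinearOrder E] [DecidableEq E]
    (T : Finset E) (e : E) : Prop :=
  e ∉ T ∧ ∀ f ∈ T, G.IsSpanningTree (insert e (T.erase f)) → e ≤ f

/-- `v` is a source of `(G, ε)`. -/
def IsSource (G : OGraph V E) (ε : E → Bool) (v : V) : Prop :=
  ∀ e, G.head ε e ≠ v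

end OGraph

/-- If `ε` is reduced totally cyclic and the largest edge `e` is cycle
flippable, then the restriction of `ε` to `G - e` is reduced. -/
theorem stmt10 {V E : Type} [Fintype V] [Fintype E] [LinearOrder E] (G : OGraph V E)
    (εN ε : E → Bool) (e : E) (hmax : ∀ f, f ≤ e)
    (htc : G.TotallyCyclic ε) (hred : G.Reduced εN ε) (hflip : G.CycleFlippable ε e) :
    (G.deleteEdge e).Reduced (fun f => εN f.val) (fun f => ε f.val) := by
  intro f
  rcases hred f.val with h | h
  · exact Or.inl h
  · right
    rintro ⟨C, ⟨hne, hnd, hch, hcl⟩, hmem, hsm⟩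
    apply h
    refine ⟨C.map Subtype.val, ⟨?_, ?_, ?_, ?_⟩, ?_, ?_⟩
    · exact fun hh => hne (List.map_eq_nil_iff.mp hh)
    · exact hnd.map Subtype.val_injective
    · unfold List.Chain'; rw [List.isChain_map]; exact hch
    · intro h'
      have hne' : C ≠ [] := fun hh => h' (by simp [hh])
      rw [List.getLast_map, List.head_map]
      exact hcl hne'
    · exact List.mem_map_of_mem hmem
    · intro g hg hge
      rcases List.mem_map.1 hg with ⟨g', hg', rfl⟩
      exact hsm g' hg' (fun hh => hge (by rw [hh]))
end

section
/- Fix a normal orientation and a total order on edges. Let ε₁ and ε₂ be two distinct reduced totally cyclic orientations of G such that the largest edge e is cycle flippable in neither. Then the orientations of the contraction G/e inherited from ε₁ and ε₂ are not Eulerian equivalent. -/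
/-!  Multigraphs with labelled edges: an edge `e` has endpoints `fst e`, `snd e`.
An orientation is `ε : E → Bool`, where `ε e = true` means `e` is directed
from `fst e` (tail) to `snd e` (head), and `false` means the reverse. -/

structure LGraph (V E : Type) where
  fst : E → V
  snd : E → V

namespace LGraph

variable {V E : Type}

/-- Head (target) of edge `e` under orientation `ε`. -/
def head (G : LGraph V E) (ε : E → Bool) (e : E) : V := cond (ε e) (G.snd e) (G.fst e)

/-- Tail (source) of edge `e` under orientation `ε`. -/
def tail (G : LGraph V E) (ε : E → Bool) (e : E) : V := cond (ε e) (G.fst e) (G.snd e)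

/-- Directed reachability under `ε`. -/
def Reaches (G : LGraph V E) (ε : E → Bool) (u v : V) : Prop :=
  Relation.ReflTransGen (fun a b => ∃ e, G.tail ε e = a ∧ G.head ε e = b) u v

/-- Directed reachability avoiding the edge `e₀` (i.e. in `G - e₀`). -/
def ReachesAvoiding (G : LGraph V E) (ε : E → Bool) (e₀ : E) (u v : V) : Prop :=
  Relation.ReflTransGen (fun a b => ∃ e, e ≠ e₀ ∧ G.tail ε e = a ∧ G.head ε e = b) u v

/-- `ε` has a directed cut: a set `S` of vertices with at least one edge leaving `S`
and no edge entering `S`. -/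
def HasDirCut (G : LGraph V E) (ε : E → Bool) : Prop :=
  ∃ S : Set V, (∃ e, G.tail ε e ∈ S ∧ G.head ε e ∉ S) ∧
    ∀ e, G.head ε e ∈ S → G.tail ε e ∈ S

/-- A totally cyclic orientation: one without directed cuts. -/
def TotallyCyclic (G : LGraph V E) (ε : E → Bool) : Prop := ¬ G.HasDirCut ε

/-- An acyclic orientation: no directed cycle, i.e. no edge whose head reaches its tail. -/
def Acyclic (G : LGraph V E) (ε : E → Bool) : Prop :=
  ∀ e, ¬ G.Reaches ε (G.head ε e) (G.tail ε e)

/-- The set of edges `D` induces a directed Eulerian subgraph w.r.t. `ε`: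
in-degree equals out-degree at each vertex. -/
def IsEulerianSet (G : LGraph V E) (ε : E → Bool) (D : Set E) : Prop :=
  ∀ v, Nat.card {e : E // e ∈ D ∧ G.head ε e = v} =
       Nat.card {e : E // e ∈ D ∧ G.tail ε e = v}

/-- The set of edges on which two orientations differ. -/
def diffSet (ε₁ ε₂ : E → Bool) : Set E := {e | ε₁ e ≠ ε₂ e}

/-- Eulerian equivalence of orientations. -/
def EulerianEquiv (G : LGraph V E) (ε₁ ε₂ : E → Bool) : Prop :=
  G.IsEulerianSet ε₁ (diffSet ε₁ ε₂)

/-- The edges crossing between `S` and its complement. -/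
def cutEdges (G : LGraph V E) (S : Set V) : Set E :=
  {e | (G.fst e ∈ S ∧ G.snd e ∉ S) ∨ (G.fst e ∉ S ∧ G.snd e ∈ S)}

/-- A bond: a minimal nonempty edge cut. -/
def IsBond (G : LGraph V E) (D : Set E) : Prop :=
  (∃ S, D = G.cutEdges S) ∧ D.Nonempty ∧
    ∀ D', (∃ S, D' = G.cutEdges S) → D'.Nonempty → D' ⊆ D → D' = D

/-- A directed bond w.r.t. `ε`: a bond all of whose edges go from `S` to its complement. -/
def IsDirectedBond (G : LGraph V E) (ε : E → Bool) (D : Set E) : Prop :=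
  G.IsBond D ∧ ∃ S, D = G.cutEdges S ∧ ∀ e ∈ D, G.tail ε e ∈ S

/-- A directed cut: a disjoint union of directed bonds. -/
def IsDirectedCut (G : LGraph V E) (ε : E → Bool) (D : Set E) : Prop :=
  ∃ (n : ℕ) (B : Fin n → Set E), (∀ i, G.IsDirectedBond ε (B i)) ∧
    (Pairwise fun i j => Disjoint (B i) (B j)) ∧ D = ⋃ i, B i

/-- Cut equivalence of orientations. -/
def CutEquiv (G : LGraph V E) (ε₁ ε₂ : E → Bool) : Prop :=
  G.IsDirectedCut ε₁ (diffSet ε₁ ε₂) ∨ G.IsDirectedCut ε₂ (diffSet ε₁ ε₂)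

/-- Eulerian-cut equivalence of orientations: the differing edges split into an
edge-disjoint union of a directed Eulerian subgraph and a directed cut. -/
def EulCutEquiv (G : LGraph V E) (ε₁ ε₂ : E → Bool) : Prop :=
  (∃ D₁ D₂ : Set E, Disjoint D₁ D₂ ∧ diffSet ε₁ ε₂ = D₁ ∪ D₂ ∧
      G.IsEulerianSet ε₁ D₁ ∧ G.IsDirectedCut ε₁ D₂) ∨
  (∃ D₁ D₂ : Set E, Disjoint D₁ D₂ ∧ diffSet ε₁ ε₂ = D₁ ∪ D₂ ∧
      G.IsEulerianSet ε₂ D₁ ∧ G.IsDirectedCut ε₂ D₂)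

/-- Undirected connectivity via the edges of `A` (spanning subgraph `(V, A)`). -/
def connRel (G : LGraph V E) (A : Set E) : V → V → Prop :=
  Relation.EqvGen (fun u v => ∃ e ∈ A, (G.fst e = u ∧ G.snd e = v) ∨ (G.fst e = v ∧ G.snd e = u))

/-- Number of connected components of the spanning subgraph `(V, A)`. -/
noncomputable def ncomp (G : LGraph V E) (A : Set E) : ℕ :=
  Nat.card (Quot (G.connRel A))

def Connected (G : LGraph V E) : Prop := ∀ u v : V, G.connRel Set.univ u v

/-- Rank of an edge set: `|V| - c(A)`. -/
noncomputable def rank (G : LGraph V E) [Fintype V] (A : Set E) : ℕ :=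
  Fintype.card V - G.ncomp A

/-- The Tutte polynomial (Whitney rank expansion), evaluated at `(x, y)`. -/
noncomputable def tutte (G : LGraph V E) [Fintype V] [Fintype E] (x y : ℤ) : ℤ :=
  ∑ A : Finset E, (x - 1) ^ (G.rank (Set.univ : Set E) - G.rank (A : Set E)) *
    (y - 1) ^ (A.card - G.rank (A : Set E))

/-- The Eulerian equivalence class (within totally cyclic orientations) of `ε`. -/
def eulClass (G : LGraph V E) (ε : E → Bool) : Set (E → Bool) :=
  {ε' | G.TotallyCyclic ε' ∧ G.EulerianEquiv ε ε'}

/-- The number of Eulerian equivalence classes of totally cyclic orientations. -/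
noncomputable def numEulClasses (G : LGraph V E) : ℕ :=
  Nat.card {C : Set (E → Bool) // ∃ ε, G.TotallyCyclic ε ∧ C = G.eulClass ε}

/-- The cut equivalence class (within acyclic orientations) of `ε`. -/
def cutClass (G : LGraph V E) (ε : E → Bool) : Set (E → Bool) :=
  {ε' | G.Acyclic ε' ∧ G.CutEquiv ε ε'}

/-- The number of cut equivalence classes of acyclic orientations. -/
noncomputable def numCutClasses (G : LGraph V E) : ℕ :=
  Nat.card {C : Set (E → Bool) // ∃ ε, G.Acyclic ε ∧ C = G.cutClass ε}

/-- Deletion of the edge `e`. -/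
def deleteEdge (G : LGraph V E) (e : E) : LGraph V {f : E // f ≠ e} :=
  ⟨fun f => G.fst f.val, fun f => G.snd f.val⟩

/-- Contraction of the edge `e`: identify its two endpoints and remove `e`. -/
def contractEdge (G : LGraph V E) (e : E) :
    LGraph (Quot fun a b => a = G.fst e ∧ b = G.snd e) {f : E // f ≠ e} :=
  ⟨fun f => Quot.mk _ (G.fst f.val), fun f => Quot.mk _ (G.snd f.val)⟩

/-- `e` is a bridge: its endpoints are disconnected in `G - e`. -/
def IsBridge (G : LGraph V E) (e : E) : Prop :=
  ¬ G.connRel {f | f ≠ e} (G.fst e) (G.snd e)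

def IsLoop (G : LGraph V E) (e : E) : Prop := G.fst e = G.snd e

/-- A directed edge `e` is cycle flippable w.r.t. `ε` if there are directed paths
both from its tail to its head and from its head to its tail in `G - e`. -/
def CycleFlippable (G : LGraph V E) (ε : E → Bool) (e : E) : Prop :=
  G.ReachesAvoiding ε e (G.tail ε e) (G.head ε e) ∧
  G.ReachesAvoiding ε e (G.head ε e) (G.tail ε e)

/-- A directed cycle: a nonempty list of distinct edges, consecutively joined
head-to-tail, closing up. -/
def IsDirectedCycle (G : LGraph V E) (ε : E → Bool) (C : List E) : Prop :=
  C ≠ [] ∧ C.Nodup ∧ C.Chain' (fun a b => G.head ε a = G.tail ε b) ∧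
    ∀ h : C ≠ [], G.head ε (C.getLast h) = G.tail ε (C.head h)

/-- `ε` is reduced w.r.t. the normal orientation `εN` and the edge order: for each
edge `e`, either `ε` agrees with `εN` on `e`, or no directed cycle through `e`
has all its other edges smaller than `e`. -/
def Reduced (G : LGraph V E) [LinearOrder E] (εN ε : E → Bool) : Prop :=
  ∀ e, ε e = εN e ∨
    ¬ ∃ C : List E, G.IsDirectedCycle ε C ∧ e ∈ C ∧ ∀ f ∈ C, f ≠ e → f < e

/-- `T` is (the edge set of) a spanning tree of `G`. -/
def IsSpanningTree (G : LGraph V E) [Fintype V] (T : Finset E) : Prop :=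
  (∀ u v : V, G.connRel (↑T) u v) ∧ T.card + 1 = Fintype.card V

/-- `e ∈ T` is internally active: it is the smallest edge of the fundamental cut it defines. -/
def InternallyActive (G : LGraph V E) [Fintype V] [LinearOrder E] [DecidableEq E]
    (T : Finset E) (e : E) : Prop :=
  e ∈ T ∧ ∀ f, G.IsSpanningTree (insert f (T.erase e)) → e ≤ f

/-- `e ∉ T` is externally active: it is the smallest edge of the fundamental cycle of `T + e`. -/
def ExternallyActive (G : LGraph V E) [Fintype V] [LinearOrder E] [DecidableEq E]
    (T : Finset E) (e : E) : Prop :=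
  e ∉ T ∧ ∀ f ∈ T, G.IsSpanningTree (insert e (T.erase f)) → e ≤ f

/-- `v` is a source of `(G, ε)`. -/
def IsSource (G : LGraph V E) (ε : E → Bool) (v : V) : Prop :=
  ∀ e, G.head ε e ≠ v



/-- Step relation along edges in `D`. -/
def stepRel (G : LGraph V E) (ε : E → Bool) (D : Set E) : V → V → Prop :=
  fun a b => ∃ f, f ∈ D ∧ G.tail ε f = a ∧ G.head ε f = b

lemma head_flip (G : LGraph V E) {ε₁ ε₂ : E → Bool} {f : E} (h : ε₁ f ≠ ε₂ f) :
    G.head ε₂ f = G.tail ε₁ f ∧ G.tail ε₂ f = G.head ε₁ f := by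
  have h2 : ε₂ f = !ε₁ f := by cases h1 : ε₁ f <;> cases h2 : ε₂ f <;> simp_all
  constructor <;> simp [head, tail, h2, Bool.cond_not]

lemma tc_reachesAvoiding (G : LGraph V E) {ε : E → Bool} (h : G.TotallyCyclic ε) (e : E) :
    G.ReachesAvoiding ε e (G.head ε e) (G.tail ε e) := by
  by_contra hre
  apply h
  refine ⟨{v | ¬ G.ReachesAvoiding ε e (G.head ε e) v},
    ⟨e, hre, fun h' => h' Relation.ReflTransGen.refl⟩, ?_⟩
  intro f hf htl
  rcases eq_or_ne f e with rfl | hfe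
  · exact hf Relation.ReflTransGen.refl
  · exact hf (htl.tail ⟨f, hfe, rfl, rfl⟩)

lemma rtg_reverse {α : Type*} {r s : α → α → Prop} (h : ∀ a b, r a b → s b a) {u v : α}
    (hr : Relation.ReflTransGen r u v) : Relation.ReflTransGen s v u := by
  induction hr with
  | refl => exact Relation.ReflTransGen.refl
  | tail _ hbc ih => exact Relation.ReflTransGen.head (h _ _ hbc) ih

lemma chain'_mem_imp {α : Type*} {R S : α → α → Prop} :
    ∀ {l : List α}, (∀ a ∈ l, ∀ b ∈ l, R a b → S a b) → l.Chain' R → l.Chain' S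
  | [], _, _ => List.isChain_nil
  | [_], _, _ => List.isChain_singleton _
  | a :: b :: t, H, h => by
    simp only [List.Chain', List.isChain_cons_cons] at h ⊢
    exact ⟨H a (by simp) b (by simp) h.1,
      chain'_mem_imp (fun x hx y hy => H x (List.mem_cons_of_mem _ hx)
        y (List.mem_cons_of_mem _ hy)) h.2⟩

/-- Extract a nodup edge path from reflexive-transitive reachability. -/
lemma rtg_list (G : LGraph V E) (ε : E → Bool) (D : Set E) {u v : V}
    (h : Relation.ReflTransGen (G.stepRel ε D) u v) :
    ∃ L : List E, L.Nodup ∧ (∀ f ∈ L, f ∈ D) ∧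
      L.Chain' (fun a b => G.head ε a = G.tail ε b) ∧
      ((L = [] ∧ u = v) ∨
        ∃ hL : L ≠ [], G.tail ε (L.head hL) = u ∧ G.head ε (L.getLast hL) = v) := by
  induction h with
  | refl => exact ⟨[], List.nodup_nil, by simp, List.isChain_nil, Or.inl ⟨rfl, rfl⟩⟩
  | @tail b c _ hbc ih =>
    obtain ⟨f, hfD, hft, hfh⟩ := hbc
    obtain ⟨L, hnd, hD, hch, hend⟩ := ih
    by_cases hfL : f ∈ L
    · obtain ⟨s, t, rfl⟩ := List.append_of_mem hfL
      have hsub : (s ++ [f]).Sublist (s ++ f :: t) := by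
        have h' := List.sublist_append_left (s ++ [f]) t
        rwa [List.append_assoc, List.singleton_append] at h'
      have hLne : s ++ f :: t ≠ [] := by simp
      rcases hend with ⟨h0, _⟩ | ⟨_, h1, h2⟩
      · exact absurd h0 (by simp)
      refine ⟨s ++ [f], hnd.sublist hsub, fun g hg => hD g (hsub.mem hg), ?_, ?_⟩
      · exact hch.prefix ⟨t, by simp⟩
      · refine Or.inr ⟨by simp, ?_, ?_⟩
        · have : (s ++ [f]).head (by simp) = (s ++ f :: t).head hLne := by
            cases s <;> simp
          rw [this]; exact h1
        · rw [List.getLast_append]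
          simpa using hfh
    · have hLne : L ++ [f] ≠ [] := by simp
      refine ⟨L ++ [f], ?_, ?_, ?_, Or.inr ⟨hLne, ?_, ?_⟩⟩
      · simp [List.nodup_append, hnd, hfL]
        exact fun a ha h => hfL (h ▸ ha)
      · intro g hg
        rcases List.mem_append.mp hg with hg | hg
        · exact hD g hg
        · have : g = f := by simpa using hg
          exact this ▸ hfD
      · simp only [List.Chain'] at hch ⊢
        rw [List.isChain_append]
        refine ⟨hch, List.isChain_singleton f, ?_⟩
        intro a ha y hy
        simp only [List.head?_cons, Option.mem_def, Option.some.injEq] at hy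
        subst hy
        rcases hend with ⟨rfl, _⟩ | ⟨hL, _, h2⟩
        · simp at ha
        · rw [List.getLast?_eq_getLast hL, Option.mem_def, Option.some.injEq] at ha
          subst ha
          rw [h2, hft]
      · rcases hend with ⟨rfl, rfl⟩ | ⟨hL, h1, _⟩
        · simpa using hft
        · have : (L ++ [f]).head hLne = L.head hL := by
            cases L with
            | nil => exact absurd rfl hL
            | cons a l => simp
          rw [this]; exact h1
      · rw [List.getLast_append]; simpa using hfh

open Finset in
/-- Counting: if `T` is closed under taking tails of `D`-edges with head in `T`,
then the in-degree sum over `T` is at most the out-degree sum. -/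
lemma count_le (G : LGraph V E) [Fintype V] [Fintype E] (ε : E → Bool) (D : Set E) (T : Set V)
    [DecidablePred (· ∈ D)] [DecidablePred (· ∈ T)] [DecidableEq V]
    (hT : ∀ f, f ∈ D → G.head ε f ∈ T → G.tail ε f ∈ T) :
    ∑ v ∈ univ.filter (· ∈ T), (univ.filter fun f => f ∈ D ∧ G.head ε f = v).card ≤
    ∑ v ∈ univ.filter (· ∈ T), (univ.filter fun f => f ∈ D ∧ G.tail ε f = v).card := by
  classical
  have key : ∀ (φ : E → V), ∑ v ∈ univ.filter (· ∈ T), (univ.filter fun f => f ∈ D ∧ φ f = v).card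
      = (univ.filter fun f => f ∈ D ∧ φ f ∈ T).card := by
    intro φ
    rw [Finset.card_eq_sum_card_fiberwise (f := φ) (t := univ.filter (· ∈ T))
      (fun f hf => by simp only [mem_coe, mem_filter] at hf ⊢; exact ⟨mem_univ _, hf.2.2⟩)]
    refine Finset.sum_congr rfl fun v hv => ?_
    simp only [mem_filter, mem_univ, true_and] at hv
    congr 1
    ext f
    simp only [mem_filter, mem_univ, true_and]
    constructor
    · rintro ⟨h1, h3⟩
      exact ⟨⟨h1, h3 ▸ hv⟩, h3⟩
    · tauto
  rw [key, key]
  apply Finset.card_le_card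
  intro f hf
  simp only [mem_filter, mem_univ, true_and] at hf ⊢
  exact ⟨hf.1, hT f hf.1 hf.2⟩

open Finset in
/-- If a vertex has in-excess within `D`, some vertex with out-excess reaches it. -/
lemma reach_of_excess (G : LGraph V E) [Fintype V] [Fintype E] (ε : E → Bool) (D : Set E)
    [DecidablePred (· ∈ D)] [DecidableEq V] (x : V)
    (hx : (univ.filter fun f => f ∈ D ∧ G.tail ε f = x).card <
          (univ.filter fun f => f ∈ D ∧ G.head ε f = x).card) :
    ∃ y, Relation.ReflTransGen (G.stepRel ε D) y x ∧
      (univ.filter fun f => f ∈ D ∧ G.head ε f = y).card <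
      (univ.filter fun f => f ∈ D ∧ G.tail ε f = y).card := by
  classical
  by_contra hc
  push_neg at hc
  set T : Set V := {v | Relation.ReflTransGen (G.stepRel ε D) v x} with hTdef
  have hT : ∀ f, f ∈ D → G.head ε f ∈ T → G.tail ε f ∈ T := fun f hfD hh =>
    Relation.ReflTransGen.head ⟨f, hfD, rfl, rfl⟩ hh
  have hle := count_le G ε D T hT
  have hxT : x ∈ T := Relation.ReflTransGen.refl
  have hlt : ∑ v ∈ univ.filter (· ∈ T), (univ.filter fun f => f ∈ D ∧ G.tail ε f = v).card <
      ∑ v ∈ univ.filter (· ∈ T), (univ.filter fun f => f ∈ D ∧ G.head ε f = v).card := by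
    apply Finset.sum_lt_sum
    · intro v hv
      simp only [mem_filter, mem_univ, true_and] at hv
      exact hc v hv
    · exact ⟨x, by simp [hxT], hx⟩
  omega


lemma natcard_filter {E : Type} [Fintype E] (p : E → Prop) [DecidablePred p] :
    Nat.card {f : E // p f} = (Finset.univ.filter p).card := by
  rw [Nat.card_eq_fintype_card]
  exact Fintype.card_subtype p

lemma cycle_reverse (G : LGraph V E) {ε₁ ε₂ : E → Bool} {C : List E}
    (hflip : ∀ f ∈ C, ε₁ f ≠ ε₂ f) (hC : G.IsDirectedCycle ε₁ C) :
    G.IsDirectedCycle ε₂ C.reverse := by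
  obtain ⟨hne, hnd, hch, hcl⟩ := hC
  have hsw : ∀ f ∈ C, G.head ε₂ f = G.tail ε₁ f ∧ G.tail ε₂ f = G.head ε₁ f :=
    fun f hf => G.head_flip (hflip f hf)
  refine ⟨by simpa using hne, by simpa using hnd, ?_, ?_⟩
  · show List.IsChain _ _
    rw [List.isChain_reverse]
    refine chain'_mem_imp (fun a ha b hb hab => ?_) hch
    show G.head ε₂ b = G.tail ε₂ a
    rw [(hsw b hb).1, (hsw a ha).2, hab]
  · intro h
    have hne' : C ≠ [] := hne
    rw [List.getLast_reverse, List.head_reverse]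
    rw [(hsw _ (List.head_mem hne')).1, (hsw _ (List.getLast_mem hne')).2]
    exact (hcl hne').symm

open Finset in
lemma exists_cycle (G : LGraph V E) [Fintype V] [Fintype E] (ε : E → Bool) (D : Set E)
    [DecidablePred (· ∈ D)] [DecidableEq V] [DecidableEq E]
    (hbal : ∀ v, (univ.filter fun f => f ∈ D ∧ G.head ε f = v).card =
                 (univ.filter fun f => f ∈ D ∧ G.tail ε f = v).card)
    {f₀ : E} (hf₀ : f₀ ∈ D) :
    ∃ C : List E, G.IsDirectedCycle ε C ∧ ∀ f ∈ C, f ∈ D := by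
  by_cases hloop : G.head ε f₀ = G.tail ε f₀
  · exact ⟨[f₀], ⟨by simp, by simp, List.isChain_singleton _, fun _ => by simpa using hloop⟩,
      by simpa using hf₀⟩
  · set D' : Set E := D \ {f₀} with hD'
    haveI hdec : DecidablePred (· ∈ D') := fun f =>
      decidable_of_iff (f ∈ D ∧ f ≠ f₀) (by simp [hD', Set.mem_diff])
    have herase : ∀ (ψ : E → V) (v : V), (univ.filter fun f => f ∈ D' ∧ ψ f = v) =
        (univ.filter fun f => f ∈ D ∧ ψ f = v).erase f₀ := by
      intro ψ v
      ext g
      simp only [mem_filter, mem_univ, true_and, mem_erase, hD', Set.mem_diff,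
        Set.mem_singleton_iff]
      tauto
    set x := G.tail ε f₀ with hxd
    have hx : (univ.filter fun f => f ∈ D' ∧ G.tail ε f = x).card <
              (univ.filter fun f => f ∈ D' ∧ G.head ε f = x).card := by
      rw [herase (G.tail ε) x, herase (G.head ε) x]
      rw [Finset.erase_eq_of_notMem
        (s := univ.filter fun f => f ∈ D ∧ G.head ε f = x) (by simp [hloop])]
      have hmem : f₀ ∈ (univ.filter fun f => f ∈ D ∧ G.tail ε f = x) := by simp [hf₀, hxd]
      have hpos : 0 < (univ.filter fun f => f ∈ D ∧ G.tail ε f = x).card :=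
        card_pos.mpr ⟨f₀, hmem⟩
      rw [Finset.card_erase_of_mem hmem, hbal x]
      omega
    obtain ⟨y, hyr, hy⟩ := G.reach_of_excess ε D' x hx
    have hy' : y = G.head ε f₀ := by
      by_contra hne
      have hnm : f₀ ∉ (univ.filter fun f => f ∈ D ∧ G.head ε f = y) := by
        simp only [mem_filter, mem_univ, true_and, not_and]
        exact fun _ h => hne h.symm
      rw [herase (G.head ε) y, herase (G.tail ε) y,
        Finset.erase_eq_of_notMem hnm] at hy
      have h1 := Finset.card_erase_le
        (s := univ.filter fun f => f ∈ D ∧ G.tail ε f = y) (a := f₀)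
      have h2 := hbal y
      omega
    subst hy'
    obtain ⟨L, hnd, hsub, hch, hend⟩ := G.rtg_list ε D' hyr
    rcases hend with ⟨rfl, h0⟩ | ⟨hL, h1, h2⟩
    · exact absurd h0 hloop
    · have hf₀L : f₀ ∉ L := fun hc => ((hsub f₀ hc).2) rfl
      refine ⟨f₀ :: L, ⟨by simp, ?_, ?_, ?_⟩, ?_⟩
      · simp [List.nodup_cons, hf₀L, hnd]
      · show List.IsChain _ _
        rw [List.isChain_cons]
        refine ⟨fun b hb => ?_, hch⟩
        rw [List.head?_eq_head hL, Option.mem_def, Option.some.injEq] at hb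
        subst hb
        exact h1.symm
      · intro hcons
        rw [List.getLast_cons hL, List.head_cons, ← hxd]
        exact h2
      · intro g hg
        rcases List.mem_cons.mp hg with rfl | hgL
        · exact hf₀
        · exact (hsub g hgL).1


open Classical in
/-- The vertex map underlying the contraction quotient. -/
noncomputable def contrMap (G : LGraph V E) (e : E) : V → V :=
  fun v => if v = G.snd e then G.fst e else v

lemma contrMap_fst (G : LGraph V E) (e : E) : contrMap G e (G.fst e) = G.fst e := by
  unfold contrMap
  split_ifs <;> rfl

lemma contrMap_snd (G : LGraph V E) (e : E) : contrMap G e (G.snd e) = G.fst e := by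
  unfold contrMap
  rw [if_pos rfl]

lemma quot_mk_eq_iff (G : LGraph V E) (e : E) (a b : V) :
    Quot.mk (fun a b => a = G.fst e ∧ b = G.snd e) a =
      Quot.mk (fun a b => a = G.fst e ∧ b = G.snd e) b ↔
      contrMap G e a = contrMap G e b := by
  constructor
  · intro hab
    have hl : ∀ (c d : V), (c = G.fst e ∧ d = G.snd e) →
        contrMap G e c = contrMap G e d := by
      rintro c d ⟨rfl, rfl⟩
      rw [contrMap_fst, contrMap_snd]
    exact congrArg (Quot.lift (contrMap G e) hl) hab
  · intro hab
    simp only [contrMap] at hab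
    by_cases h1 : a = G.snd e
    · by_cases h2 : b = G.snd e
      · rw [h1, h2]
      · rw [if_pos h1, if_neg h2] at hab
        rw [h1, ← hab]
        exact (Quot.sound ⟨rfl, rfl⟩).symm
    · by_cases h2 : b = G.snd e
      · rw [if_neg h1, if_pos h2] at hab
        rw [hab, h2]
        exact Quot.sound ⟨rfl, rfl⟩
      · rw [if_neg h1, if_neg h2] at hab
        rw [hab]

lemma contractEdge_head (G : LGraph V E) (e : E) (ε : E → Bool) (f : {f : E // f ≠ e}) :
    (G.contractEdge e).head (fun g => ε g.val) f =
      Quot.mk (fun a b => a = G.fst e ∧ b = G.snd e) (G.head ε f.val) := by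
  cases hb : ε f.val <;> simp [LGraph.head, LGraph.contractEdge, hb]

lemma contractEdge_tail (G : LGraph V E) (e : E) (ε : E → Bool) (f : {f : E // f ≠ e}) :
    (G.contractEdge e).tail (fun g => ε g.val) f =
      Quot.mk (fun a b => a = G.fst e ∧ b = G.snd e) (G.tail ε f.val) := by
  cases hb : ε f.val <;> simp [LGraph.tail, LGraph.contractEdge, hb]

lemma card_contract (G : LGraph V E) [Fintype E] (e : E) (D₀ : Set E) (heD : e ∉ D₀)
    [DecidablePred (· ∈ D₀)] [DecidableEq V] (ψ : E → V) (w : V) :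
    Nat.card {f : {f : E // f ≠ e} //
        f.val ∈ D₀ ∧ contrMap G e (ψ f.val) = contrMap G e w} =
      (Finset.univ.filter fun f => f ∈ D₀ ∧ contrMap G e (ψ f) = contrMap G e w).card := by
  rw [← natcard_filter]
  apply Nat.card_congr
  exact ⟨fun p => ⟨p.1.1, p.2⟩, fun q => ⟨⟨q.1, fun hc => heD (hc ▸ q.2.1)⟩, q.2⟩,
    fun p => Subtype.ext (Subtype.ext rfl), fun q => Subtype.ext rfl⟩


end LGraph

/-- Two distinct reduced totally cyclic orientations whose largest edge
is cycle flippable in neither induce non-Eulerian-equivalent orientations of `G/e`. -/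
theorem stmt11 {V E : Type} [Fintype V] [Fintype E] [LinearOrder E] (G : LGraph V E)
    (εN ε₁ ε₂ : E → Bool) (e : E) (hmax : ∀ f, f ≤ e) (hne : ε₁ ≠ ε₂)
    (htc₁ : G.TotallyCyclic ε₁) (htc₂ : G.TotallyCyclic ε₂)
    (hred₁ : G.Reduced εN ε₁) (hred₂ : G.Reduced εN ε₂)
    (hflip₁ : ¬ G.CycleFlippable ε₁ e) (hflip₂ : ¬ G.CycleFlippable ε₂ e) :
    ¬ (G.contractEdge e).EulerianEquiv (fun f => ε₁ f.val) (fun f => ε₂ f.val) := by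
  classical
  intro h
  have cycThrough : ∀ ε : E → Bool, G.TotallyCyclic ε →
      ∃ C, G.IsDirectedCycle ε C ∧ e ∈ C := by
    intro ε htc
    have hr := G.tc_reachesAvoiding htc e
    have hr' : Relation.ReflTransGen (G.stepRel ε {f | f ≠ e}) (G.head ε e) (G.tail ε e) :=
      Relation.ReflTransGen.mono (p := G.stepRel ε {f | f ≠ e}) (fun a b hab => by
        obtain ⟨f, h1, h2, h3⟩ := hab
        exact ⟨f, h1, h2, h3⟩) _ _ hr
    obtain ⟨L, hnd, hsub, hch, hend⟩ := G.rtg_list ε {f | f ≠ e} hr'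
    rcases hend with ⟨rfl, hv⟩ | ⟨hL, h1, h2⟩
    · exact ⟨[e], ⟨by simp, by simp, List.isChain_singleton _, fun _ => by simpa using hv⟩, by simp⟩
    · have heL : e ∉ L := fun hc => (hsub e hc) rfl
      refine ⟨e :: L, ⟨by simp, by simp [List.nodup_cons, heL, hnd], ?_, ?_⟩, by simp⟩
      · show List.IsChain _ _
        rw [List.isChain_cons]
        refine ⟨fun b hb => ?_, hch⟩
        rw [List.head?_eq_head hL, Option.mem_def, Option.some.injEq] at hb
        subst hb
        exact h1.symm
      · intro hc
        rw [List.getLast_cons hL, List.head_cons]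
        exact h2
  have hkey : ∀ ε : E → Bool, G.TotallyCyclic ε → G.Reduced εN ε → ε e = εN e := by
    intro ε htc hred
    rcases hred e with h' | h'
    · exact h'
    · exfalso
      obtain ⟨C, hC, heC⟩ := cycThrough ε htc
      exact h' ⟨C, hC, heC, fun f _ hfe => lt_of_le_of_ne (hmax f) hfe⟩
  have hEe : ε₁ e = ε₂ e := by rw [hkey ε₁ htc₁ hred₁, hkey ε₂ htc₂ hred₂]
  set D₀ : Set E := LGraph.diffSet ε₁ ε₂ with hD₀
  have heD : e ∉ D₀ := fun hc => hc hEe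
  have hcount : ∀ v : V,
      (Finset.univ.filter fun f =>
        f ∈ D₀ ∧ LGraph.contrMap G e (G.head ε₁ f) = LGraph.contrMap G e v).card =
      (Finset.univ.filter fun f =>
        f ∈ D₀ ∧ LGraph.contrMap G e (G.tail ε₁ f) = LGraph.contrMap G e v).card := by
    intro v
    have h0 := h (Quot.mk _ v)
    have hiffH : ∀ f : {f : E // f ≠ e},
        (f ∈ LGraph.diffSet (fun g : {f : E // f ≠ e} => ε₁ g.val) (fun g => ε₂ g.val) ∧
          (G.contractEdge e).head (fun g => ε₁ g.val) f = Quot.mk _ v) ↔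
        (f.val ∈ D₀ ∧ LGraph.contrMap G e (G.head ε₁ f.val) = LGraph.contrMap G e v) := by
      intro f
      rw [LGraph.contractEdge_head, LGraph.quot_mk_eq_iff]
      exact Iff.rfl
    have hiffT : ∀ f : {f : E // f ≠ e},
        (f ∈ LGraph.diffSet (fun g : {f : E // f ≠ e} => ε₁ g.val) (fun g => ε₂ g.val) ∧
          (G.contractEdge e).tail (fun g => ε₁ g.val) f = Quot.mk _ v) ↔
        (f.val ∈ D₀ ∧ LGraph.contrMap G e (G.tail ε₁ f.val) = LGraph.contrMap G e v) := by
      intro f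
      rw [LGraph.contractEdge_tail, LGraph.quot_mk_eq_iff]
      exact Iff.rfl
    rw [Nat.card_congr (Equiv.subtypeEquivRight hiffH),
        Nat.card_congr (Equiv.subtypeEquivRight hiffT),
        LGraph.card_contract G e D₀ heD (G.head ε₁) v,
        LGraph.card_contract G e D₀ heD (G.tail ε₁) v] at h0
    exact h0
  have fact1 : ∀ v, v ≠ G.fst e → v ≠ G.snd e →
      (Finset.univ.filter fun f => f ∈ D₀ ∧ G.head ε₁ f = v).card =
      (Finset.univ.filter fun f => f ∈ D₀ ∧ G.tail ε₁ f = v).card := by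
    intro v hvx hvy
    have hiff : ∀ w, (LGraph.contrMap G e w = LGraph.contrMap G e v) ↔ w = v := by
      intro w
      have hv : LGraph.contrMap G e v = v := by simp [LGraph.contrMap, hvy]
      rw [hv]
      constructor
      · intro hw
        by_cases hwy : w = G.snd e
        · exfalso
          apply hvx
          simp only [LGraph.contrMap, if_pos hwy] at hw
          exact hw.symm
        · simpa [LGraph.contrMap, hwy] using hw
      · rintro rfl
        exact hv
    have hc := hcount v
    simp only [hiff] at hc
    exact hc
  have hmono : ∀ (ε : E → Bool) (u v : V),
      Relation.ReflTransGen (G.stepRel ε D₀) u v → G.ReachesAvoiding ε e u v := by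
    intro ε u v hr
    refine Relation.ReflTransGen.mono ?_ _ _ hr
    rintro a b ⟨f, hfD, h1', h2'⟩
    exact ⟨f, fun hcc => heD (hcc ▸ hfD), h1', h2'⟩
  have hflipD : ∀ a b, G.stepRel ε₁ D₀ a b → G.stepRel ε₂ D₀ b a := by
    rintro a b ⟨f, hfD, h1', h2'⟩
    exact ⟨f, hfD, by rw [(G.head_flip hfD).2, h2'], by rw [(G.head_flip hfD).1, h1']⟩
  have finish_bal : (∀ v,
      (Finset.univ.filter fun f => f ∈ D₀ ∧ G.head ε₁ f = v).card =
      (Finset.univ.filter fun f => f ∈ D₀ ∧ G.tail ε₁ f = v).card) → False := by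
    intro hbal
    obtain ⟨f₀, hf₀⟩ : ∃ f, f ∈ D₀ := by
      obtain ⟨a, ha⟩ := Function.ne_iff.mp hne
      exact ⟨a, ha⟩
    obtain ⟨C, hC, hCsub⟩ := G.exists_cycle ε₁ D₀ hbal hf₀
    have hCne : C ≠ [] := hC.1
    have htne : C.toFinset.Nonempty := by rwa [List.toFinset_nonempty_iff]
    set g := C.toFinset.max' htne with hg
    have hgC : g ∈ C := List.mem_toFinset.mp (C.toFinset.max'_mem htne)
    have hgmax : ∀ f ∈ C, f ≤ g := fun f hf => C.toFinset.le_max' f (List.mem_toFinset.mpr hf)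
    have h1 : ε₁ g = εN g := by
      rcases hred₁ g with h' | h'
      · exact h'
      · exact absurd ⟨C, hC, hgC, fun f hf hfg => lt_of_le_of_ne (hgmax f hf) hfg⟩ h'
    have h2 : ε₂ g = εN g := by
      rcases hred₂ g with h' | h'
      · exact h'
      · refine absurd ⟨C.reverse, G.cycle_reverse (fun f hf => hCsub f hf) hC, ?_, ?_⟩ h'
        · exact List.mem_reverse.mpr hgC
        · intro f hf hfg
          exact lt_of_le_of_ne (hgmax f (List.mem_reverse.mp hf)) hfg
    exact hCsub g hgC (h1.trans h2.symm)
  have finish_i : Relation.ReflTransGen (G.stepRel ε₁ D₀) (G.snd e) (G.fst e) → False := by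
    intro P1
    have P2 := LGraph.rtg_reverse hflipD P1
    cases hb : ε₁ e
    · apply hflip₁
      refine ⟨?_, G.tc_reachesAvoiding htc₁ e⟩
      have ht : G.tail ε₁ e = G.snd e := by simp [LGraph.tail, hb]
      have hh : G.head ε₁ e = G.fst e := by simp [LGraph.head, hb]
      rw [ht, hh]
      exact hmono ε₁ _ _ P1
    · apply hflip₂
      have hb2 : ε₂ e = true := by rw [← hEe, hb]
      refine ⟨?_, G.tc_reachesAvoiding htc₂ e⟩
      have ht : G.tail ε₂ e = G.fst e := by simp [LGraph.tail, hb2]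
      have hh : G.head ε₂ e = G.snd e := by simp [LGraph.head, hb2]
      rw [ht, hh]
      exact hmono ε₂ _ _ P2
  have finish_ii : Relation.ReflTransGen (G.stepRel ε₁ D₀) (G.fst e) (G.snd e) → False := by
    intro Q1
    have Q2 := LGraph.rtg_reverse hflipD Q1
    cases hb : ε₁ e
    · apply hflip₂
      have hb2 : ε₂ e = false := by rw [← hEe, hb]
      refine ⟨?_, G.tc_reachesAvoiding htc₂ e⟩
      have ht : G.tail ε₂ e = G.snd e := by simp [LGraph.tail, hb2]
      have hh : G.head ε₂ e = G.fst e := by simp [LGraph.head, hb2]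
      rw [ht, hh]
      exact hmono ε₂ _ _ Q2
    · apply hflip₁
      refine ⟨?_, G.tc_reachesAvoiding htc₁ e⟩
      have ht : G.tail ε₁ e = G.fst e := by simp [LGraph.tail, hb]
      have hh : G.head ε₁ e = G.snd e := by simp [LGraph.head, hb]
      rw [ht, hh]
      exact hmono ε₁ _ _ Q1
  rcases eq_or_ne (G.fst e) (G.snd e) with hxy | hxy
  · apply finish_bal
    intro v
    have hid : ∀ w, LGraph.contrMap G e w = w := by
      intro w
      simp only [LGraph.contrMap]
      split_ifs with hw
      · rw [hw]
        exact hxy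
      · rfl
    have hc := hcount v
    simp only [hid] at hc
    exact hc
  · have fact2 :
        (Finset.univ.filter fun f => f ∈ D₀ ∧ G.head ε₁ f = G.fst e).card +
        (Finset.univ.filter fun f => f ∈ D₀ ∧ G.head ε₁ f = G.snd e).card =
        (Finset.univ.filter fun f => f ∈ D₀ ∧ G.tail ε₁ f = G.fst e).card +
        (Finset.univ.filter fun f => f ∈ D₀ ∧ G.tail ε₁ f = G.snd e).card := by
      have hc := hcount (G.fst e)
      have hiff : ∀ w, (LGraph.contrMap G e w = LGraph.contrMap G e (G.fst e)) ↔
          (w = G.fst e ∨ w = G.snd e) := by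
        intro w
        rw [LGraph.contrMap_fst]
        constructor
        · intro hw
          by_cases hwy : w = G.snd e
          · exact Or.inr hwy
          · left
            simpa [LGraph.contrMap, hwy] using hw
        · rintro (rfl | rfl)
          · exact LGraph.contrMap_fst G e
          · exact LGraph.contrMap_snd G e
      simp only [hiff] at hc
      simp only [and_or_left] at hc
      rw [Finset.filter_or, Finset.filter_or,
        Finset.card_union_of_disjoint (by
          refine Finset.disjoint_left.mpr ?_
          intro f hf1 hf2
          simp only [Finset.mem_filter] at hf1 hf2
          exact hxy (hf1.2.2.symm.trans hf2.2.2)),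
        Finset.card_union_of_disjoint (by
          refine Finset.disjoint_left.mpr ?_
          intro f hf1 hf2
          simp only [Finset.mem_filter] at hf1 hf2
          exact hxy (hf1.2.2.symm.trans hf2.2.2))] at hc
      exact hc
    rcases lt_trichotomy
        ((Finset.univ.filter fun f => f ∈ D₀ ∧ G.head ε₁ f = G.fst e).card)
        ((Finset.univ.filter fun f => f ∈ D₀ ∧ G.tail ε₁ f = G.fst e).card) with
        hlt | heq | hgt
    · obtain ⟨z, hzr, hz⟩ := G.reach_of_excess ε₁ D₀ (G.snd e) (by omega)
      have hz' : z = G.fst e := by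
        by_contra hne'
        rcases eq_or_ne z (G.snd e) with rfl | hne''
        · omega
        · have := fact1 z hne' hne''
          omega
      rw [hz'] at hzr
      exact finish_ii hzr
    · apply finish_bal
      intro v
      by_cases hvx : v = G.fst e
      · rw [hvx]
        exact heq
      · by_cases hvy : v = G.snd e
        · rw [hvy]
          omega
        · exact fact1 v hvx hvy
    · obtain ⟨z, hzr, hz⟩ := G.reach_of_excess ε₁ D₀ (G.fst e) hgt
      have hz' : z = G.snd e := by
        by_contra hne'
        rcases eq_or_ne z (G.fst e) with rfl | hne''
        · omega
        · have := fact1 z hne'' hne'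
          omega
      rw [hz'] at hzr
      exact finish_i hzr
end

section
/- If ε₁ and ε₂ are two distinct reduced totally cyclic orientations of G (with respect to a fixed normal orientation and edge order), then ε₁ and ε₂ agree on the largest edge of G. -/
namespace Stmt12Aux

variable {V E : Type}

/-- A directed walk from `u` to `v` using the listed edges. -/
inductive Walk (G : LGraph V E) (ε : E → Bool) : V → List E → V → Prop
  | nil (v : V) : Walk G ε v [] v
  | cons {u v : V} {f : E} {l : List E} (h : G.tail ε f = u)
      (hw : Walk G ε (G.head ε f) l v) : Walk G ε u (f :: l) v

lemma Walk.nil_inv {G : LGraph V E} {ε : E → Bool} {u v : V}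
    (h : Walk G ε u [] v) : u = v := by cases h; rfl

lemma Walk.cons_inv {G : LGraph V E} {ε : E → Bool} {u v : V} {f : E} {l : List E}
    (h : Walk G ε u (f :: l) v) :
    G.tail ε f = u ∧ Walk G ε (G.head ε f) l v := by cases h; exact ⟨‹_›, ‹_›⟩

lemma Walk.append {G : LGraph V E} {ε : E → Bool} {u v w : V} {l₁ l₂ : List E}
    (h₁ : Walk G ε u l₁ v) (h₂ : Walk G ε v l₂ w) : Walk G ε u (l₁ ++ l₂) w := by
  induction h₁ with
  | nil => exact h₂
  | cons h hw ih => exact Walk.cons h (ih h₂)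

lemma Walk.split {G : LGraph V E} {ε : E → Bool} {u w : V} {l₁ l₂ : List E}
    (h : Walk G ε u (l₁ ++ l₂) w) : ∃ v, Walk G ε u l₁ v ∧ Walk G ε v l₂ w := by
  induction l₁ generalizing u with
  | nil => exact ⟨u, Walk.nil u, h⟩
  | cons f t ih =>
    cases h with
    | cons hf hw =>
      obtain ⟨v, h1, h2⟩ := ih hw
      exact ⟨v, Walk.cons hf h1, h2⟩

lemma Walk.chain' {G : LGraph V E} {ε : E → Bool} {u v : V} {l : List E}
    (h : Walk G ε u l v) : l.Chain' (fun a b => G.head ε a = G.tail ε b) := by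
  induction h with
  | nil => exact List.isChain_nil
  | cons hf hw ih =>
    cases hw with
    | nil => exact List.isChain_singleton _
    | cons hf' hw' => exact List.IsChain.cons_cons hf'.symm ih

lemma Walk.last {G : LGraph V E} {ε : E → Bool} {u v : V} {l : List E}
    (h : Walk G ε u l v) : ∀ hl : l ≠ [], G.head ε (l.getLast hl) = v := by
  induction h with
  | nil => intro hl; exact absurd rfl hl
  | @cons u v f l hf hw ih =>
    intro hl
    cases l with
    | nil => cases hw; simp
    | cons g t =>
      rw [List.getLast_cons (by simp : (g :: t) ≠ [])]
      exact ih (by simp)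

lemma reach_walk {G : LGraph V E} {ε : E → Bool} {e : E} {v : V}
    (h : G.Reaches ε (G.head ε e) v) :
    ∃ l, Walk G ε (G.head ε e) l v ∧ l.Nodup ∧ e ∉ l := by
  induction h with
  | refl => exact ⟨[], Walk.nil _, List.nodup_nil, by simp⟩
  | tail hab hbc ih =>
    obtain ⟨l, hw, hnd, he⟩ := ih
    obtain ⟨f, hft, hfh⟩ := hbc
    by_cases hfe : f = e
    · subst hfe
      exact ⟨[], hfh ▸ Walk.nil _, List.nodup_nil, by simp⟩
    · by_cases hfl : f ∈ l
      · obtain ⟨l₁, l₂, rfl⟩ := List.append_of_mem hfl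
        obtain ⟨w, h1, h2⟩ := Walk.split hw
        cases h2 with
        | cons hft' hw2 =>
          refine ⟨l₁ ++ [f], ?_, ?_, ?_⟩
          · exact hfh ▸ h1.append (Walk.cons hft' (Walk.nil _))
          · exact List.Sublist.nodup
              (List.Sublist.append_left (by simp) l₁) hnd
          · intro hmem
            exact he (List.Sublist.mem hmem
              (List.Sublist.append_left (by simp) l₁))
      · refine ⟨l ++ [f], hw.append (hfh ▸ Walk.cons hft (Walk.nil _)), ?_, ?_⟩
        · simpa [List.nodup_append, hnd] using fun a (ha : a ∈ l) (h : a = f) => hfl (h ▸ ha)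
        · simp [he, Ne.symm hfe]

lemma tc_reach {G : LGraph V E} {ε : E → Bool} (htc : G.TotallyCyclic ε) (e : E) :
    G.Reaches ε (G.head ε e) (G.tail ε e) := by
  by_contra h
  apply htc
  refine ⟨{v | ¬ G.Reaches ε (G.head ε e) v}, ⟨e, h, fun h' => h' .refl⟩, ?_⟩
  intro f hf hr
  exact hf (hr.tail ⟨f, rfl, rfl⟩)

lemma tc_cycle {G : LGraph V E} {ε : E → Bool} (htc : G.TotallyCyclic ε) (e : E) :
    ∃ C, G.IsDirectedCycle ε C ∧ e ∈ C := by
  obtain ⟨l, hw, hnd, he⟩ := reach_walk (tc_reach htc e)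
  refine ⟨e :: l, ⟨by simp, by simp [hnd, he], ?_, ?_⟩, by simp⟩
  · cases l with
    | nil => exact List.isChain_singleton _
    | cons f t => exact List.IsChain.cons_cons (Walk.cons_inv hw).1.symm hw.chain'
  · intro hne
    cases l with
    | nil =>
      simp only [List.getLast_singleton, List.head_cons]
      exact hw.nil_inv
    | cons g t =>
      rw [List.getLast_cons (by simp : (g :: t) ≠ [])]
      exact hw.last (by simp)

end Stmt12Aux

/-- Two distinct reduced totally cyclic orientations agree on the
largest edge of `G`. -/
theorem stmt12 {V E : Type} [Fintype V] [Fintype E] [LinearOrder E] (G : LGraph V E)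
    (εN ε₁ ε₂ : E → Bool) (e : E) (hmax : ∀ f, f ≤ e) (hne : ε₁ ≠ ε₂)
    (htc₁ : G.TotallyCyclic ε₁) (htc₂ : G.TotallyCyclic ε₂)
    (hred₁ : G.Reduced εN ε₁) (hred₂ : G.Reduced εN ε₂) :
    ε₁ e = ε₂ e := by
  obtain ⟨C₁, hC₁, he₁⟩ := Stmt12Aux.tc_cycle htc₁ e
  obtain ⟨C₂, hC₂, he₂⟩ := Stmt12Aux.tc_cycle htc₂ e
  have h₁ := (hred₁ e).resolve_right (not_not_intro
    ⟨C₁, hC₁, he₁, fun f _ hf => lt_of_le_of_ne (hmax f) hf⟩)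
  have h₂ := (hred₂ e).resolve_right (not_not_intro
    ⟨C₂, hC₂, he₂, fun f _ hf => lt_of_le_of_ne (hmax f) hf⟩)
  rw [h₁, h₂]
end

section
/- The number of cut equivalence classes of acyclic orientations of a connected graph G equals T_G(1,0), which also equals the number of acyclic orientations of G with a unique fixed source. -/
/-!  Multigraphs with labelled edges: an edge `e` has endpoints `fst e`, `snd e`.
An orientation is `ε : E → Bool`, where `ε e = true` means `e` is directed
from `fst e` (tail) to `snd e` (head), and `false` means the reverse. -/

structure LabGraph (V E : Type) where
  fst : E → V
  snd : E → V

namespace LabGraph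

variable {V E : Type}

/-- Head (target) of edge `e` under orientation `ε`. -/
def head (G : LabGraph V E) (ε : E → Bool) (e : E) : V := cond (ε e) (G.snd e) (G.fst e)

/-- Tail (source) of edge `e` under orientation `ε`. -/
def tail (G : LabGraph V E) (ε : E → Bool) (e : E) : V := cond (ε e) (G.fst e) (G.snd e)

/-- Directed reachability under `ε`. -/
def Reaches (G : LabGraph V E) (ε : E → Bool) (u v : V) : Prop :=
  Relation.ReflTransGen (fun a b => ∃ e, G.tail ε e = a ∧ G.head ε e = b) u v

/-- Directed reachability avoiding the edge `e₀` (i.e. in `G - e₀`). -/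
def ReachesAvoiding (G : LabGraph V E) (ε : E → Bool) (e₀ : E) (u v : V) : Prop :=
  Relation.ReflTransGen (fun a b => ∃ e, e ≠ e₀ ∧ G.tail ε e = a ∧ G.head ε e = b) u v

/-- `ε` has a directed cut: a set `S` of vertices with at least one edge leaving `S`
and no edge entering `S`. -/
def HasDirCut (G : LabGraph V E) (ε : E → Bool) : Prop :=
  ∃ S : Set V, (∃ e, G.tail ε e ∈ S ∧ G.head ε e ∉ S) ∧
    ∀ e, G.head ε e ∈ S → G.tail ε e ∈ S

/-- A totally cyclic orientation: one without directed cuts. -/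
def TotallyCyclic (G : LabGraph V E) (ε : E → Bool) : Prop := ¬ G.HasDirCut ε

/-- An acyclic orientation: no directed cycle, i.e. no edge whose head reaches its tail. -/
def Acyclic (G : LabGraph V E) (ε : E → Bool) : Prop :=
  ∀ e, ¬ G.Reaches ε (G.head ε e) (G.tail ε e)

/-- The set of edges `D` induces a directed Eulerian subgraph w.r.t. `ε`:
in-degree equals out-degree at each vertex. -/
def IsEulerianSet (G : LabGraph V E) (ε : E → Bool) (D : Set E) : Prop :=
  ∀ v, Nat.card {e : E // e ∈ D ∧ G.head ε e = v} =
       Nat.card {e : E // e ∈ D ∧ G.tail ε e = v}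

/-- The set of edges on which two orientations differ. -/
def diffSet (ε₁ ε₂ : E → Bool) : Set E := {e | ε₁ e ≠ ε₂ e}

/-- Eulerian equivalence of orientations. -/
def EulerianEquiv (G : LabGraph V E) (ε₁ ε₂ : E → Bool) : Prop :=
  G.IsEulerianSet ε₁ (diffSet ε₁ ε₂)

/-- The edges crossing between `S` and its complement. -/
def cutEdges (G : LabGraph V E) (S : Set V) : Set E :=
  {e | (G.fst e ∈ S ∧ G.snd e ∉ S) ∨ (G.fst e ∉ S ∧ G.snd e ∈ S)}

/-- A bond: a minimal nonempty edge cut. -/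
def IsBond (G : LabGraph V E) (D : Set E) : Prop :=
  (∃ S, D = G.cutEdges S) ∧ D.Nonempty ∧
    ∀ D', (∃ S, D' = G.cutEdges S) → D'.Nonempty → D' ⊆ D → D' = D

/-- A directed bond w.r.t. `ε`: a bond all of whose edges go from `S` to its complement. -/
def IsDirectedBond (G : LabGraph V E) (ε : E → Bool) (D : Set E) : Prop :=
  G.IsBond D ∧ ∃ S, D = G.cutEdges S ∧ ∀ e ∈ D, G.tail ε e ∈ S

/-- A directed cut: a disjoint union of directed bonds. -/
def IsDirectedCut (G : LabGraph V E) (ε : E → Bool) (D : Set E) : Prop :=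
  ∃ (n : ℕ) (B : Fin n → Set E), (∀ i, G.IsDirectedBond ε (B i)) ∧
    (Pairwise fun i j => Disjoint (B i) (B j)) ∧ D = ⋃ i, B i

/-- Cut equivalence of orientations. -/
def CutEquiv (G : LabGraph V E) (ε₁ ε₂ : E → Bool) : Prop :=
  G.IsDirectedCut ε₁ (diffSet ε₁ ε₂) ∨ G.IsDirectedCut ε₂ (diffSet ε₁ ε₂)

/-- Eulerian-cut equivalence of orientations: the differing edges split into an
edge-disjoint union of a directed Eulerian subgraph and a directed cut. -/
def EulCutEquiv (G : LabGraph V E) (ε₁ ε₂ : E → Bool) : Prop :=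
  (∃ D₁ D₂ : Set E, Disjoint D₁ D₂ ∧ diffSet ε₁ ε₂ = D₁ ∪ D₂ ∧
      G.IsEulerianSet ε₁ D₁ ∧ G.IsDirectedCut ε₁ D₂) ∨
  (∃ D₁ D₂ : Set E, Disjoint D₁ D₂ ∧ diffSet ε₁ ε₂ = D₁ ∪ D₂ ∧
      G.IsEulerianSet ε₂ D₁ ∧ G.IsDirectedCut ε₂ D₂)

/-- Undirected connectivity via the edges of `A` (spanning subgraph `(V, A)`). -/
def connRel (G : LabGraph V E) (A : Set E) : V → V → Prop :=
  Relation.EqvGen (fun u v => ∃ e ∈ A, (G.fst e = u ∧ G.snd e = v) ∨ (G.fst e = v ∧ G.snd e = u))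

/-- Number of connected components of the spanning subgraph `(V, A)`. -/
noncomputable def ncomp (G : LabGraph V E) (A : Set E) : ℕ :=
  Nat.card (Quot (G.connRel A))

def Connected (G : LabGraph V E) : Prop := ∀ u v : V, G.connRel Set.univ u v

/-- Rank of an edge set: `|V| - c(A)`. -/
noncomputable def rank (G : LabGraph V E) [Fintype V] (A : Set E) : ℕ :=
  Fintype.card V - G.ncomp A

/-- The Tutte polynomial (Whitney rank expansion), evaluated at `(x, y)`. -/
noncomputable def tutte (G : LabGraph V E) [Fintype V] [Fintype E] (x y : ℤ) : ℤ :=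
  ∑ A : Finset E, (x - 1) ^ (G.rank (Set.univ : Set E) - G.rank (A : Set E)) *
    (y - 1) ^ (A.card - G.rank (A : Set E))

/-- The Eulerian equivalence class (within totally cyclic orientations) of `ε`. -/
def eulClass (G : LabGraph V E) (ε : E → Bool) : Set (E → Bool) :=
  {ε' | G.TotallyCyclic ε' ∧ G.EulerianEquiv ε ε'}

/-- The number of Eulerian equivalence classes of totally cyclic orientations. -/
noncomputable def numEulClasses (G : LabGraph V E) : ℕ :=
  Nat.card {C : Set (E → Bool) // ∃ ε, G.TotallyCyclic ε ∧ C = G.eulClass ε}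

/-- The cut equivalence class (within acyclic orientations) of `ε`. -/
def cutClass (G : LabGraph V E) (ε : E → Bool) : Set (E → Bool) :=
  {ε' | G.Acyclic ε' ∧ G.CutEquiv ε ε'}

/-- The number of cut equivalence classes of acyclic orientations. -/
noncomputable def numCutClasses (G : LabGraph V E) : ℕ :=
  Nat.card {C : Set (E → Bool) // ∃ ε, G.Acyclic ε ∧ C = G.cutClass ε}

/-- Deletion of the edge `e`. -/
def deleteEdge (G : LabGraph V E) (e : E) : LabGraph V {f : E // f ≠ e} :=
  ⟨fun f => G.fst f.val, fun f => G.snd f.val⟩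

/-- Contraction of the edge `e`: identify its two endpoints and remove `e`. -/
def contractEdge (G : LabGraph V E) (e : E) :
    LabGraph (Quot fun a b => a = G.fst e ∧ b = G.snd e) {f : E // f ≠ e} :=
  ⟨fun f => Quot.mk _ (G.fst f.val), fun f => Quot.mk _ (G.snd f.val)⟩

/-- `e` is a bridge: its endpoints are disconnected in `G - e`. -/
def IsBridge (G : LabGraph V E) (e : E) : Prop :=
  ¬ G.connRel {f | f ≠ e} (G.fst e) (G.snd e)

def IsLoop (G : LabGraph V E) (e : E) : Prop := G.fst e = G.snd e

/-- A directed edge `e` is cycle flippable w.r.t. `ε` if there are directed paths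
both from its tail to its head and from its head to its tail in `G - e`. -/
def CycleFlippable (G : LabGraph V E) (ε : E → Bool) (e : E) : Prop :=
  G.ReachesAvoiding ε e (G.tail ε e) (G.head ε e) ∧
  G.ReachesAvoiding ε e (G.head ε e) (G.tail ε e)

/-- A directed cycle: a nonempty list of distinct edges, consecutively joined
head-to-tail, closing up. -/
def IsDirectedCycle (G : LabGraph V E) (ε : E → Bool) (C : List E) : Prop :=
  C ≠ [] ∧ C.Nodup ∧ C.Chain' (fun a b => G.head ε a = G.tail ε b) ∧
    ∀ h : C ≠ [], G.head ε (C.getLast h) = G.tail ε (C.head h)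

/-- `ε` is reduced w.r.t. the normal orientation `εN` and the edge order: for each
edge `e`, either `ε` agrees with `εN` on `e`, or no directed cycle through `e`
has all its other edges smaller than `e`. -/
def Reduced (G : LabGraph V E) [LinearOrder E] (εN ε : E → Bool) : Prop :=
  ∀ e, ε e = εN e ∨
    ¬ ∃ C : List E, G.IsDirectedCycle ε C ∧ e ∈ C ∧ ∀ f ∈ C, f ≠ e → f < e

/-- `T` is (the edge set of) a spanning tree of `G`. -/
def IsSpanningTree (G : LabGraph V E) [Fintype V] (T : Finset E) : Prop :=
  (∀ u v : V, G.connRel (↑T) u v) ∧ T.card + 1 = Fintype.card V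

/-- `e ∈ T` is internally active: it is the smallest edge of the fundamental cut it defines. -/
def InternallyActive (G : LabGraph V E) [Fintype V] [LinearOrder E] [DecidableEq E]
    (T : Finset E) (e : E) : Prop :=
  e ∈ T ∧ ∀ f, G.IsSpanningTree (insert f (T.erase e)) → e ≤ f

/-- `e ∉ T` is externally active: it is the smallest edge of the fundamental cycle of `T + e`. -/
def ExternallyActive (G : LabGraph V E) [Fintype V] [LinearOrder E] [DecidableEq E]
    (T : Finset E) (e : E) : Prop :=
  e ∉ T ∧ ∀ f ∈ T, G.IsSpanningTree (insert e (T.erase f)) → e ≤ f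

/-- `v` is a source of `(G, ε)`. -/
def IsSource (G : LabGraph V E) (ε : E → Bool) (v : V) : Prop :=
  ∀ e, G.head ε e ≠ v

section Aux
open Relation Classical

lemma rtgSymm {α : Type} {r : α → α → Prop} (h : Symmetric r) :
    Symmetric (Relation.ReflTransGen r) := by
  intro a b hab
  induction hab with
  | refl => exact Relation.ReflTransGen.refl
  | tail _ hbc ih => exact Relation.ReflTransGen.head (h hbc) ih

lemma rtgMono {α : Type} {r p : α → α → Prop} (h : ∀ a b, r a b → p a b) {a b : α}
    (hab : Relation.ReflTransGen r a b) : Relation.ReflTransGen p a b := by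
  induction hab with
  | refl => exact Relation.ReflTransGen.refl
  | tail _ hbc ih => exact Relation.ReflTransGen.tail ih (h _ _ hbc)

lemma eqvMono {α : Type} {r p : α → α → Prop} (h : ∀ a b, r a b → p a b) {a b : α}
    (hab : Relation.EqvGen r a b) : Relation.EqvGen p a b :=
  Relation.EqvGen.mono h a b hab

/-- Quotients of relations with the same equivalence closure are equivalent. -/
noncomputable def quotEquivOfEqvGenIff {α : Type} {r s : α → α → Prop}
    (h : ∀ u v, EqvGen r u v ↔ EqvGen s u v) : Quot r ≃ Quot s where
  toFun := Quot.lift (Quot.mk s) (fun a b hab =>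
    Quot.eqvGen_sound ((h a b).1 (EqvGen.rel _ _ hab)))
  invFun := Quot.lift (Quot.mk r) (fun a b hab =>
    Quot.eqvGen_sound ((h a b).2 (EqvGen.rel _ _ hab)))
  left_inv := by intro q; induction q using Quot.ind; rfl
  right_inv := by intro q; induction q using Quot.ind; rfl

/-- Walks in a graph: a step is an edge together with a traversal direction. -/
def stepSrc (G : LabGraph V E) (s : E × Bool) : V := cond s.2 (G.fst s.1) (G.snd s.1)
def stepDst (G : LabGraph V E) (s : E × Bool) : V := cond s.2 (G.snd s.1) (G.fst s.1)

def IsWalk (G : LabGraph V E) : V → List (E × Bool) → V → Prop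
  | u, [], v => u = v
  | u, s :: W, v => G.stepSrc s = u ∧ G.IsWalk (G.stepDst s) W v

noncomputable def stepWt (G : LabGraph V E) (D : Set E) (ε : E → Bool) (s : E × Bool) : ℤ :=
  if s.1 ∈ D then (if ε s.1 = s.2 then 1 else -1) else 0

noncomputable def netCross (G : LabGraph V E) (D : Set E) (ε : E → Bool)
    (W : List (E × Bool)) : ℤ :=
  (W.map (G.stepWt D ε)).sum

variable {G : LabGraph V E}

lemma netCross_nil (D : Set E) (ε : E → Bool) : G.netCross D ε [] = 0 := rfl

lemma netCross_cons (D : Set E) (ε : E → Bool) (s : E × Bool) (W : List (E × Bool)) :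
    G.netCross D ε (s :: W) = G.stepWt D ε s + G.netCross D ε W := by
  simp [netCross]

lemma netCross_append (D : Set E) (ε : E → Bool) (W₁ W₂ : List (E × Bool)) :
    G.netCross D ε (W₁ ++ W₂) = G.netCross D ε W₁ + G.netCross D ε W₂ := by
  simp [netCross]

lemma isWalk_append {u v w : V} {W₁ W₂ : List (E × Bool)}
    (h₁ : G.IsWalk u W₁ v) (h₂ : G.IsWalk v W₂ w) : G.IsWalk u (W₁ ++ W₂) w := by
  induction W₁ generalizing u with
  | nil => cases h₁; exact h₂
  | cons s W ih => exact ⟨h₁.1, ih h₁.2⟩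

def stepRev (s : E × Bool) : E × Bool := (s.1, !s.2)

lemma stepSrc_rev (s : E × Bool) : G.stepSrc (stepRev s) = G.stepDst s := by
  cases s with | mk e b => cases b <;> rfl

lemma stepDst_rev (s : E × Bool) : G.stepDst (stepRev s) = G.stepSrc s := by
  cases s with | mk e b => cases b <;> rfl

lemma isWalk_reverse {u v : V} {W : List (E × Bool)} (h : G.IsWalk u W v) :
    G.IsWalk v (W.reverse.map stepRev) u := by
  induction W generalizing u with
  | nil => cases h; exact rfl
  | cons s W ih =>
    obtain ⟨hs, hw⟩ := h
    have := ih hw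
    simp only [List.reverse_cons, List.map_append, List.map_cons, List.map_nil]
    apply isWalk_append this
    refine ⟨stepSrc_rev s, ?_⟩
    rw [stepDst_rev, hs]
    rfl

lemma stepWt_rev (D : Set E) (ε : E → Bool) (s : E × Bool) :
    G.stepWt D ε (stepRev s) = - G.stepWt D ε s := by
  cases s with | mk e b =>
  by_cases h : e ∈ D <;> cases hb : ε e <;> cases b <;>
    simp [stepWt, stepRev, h, hb]

lemma netCross_reverse (D : Set E) (ε : E → Bool) (W : List (E × Bool)) :
    G.netCross D ε (W.reverse.map stepRev) = - G.netCross D ε W := by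
  induction W with
  | nil => rfl
  | cons s W ih =>
    simp only [List.reverse_cons, List.map_append, netCross_append, ih, List.map_cons,
      List.map_nil, netCross_cons, netCross_nil, stepWt_rev]
    ring

/-- indicator of a vertex set -/
noncomputable def ind (S : Set V) (v : V) : ℤ := if v ∈ S then 1 else 0

lemma telescope (S : Set V) : ∀ (u : V) (W : List (E × Bool)) (v : V), G.IsWalk u W v →
    (W.map (fun s => ind S (G.stepDst s) - ind S (G.stepSrc s))).sum = ind S v - ind S u := by
  intro u W
  induction W generalizing u with
  | nil => intro v h; cases h; simp
  | cons s W ih =>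
    intro v h
    obtain ⟨hs, hw⟩ := h
    simp only [List.map_cons, List.sum_cons, ih _ _ hw, hs]
    ring

/-- the two endpoints (tail, head) are (fst, snd) in some order -/
lemma tail_head_cases (ε : E → Bool) (g : E) :
    (G.tail ε g = G.fst g ∧ G.head ε g = G.snd g) ∨
    (G.tail ε g = G.snd g ∧ G.head ε g = G.fst g) := by
  cases h : ε g <;> simp [tail, head, h]

lemma mem_cutEdges_iff (ε : E → Bool) (S : Set V) (g : E) :
    g ∈ G.cutEdges S ↔ ((G.tail ε g ∈ S ∧ G.head ε g ∉ S) ∨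
      (G.tail ε g ∉ S ∧ G.head ε g ∈ S)) := by
  rcases tail_head_cases (G := G) ε g with ⟨h1, h2⟩ | ⟨h1, h2⟩ <;>
    rw [cutEdges, Set.mem_setOf_eq, ← h1, ← h2] <;> tauto

lemma cutEdges_compl (S : Set V) : G.cutEdges Sᶜ = G.cutEdges S := by
  ext g; simp only [cutEdges, Set.mem_setOf_eq, Set.mem_compl_iff, not_not]; tauto

/-- Weight of a step w.r.t. a cut all of whose edges exit `S`. -/
lemma stepWt_cut (ε : E → Bool) (S : Set V)
    (hdir : ∀ g ∈ G.cutEdges S, G.tail ε g ∈ S) (s : E × Bool) :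
    G.stepWt (G.cutEdges S) ε s = ind S (G.stepSrc s) - ind S (G.stepDst s) := by
  cases s with | mk e b =>
  by_cases h : e ∈ G.cutEdges S
  · have ht : G.tail ε e ∈ S := hdir e h
    have hh : G.head ε e ∉ S := by
      rcases (mem_cutEdges_iff (G := G) ε S e).1 h with ⟨_, h2⟩ | ⟨h1, _⟩
      · exact h2
      · exact absurd ht h1
    rcases tail_head_cases (G := G) ε e with ⟨h1, h2⟩ | ⟨h1, h2⟩ <;>
      rw [h1] at ht <;> rw [h2] at hh <;>
      cases hb : ε e <;> cases b <;>
      · rw [tail, hb] at h1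
        rw [head, hb] at h2
        simp_all [stepWt, stepSrc, stepDst, ind, h]
  · -- both endpoints on the same side
    have : (G.fst e ∈ S ↔ G.snd e ∈ S) := by
      by_contra hc
      apply h
      rw [cutEdges, Set.mem_setOf_eq]
      tauto
    cases b <;> simp only [stepWt, if_neg h, stepSrc, stepDst, ind, cond] <;>
      by_cases h1 : G.fst e ∈ S <;> by_cases h2 : G.snd e ∈ S <;> simp_all

lemma netCross_cut_closed (ε : E → Bool) (S : Set V)
    (hdir : ∀ g ∈ G.cutEdges S, G.tail ε g ∈ S)
    {u : V} {W : List (E × Bool)} (hW : G.IsWalk u W u) :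
    G.netCross (G.cutEdges S) ε W = 0 := by
  have hneg : ∀ (L : List (E × Bool)) (g : E × Bool → ℤ),
      (L.map (fun s => -(g s))).sum = -(L.map g).sum := by
    intro L g
    induction L with
    | nil => simp
    | cons a L ih => simp [ih]; ring
  have : G.netCross (G.cutEdges S) ε W
      = - (W.map (fun s => ind S (G.stepDst s) - ind S (G.stepSrc s))).sum := by
    rw [netCross, ← hneg]
    apply congrArg
    apply List.map_congr_left
    intro s _
    rw [stepWt_cut (G := G) ε S hdir s]
    ring
  rw [this, telescope (G := G) S u W u hW]
  ring

/-! ### The crossing-number invariant -/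

def Inv (G : LabGraph V E) (ε₁ ε₂ : E → Bool) : Prop :=
  ∀ (u : V) (W : List (E × Bool)), G.IsWalk u W u →
    G.netCross (diffSet ε₁ ε₂) ε₁ W = 0

lemma diffSet_comm (ε₁ ε₂ : E → Bool) : diffSet ε₁ ε₂ = diffSet ε₂ ε₁ := by
  ext e; simp [diffSet, ne_comm]

lemma stepWt_diff_symm (ε₁ ε₂ : E → Bool) (s : E × Bool) :
    G.stepWt (diffSet ε₂ ε₁) ε₂ s = - G.stepWt (diffSet ε₁ ε₂) ε₁ s := by
  cases s with | mk e b =>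
  by_cases h : ε₁ e = ε₂ e
  · have h1 : e ∉ diffSet ε₁ ε₂ := by simp [diffSet, h]
    have h2 : e ∉ diffSet ε₂ ε₁ := by simp [diffSet, h]
    simp [stepWt, h1, h2]
  · have h1 : e ∈ diffSet ε₁ ε₂ := h
    have h2 : e ∈ diffSet ε₂ ε₁ := Ne.symm h
    cases h1' : ε₁ e <;> cases h2' : ε₂ e <;> cases b <;>
      simp_all [stepWt, h1, h2]
  
lemma stepWt_diff_trans (ε₁ ε₂ ε₃ : E → Bool) (s : E × Bool) :
    G.stepWt (diffSet ε₁ ε₃) ε₁ s =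
      G.stepWt (diffSet ε₁ ε₂) ε₁ s + G.stepWt (diffSet ε₂ ε₃) ε₂ s := by
  cases s with | mk e b =>
  simp only [stepWt, diffSet, Set.mem_setOf_eq]
  cases h1 : ε₁ e <;> cases h2 : ε₂ e <;> cases h3 : ε₃ e <;> cases b <;> simp

lemma netCross_diff_symm (ε₁ ε₂ : E → Bool) (W : List (E × Bool)) :
    G.netCross (diffSet ε₂ ε₁) ε₂ W = - G.netCross (diffSet ε₁ ε₂) ε₁ W := by
  induction W with
  | nil => rfl
  | cons s W ih => rw [netCross_cons, netCross_cons, ih, stepWt_diff_symm]; ring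

lemma netCross_diff_trans (ε₁ ε₂ ε₃ : E → Bool) (W : List (E × Bool)) :
    G.netCross (diffSet ε₁ ε₃) ε₁ W =
      G.netCross (diffSet ε₁ ε₂) ε₁ W + G.netCross (diffSet ε₂ ε₃) ε₂ W := by
  induction W with
  | nil => rfl
  | cons s W ih =>
    rw [netCross_cons, netCross_cons, netCross_cons, ih, stepWt_diff_trans (G := G) ε₁ ε₂ ε₃]
    ring

lemma inv_refl (ε : E → Bool) : G.Inv ε ε := by
  have hz : ∀ s, G.stepWt (diffSet ε ε) ε s = 0 := by
    intro s
    have : s.1 ∉ diffSet ε ε := by simp [diffSet]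
    simp [stepWt, this]
  have hmain : ∀ W : List (E × Bool), G.netCross (diffSet ε ε) ε W = 0 := by
    intro W
    induction W with
    | nil => rfl
    | cons s W ih => rw [netCross_cons, hz, ih]; ring
  intro u W _
  exact hmain W

lemma Inv.symm {ε₁ ε₂ : E → Bool} (h : G.Inv ε₁ ε₂) : G.Inv ε₂ ε₁ := by
  intro u W hW
  rw [netCross_diff_symm, h u W hW]
  ring

lemma Inv.trans {ε₁ ε₂ ε₃ : E → Bool} (h12 : G.Inv ε₁ ε₂) (h23 : G.Inv ε₂ ε₃) :
    G.Inv ε₁ ε₃ := by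
  intro u W hW
  rw [netCross_diff_trans (G := G) ε₁ ε₂ ε₃, h12 u W hW, h23 u W hW]
  ring

/-! ### Directed cuts give the invariant -/

lemma netCross_sum_bonds {n : ℕ} (B : Fin n → Set E) (ε : E → Bool)
    (hdisj : Pairwise fun i j => Disjoint (B i) (B j)) (W : List (E × Bool)) :
    G.netCross (⋃ i, B i) ε W = ∑ i, G.netCross (B i) ε W := by
  induction W with
  | nil => simp [netCross_nil]
  | cons s W ih =>
    rw [netCross_cons]
    simp only [netCross_cons]
    rw [Finset.sum_add_distrib, ← ih]
    congr 1
    by_cases h : s.1 ∈ ⋃ i, B i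
    · obtain ⟨i₀, hi₀⟩ := Set.mem_iUnion.1 h
      rw [Finset.sum_eq_single i₀]
      · simp [stepWt, h, hi₀]
      · intro j _ hj
        have : s.1 ∉ B j := fun hmem => (Set.disjoint_left.1 (hdisj hj) hmem) hi₀
        simp [stepWt, this]
      · intro hj; exact absurd (Finset.mem_univ i₀) hj
    · have : ∀ i, s.1 ∉ B i := fun i hi => h (Set.mem_iUnion.2 ⟨i, hi⟩)
      simp [stepWt, h, this]

lemma inv_of_isDirectedCut {ε₁ ε₂ : E → Bool}
    (h : G.IsDirectedCut ε₁ (diffSet ε₁ ε₂)) : G.Inv ε₁ ε₂ := by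
  obtain ⟨n, B, hbond, hdisj, hD⟩ := h
  intro u W hW
  rw [hD, netCross_sum_bonds B ε₁ hdisj W]
  apply Finset.sum_eq_zero
  intro i _
  obtain ⟨_, S, hBS, hdir⟩ := hbond i
  rw [hBS]
  exact netCross_cut_closed ε₁ S (fun g hg => hdir g (hBS ▸ hg)) hW

lemma inv_of_cutEquiv {ε₁ ε₂ : E → Bool} (h : G.CutEquiv ε₁ ε₂) : G.Inv ε₁ ε₂ := by
  rcases h with h | h
  · exact inv_of_isDirectedCut h
  · rw [diffSet_comm] at h
    exact (inv_of_isDirectedCut h).symm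

/-! ### Connectivity, walks, potentials -/

lemma exists_walk (hG : G.Connected) (u v : V) : ∃ W, G.IsWalk u W v := by
  have h := hG u v
  induction h with
  | rel a b hab =>
    obtain ⟨e, _, h | h⟩ := hab
    · exact ⟨[(e, true)], h.1, h.2⟩
    · exact ⟨[(e, false)], h.2, h.1⟩
  | refl => exact ⟨[], rfl⟩
  | symm a b _ ih =>
    obtain ⟨W, hW⟩ := ih
    exact ⟨W.reverse.map stepRev, isWalk_reverse hW⟩
  | trans a b c _ _ ih1 ih2 =>
    obtain ⟨W₁, h₁⟩ := ih1
    obtain ⟨W₂, h₂⟩ := ih2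
    exact ⟨W₁ ++ W₂, isWalk_append h₁ h₂⟩

lemma exists_crossing (hG : G.Connected) {L : Set V} {a b : V} (ha : a ∈ L) (hb : b ∉ L) :
    ∃ g, g ∈ G.cutEdges L := by
  have key : ∀ u v, G.connRel Set.univ u v → ((u ∈ L ↔ v ∈ L) ∨ ∃ g, g ∈ G.cutEdges L) := by
    intro u v h
    induction h with
    | rel p q hpq =>
      obtain ⟨e, _, h | h⟩ := hpq
      · by_cases h1 : p ∈ L <;> by_cases h2 : q ∈ L
        · left; tauto
        · right; exact ⟨e, Or.inl ⟨h.1 ▸ h1, fun hc => h2 (h.2 ▸ hc)⟩⟩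
        · right; exact ⟨e, Or.inr ⟨fun hc => h1 (h.1 ▸ hc), h.2 ▸ h2⟩⟩
        · left; tauto
      · by_cases h1 : p ∈ L <;> by_cases h2 : q ∈ L
        · left; tauto
        · right; exact ⟨e, Or.inr ⟨fun hc => h2 (h.1 ▸ hc), h.2 ▸ h1⟩⟩
        · right; exact ⟨e, Or.inl ⟨h.1 ▸ h2, fun hc => h1 (h.2 ▸ hc)⟩⟩
        · left; tauto
    | refl => left; rfl
    | symm p q _ ih => rcases ih with h | h; · left; tauto
                       · right; exact h
    | trans p q r _ _ ih1 ih2 =>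
      rcases ih1 with h1 | h1
      · rcases ih2 with h2 | h2
        · left; tauto
        · right; exact h2
      · right; exact h1
  rcases key a b (hG a b) with h | h
  · exact absurd (h.1 ha) hb
  · exact h

lemma exists_potential (hG : G.Connected) (v₀ : V) {D : Set E} {ε : E → Bool}
    (hbal : ∀ (u : V) (W : List (E × Bool)), G.IsWalk u W u → G.netCross D ε W = 0) :
    ∃ f : V → ℤ, (∀ g, g ∉ D → f (G.fst g) = f (G.snd g)) ∧
      (∀ g ∈ D, f (G.head ε g) = f (G.tail ε g) + 1) := by
  classical
  choose Wv hWv using fun v => exists_walk hG v₀ v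
  set f : V → ℤ := fun v => G.netCross D ε (Wv v) with hf
  have key : ∀ (u v : V) (W : List (E × Bool)), G.IsWalk u W v →
      f u + G.netCross D ε W = f v := by
    intro u v W hW
    have hclosed : G.IsWalk v₀ (Wv u ++ W ++ ((Wv v).reverse.map stepRev)) v₀ :=
      isWalk_append (isWalk_append (hWv u) hW) (isWalk_reverse (hWv v))
    have := hbal v₀ _ hclosed
    rw [netCross_append, netCross_append, netCross_reverse] at this
    simp only [hf]
    linarith
  refine ⟨f, ?_, ?_⟩
  · intro g hg
    have hW : G.IsWalk (G.fst g) [(g, true)] (G.snd g) := ⟨rfl, rfl⟩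
    have := key _ _ _ hW
    rw [netCross_cons, netCross_nil] at this
    simp [stepWt, hg] at this
    linarith
  · intro g hg
    have hW : G.IsWalk (G.tail ε g) [(g, ε g)] (G.head ε g) := by
      refine ⟨?_, ?_⟩
      · cases h : ε g <;> simp [stepSrc, tail, h]
      · cases h : ε g <;> simp [stepDst, head, h] <;> rfl
    have := key _ _ _ hW
    rw [netCross_cons, netCross_nil] at this
    simp [stepWt, hg] at this
    linarith

/-! ### Reachability closure -/

lemma reaches_closed {ε : E → Bool} {S : Set V}
    (hS : ∀ f, G.head ε f ∈ S → G.tail ε f ∈ S)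
    {u v : V} (h : G.Reaches ε u v) (hv : v ∈ S) : u ∈ S := by
  induction h with
  | refl => exact hv
  | tail _ hstep ih =>
    obtain ⟨e, he1, he2⟩ := hstep
    exact ih (he1 ▸ hS e (he2 ▸ hv))

def AllReach (G : LabGraph V E) (ε : E → Bool) (v₀ : V) : Prop := ∀ v, G.Reaches ε v₀ v

lemma tail_flip {ε : E → Bool} {g : E} {ε' : E → Bool} (h : ε' g = !(ε g)) :
    G.tail ε' g = G.head ε g ∧ G.head ε' g = G.tail ε g := by
  cases hg : ε g <;> rw [hg] at h <;> simp [tail, head, h, hg]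

/-! ### Components machinery -/

def edgeRel (G : LabGraph V E) (X : Set V) (a b : V) : Prop :=
  a ∈ X ∧ b ∈ X ∧ ∃ g, (G.fst g = a ∧ G.snd g = b) ∨ (G.fst g = b ∧ G.snd g = a)

lemma edgeRel_symm (X : Set V) : Symmetric (G.edgeRel X) := by
  rintro a b ⟨ha, hb, g, h⟩
  exact ⟨hb, ha, g, h.symm⟩

lemma edgeRel_mono {X Y : Set V} (h : X ⊆ Y) {a b : V} (hab : G.edgeRel X a b) :
    G.edgeRel Y a b :=
  ⟨h hab.1, h hab.2.1, hab.2.2⟩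

def comp (G : LabGraph V E) (X : Set V) (u : V) : Set V :=
  {v | Relation.ReflTransGen (G.edgeRel X) u v}

lemma mem_comp_self (X : Set V) (u : V) : u ∈ G.comp X u := Relation.ReflTransGen.refl

lemma comp_subset {X : Set V} {u : V} (hu : u ∈ X) : G.comp X u ⊆ X := by
  intro v hv
  induction hv with
  | refl => exact hu
  | tail _ h _ => exact h.2.1

lemma comp_eq_of_mem {X : Set V} {u v : V} (hv : v ∈ G.comp X u) :
    G.comp X v = G.comp X u := by
  have hsym := rtgSymm (edgeRel_symm (G := G) X)
  ext w
  constructor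
  · intro hw; exact Relation.ReflTransGen.trans hv hw
  · intro hw; exact Relation.ReflTransGen.trans (hsym hv) hw

lemma comp_closure {X : Set V} {u v w : V} (hv : v ∈ G.comp X u) (hvX : v ∈ X)
    (hwX : w ∈ X) (hedge : ∃ g, (G.fst g = v ∧ G.snd g = w) ∨ (G.fst g = w ∧ G.snd g = v)) :
    w ∈ G.comp X u :=
  Relation.ReflTransGen.tail hv ⟨hvX, hwX, hedge⟩

def ConnWithin (G : LabGraph V E) (L : Set V) : Prop :=
  ∀ a ∈ L, ∀ b ∈ L, Relation.ReflTransGen (G.edgeRel L) a b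

lemma comp_connWithin {X : Set V} {u : V} (hu : u ∈ X) : G.ConnWithin (G.comp X u) := by
  have key : ∀ v, Relation.ReflTransGen (G.edgeRel X) u v →
      Relation.ReflTransGen (G.edgeRel (G.comp X u)) u v := by
    intro v hv
    induction hv with
    | refl => exact Relation.ReflTransGen.refl
    | tail hub h ih =>
      exact Relation.ReflTransGen.tail ih
        ⟨hub, Relation.ReflTransGen.tail hub h, h.2.2⟩
  intro a ha b hb
  have hsym := rtgSymm (edgeRel_symm (G := G) (G.comp X u))
  exact Relation.ReflTransGen.trans (hsym (key a ha)) (key b hb)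

lemma connWithin_side {L S'' : Set V}
    (hdisj : ∀ g, G.fst g ∈ L → G.snd g ∈ L → g ∉ G.cutEdges S'')
    {a b : V} (hab : Relation.ReflTransGen (G.edgeRel L) a b) (ha : a ∈ S'') : b ∈ S'' := by
  induction hab with
  | refl => exact ha
  | tail _ h ih =>
    obtain ⟨hp, hq, g, hg | hg⟩ := h
    · have := hdisj g (hg.1.symm ▸ hp) (hg.2.symm ▸ hq)
      by_contra hc
      exact this (Or.inl ⟨hg.1.symm ▸ ih, fun h2 => hc (hg.2 ▸ h2)⟩)
    · have := hdisj g (hg.1.symm ▸ hq) (hg.2.symm ▸ hp)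
      by_contra hc
      exact this (Or.inr ⟨fun h2 => hc (hg.1 ▸ h2), hg.2.symm ▸ ih⟩)

lemma cutEdges_elim {X : Set V} {g : E} (hg : g ∈ G.cutEdges X) :
    ∃ a b, a ∈ X ∧ b ∉ X ∧ ((G.fst g = a ∧ G.snd g = b) ∨ (G.fst g = b ∧ G.snd g = a)) := by
  rcases hg with ⟨h1, h2⟩ | ⟨h1, h2⟩
  · exact ⟨G.fst g, G.snd g, h1, h2, Or.inl ⟨rfl, rfl⟩⟩
  · exact ⟨G.snd g, G.fst g, h2, h1, Or.inr ⟨rfl, rfl⟩⟩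

lemma edge_th (ε : E → Bool) (g : E) :
    ∃ g', (G.fst g' = G.tail ε g ∧ G.snd g' = G.head ε g) ∨
      (G.fst g' = G.head ε g ∧ G.snd g' = G.tail ε g) := by
  rcases tail_head_cases (G := G) ε g with ⟨h1, h2⟩ | ⟨h1, h2⟩
  · exact ⟨g, Or.inl ⟨h1.symm, h2.symm⟩⟩
  · exact ⟨g, Or.inr ⟨h2.symm, h1.symm⟩⟩

lemma edge_ht (ε : E → Bool) (g : E) :
    ∃ g', (G.fst g' = G.head ε g ∧ G.snd g' = G.tail ε g) ∨
      (G.fst g' = G.tail ε g ∧ G.snd g' = G.head ε g) := by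
  obtain ⟨g', h⟩ := edge_th (G := G) ε g
  exact ⟨g', h.symm⟩

lemma isBond_of_connWithin {L : Set V} (hL : G.ConnWithin L) (hLc : G.ConnWithin Lᶜ)
    (hne : (G.cutEdges L).Nonempty) : G.IsBond (G.cutEdges L) := by
  classical
  refine ⟨⟨L, rfl⟩, hne, ?_⟩
  rintro D' ⟨S'', rfl⟩ hne' hsub
  have hwL : ∀ g, G.fst g ∈ L → G.snd g ∈ L → g ∉ G.cutEdges S'' := by
    intro g h1 h2 hc
    rcases hsub hc with ⟨ha, hb⟩ | ⟨ha, hb⟩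
    · exact hb h2
    · exact ha h1
  have hwLc : ∀ g, G.fst g ∈ Lᶜ → G.snd g ∈ Lᶜ → g ∉ G.cutEdges S'' := by
    intro g h1 h2 hc
    rcases hsub hc with ⟨ha, hb⟩ | ⟨ha, hb⟩
    · exact h1 ha
    · exact h2 hb
  obtain ⟨g₀, hg₀⟩ := hne'
  obtain ⟨a₀, b₀, ha₀, hb₀, hends₀⟩ := cutEdges_elim (G := G) hg₀
  have hAL : (∀ x ∈ L, x ∈ S'') ∨ (∀ x ∈ L, x ∉ S'') := by
    by_cases hx : ∃ x ∈ L, x ∈ S''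
    · obtain ⟨x, hxL, hxS⟩ := hx
      exact Or.inl fun y hy => connWithin_side hwL (hL x hxL y hy) hxS
    · push_neg at hx
      exact Or.inr hx
  have hALc : (∀ x ∈ Lᶜ, x ∈ S'') ∨ (∀ x ∈ Lᶜ, x ∉ S'') := by
    by_cases hx : ∃ x ∈ Lᶜ, x ∈ S''
    · obtain ⟨x, hxL, hxS⟩ := hx
      exact Or.inl fun y hy => connWithin_side hwLc (hLc x hxL y hy) hxS
    · push_neg at hx
      exact Or.inr hx
  have hmem : ∀ x : V, x ∈ L ∨ x ∈ Lᶜ := fun x => Classical.em (x ∈ L)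
  rcases hAL with hAL | hAL <;> rcases hALc with hALc | hALc
  · -- S'' = univ, impossible
    exfalso
    rcases hmem b₀ with h | h
    · exact hb₀ (hAL b₀ h)
    · exact hb₀ (hALc b₀ h)
  · -- S'' = L
    have : S'' = L := by
      ext x
      constructor
      · intro hx
        rcases hmem x with h | h
        · exact h
        · exact absurd hx (hALc x h)
      · intro hx; exact hAL x hx
    rw [this]
  · -- S'' = Lᶜ
    have : S'' = Lᶜ := by
      ext x
      constructor
      · intro hx
        rcases hmem x with h | h
        · exact absurd hx (hAL x h)
        · exact h
      · intro hx; exact hALc x hx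
    rw [this, cutEdges_compl]
  · -- S'' = ∅, impossible
    exfalso
    rcases hmem a₀ with h | h
    · exact hAL a₀ h ha₀
    · exact hALc a₀ h ha₀

/-! ### Decomposing a one-sided cut into directed bonds -/

def bondOf (G : LabGraph V E) (ε : E → Bool) (S : Set V) (g : E) : Set E :=
  G.cutEdges (G.comp (G.comp S (G.tail ε g))ᶜ (G.head ε g))

def bondFam (G : LabGraph V E) (ε : E → Bool) (S : Set V) : Set (Set E) :=
  {B | ∃ g ∈ G.cutEdges S, B = G.bondOf ε S g}

lemma bondFam_spec (hG : G.Connected) (ε : E → Bool) (S : Set V)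
    (hdir : ∀ g ∈ G.cutEdges S, G.tail ε g ∈ S) :
    (∀ B ∈ G.bondFam ε S, G.IsDirectedBond ε B) ∧
    (∀ B ∈ G.bondFam ε S, ∀ B' ∈ G.bondFam ε S, B ≠ B' → Disjoint B B') ∧
    (⋃₀ G.bondFam ε S = G.cutEdges S) := by
  classical
  -- basic facts for g in the cut
  have fact : ∀ g ∈ G.cutEdges S, G.tail ε g ∈ S ∧ G.head ε g ∉ S := by
    intro g hg
    refine ⟨hdir g hg, ?_⟩
    rcases (mem_cutEdges_iff (G := G) ε S g).1 hg with ⟨_, h2⟩ | ⟨h1, _⟩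
    · exact h2
    · exact absurd (hdir g hg) h1
  -- notation
  set K : E → Set V := fun g => G.comp S (G.tail ε g) with hK
  set L : E → Set V := fun g => G.comp (K g)ᶜ (G.head ε g) with hLdef
  have hKsub : ∀ g ∈ G.cutEdges S, K g ⊆ S := fun g hg => comp_subset (fact g hg).1
  have hheadKc : ∀ g ∈ G.cutEdges S, G.head ε g ∈ (K g)ᶜ :=
    fun g hg h => (fact g hg).2 (hKsub g hg h)
  have hLsub : ∀ g ∈ G.cutEdges S, L g ⊆ (K g)ᶜ := fun g hg => comp_subset (hheadKc g hg)
  -- claim 1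
  have claim1 : ∀ g ∈ G.cutEdges S, ∀ g' ∈ G.bondOf ε S g,
      G.tail ε g' ∈ K g ∧ G.head ε g' ∈ L g ∧ g' ∈ G.cutEdges S := by
    intro g hg g' hg'
    have hb : G.bondOf ε S g = G.cutEdges (L g) := rfl
    rw [hb] at hg'
    rcases (mem_cutEdges_iff (G := G) ε (L g) g').1 hg' with ⟨ht, hh⟩ | ⟨ht, hh⟩
    · -- tail in L, head not: show impossible
      exfalso
      -- head ∈ K g (else closure puts it in L)
      have hhK : G.head ε g' ∈ K g := by
        by_contra hc
        apply hh
        exact comp_closure (Relation.ReflTransGen.trans (mem_comp_self _ _) ht)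
          (hLsub g hg ht) hc (edge_th (G := G) ε g')
      -- tail ∉ S
      have htS : G.tail ε g' ∉ S := by
        intro hts
        have : G.tail ε g' ∈ K g := by
          exact comp_closure (u := G.tail ε g) (v := G.head ε g') hhK (hKsub g hg hhK) hts
            (edge_ht (G := G) ε g')
        exact (hLsub g hg ht) this
      -- then g' crosses S with head in S, contradicting hdir
      have hcross : g' ∈ G.cutEdges S :=
        (mem_cutEdges_iff (G := G) ε S g').2 (Or.inr ⟨htS, hKsub g hg hhK⟩)
      exact htS (hdir g' hcross)
    · -- head in L, tail not: the good case
      have htK : G.tail ε g' ∈ K g := by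
        by_contra hc
        apply ht
        exact comp_closure (Relation.ReflTransGen.trans (mem_comp_self _ _) hh)
          (hLsub g hg hh) hc (edge_ht (G := G) ε g')
      have hhS : G.head ε g' ∉ S := by
        intro hhs
        have : G.head ε g' ∈ K g := by
          exact comp_closure (u := G.tail ε g) (v := G.tail ε g') htK (hKsub g hg htK) hhs
            (edge_th (G := G) ε g')
        exact (hLsub g hg hh) this
      exact ⟨htK, hh,
        (mem_cutEdges_iff (G := G) ε S g').2 (Or.inl ⟨hKsub g hg htK, hhS⟩)⟩
  -- claim 2 : g ∈ bondOf g
  have claim2 : ∀ g ∈ G.cutEdges S, g ∈ G.bondOf ε S g := by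
    intro g hg
    have : G.tail ε g ∉ L g := fun h => (hLsub g hg h) (mem_comp_self _ _)
    exact (mem_cutEdges_iff (G := G) ε (L g) g).2 (Or.inr ⟨this, mem_comp_self _ _⟩)
  -- bond property
  have claim4 : ∀ g ∈ G.cutEdges S, G.IsDirectedBond ε (G.bondOf ε S g) := by
    intro g hg
    have hLconn : G.ConnWithin (L g) := comp_connWithin (hheadKc g hg)
    have hKconn : G.ConnWithin (K g) := comp_connWithin (fact g hg).1
    have hKLc : K g ⊆ (L g)ᶜ := fun x hx hxL => (hLsub g hg hxL) hx
    have hLcconn : G.ConnWithin (L g)ᶜ := by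
      have main : ∀ a ∈ (L g)ᶜ, Relation.ReflTransGen (G.edgeRel (L g)ᶜ) a (G.tail ε g) := by
        intro a ha
        by_cases haK : a ∈ K g
        · exact rtgMono (fun x y h => edgeRel_mono hKLc h)
            (hKconn a haK _ (mem_comp_self _ _))
        · -- a ∈ Kᶜ \ L
          have haKc : a ∈ (K g)ᶜ := haK
          set M := G.comp (K g)ᶜ a with hM
          have hML : ∀ x ∈ M, x ∉ L g := by
            intro x hx hxL
            have h1 : M = G.comp (K g)ᶜ x := (comp_eq_of_mem hx).symm
            have h2 : G.comp (K g)ᶜ x = L g := comp_eq_of_mem hxL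
            exact ha (by rw [← h2, ← h1]; exact mem_comp_self _ _)
          have hMsub : M ⊆ (K g)ᶜ := comp_subset haKc
          have hMLc : M ⊆ (L g)ᶜ := fun x hx => hML x hx
          have htailM : G.tail ε g ∉ M := fun h => (hMsub h) (mem_comp_self _ _)
          obtain ⟨g₂, hg₂⟩ := exists_crossing hG (mem_comp_self (G := G) (K g)ᶜ a) htailM
          obtain ⟨c, d, hc, hd, hends⟩ := cutEdges_elim (G := G) hg₂
          have hdK : d ∈ K g := by
            by_contra hdc
            exact hd (comp_closure hc (hMsub hc) hdc ⟨g₂, hends⟩)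
          have step1 : Relation.ReflTransGen (G.edgeRel (L g)ᶜ) a c :=
            rtgMono (fun x y h => edgeRel_mono hMLc h)
              ((comp_connWithin haKc) a (mem_comp_self _ _) c hc)
          have step2 : Relation.ReflTransGen (G.edgeRel (L g)ᶜ) c d :=
            Relation.ReflTransGen.single ⟨hMLc hc, hKLc hdK, g₂, hends⟩
          have step3 : Relation.ReflTransGen (G.edgeRel (L g)ᶜ) d (G.tail ε g) :=
            rtgMono (fun x y h => edgeRel_mono hKLc h)
              (hKconn d hdK _ (mem_comp_self _ _))
          exact Relation.ReflTransGen.trans (Relation.ReflTransGen.trans step1 step2) step3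
      intro a ha b hb
      have hsym := rtgSymm (edgeRel_symm (G := G) (L g)ᶜ)
      exact Relation.ReflTransGen.trans (main a ha) (hsym (main b hb))
    have hbond : G.IsBond (G.bondOf ε S g) :=
      isBond_of_connWithin hLconn hLcconn ⟨g, claim2 g hg⟩
    refine ⟨hbond, (L g)ᶜ, (cutEdges_compl (G := G) (L g)).symm, ?_⟩
    intro g' hg'
    exact fun h => (hLsub g hg h) ((claim1 g hg g' hg').1)
  -- claim 6 : bondOf is constant on its members
  have claim6 : ∀ g ∈ G.cutEdges S, ∀ g' ∈ G.bondOf ε S g,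
      G.bondOf ε S g' = G.bondOf ε S g := by
    intro g hg g' hg'
    obtain ⟨h1, h2, _⟩ := claim1 g hg g' hg'
    have hKeq : K g' = K g := comp_eq_of_mem h1
    have hLeq : L g' = L g := by
      rw [hLdef]
      simp only
      rw [hKeq]
      exact comp_eq_of_mem h2
    show G.cutEdges (L g') = G.cutEdges (L g)
    rw [hLeq]
  refine ⟨?_, ?_, ?_⟩
  · rintro B ⟨g, hg, rfl⟩
    exact claim4 g hg
  · rintro B ⟨g₁, hg₁, rfl⟩ B' ⟨g₂, hg₂, rfl⟩ hne
    rw [Set.disjoint_left]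
    intro x hx hx'
    apply hne
    rw [← claim6 g₁ hg₁ x hx, ← claim6 g₂ hg₂ x hx']
  · ext x
    constructor
    · rintro ⟨B, ⟨g, hg, rfl⟩, hx⟩
      exact (claim1 g hg x hx).2.2
    · intro hx
      exact ⟨G.bondOf ε S x, ⟨x, hx, rfl⟩, claim2 x hx⟩

/-! ### The invariant gives a directed cut -/

lemma isDirectedCut_of_inv [Fintype E] (hG : G.Connected) (v₀ : V) {ε₁ ε₂ : E → Bool}
    (h : G.Inv ε₁ ε₂) : G.IsDirectedCut ε₁ (diffSet ε₁ ε₂) := by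
  classical
  set D := diffSet ε₁ ε₂ with hD
  obtain ⟨f, hD0, hD1⟩ := exists_potential hG v₀ (D := D) (ε := ε₁) (fun u W hW => h u W hW)
  set Sk : ℤ → Set V := fun k => {v | f v < k} with hSk
  have hcutk : ∀ (k : ℤ) (g : E), g ∈ G.cutEdges (Sk k) ↔ (g ∈ D ∧ f (G.tail ε₁ g) = k - 1) := by
    intro k g
    constructor
    · intro hg
      obtain ⟨a, b, ha, hb, hends⟩ := cutEdges_elim (G := G) hg
      have ha' : f a < k := ha
      have hb' : ¬ f b < k := hb
      by_cases hgD : g ∈ D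
      · refine ⟨hgD, ?_⟩
        have hup := hD1 g hgD
        rcases tail_head_cases (G := G) ε₁ g with ⟨h1, h2⟩ | ⟨h1, h2⟩ <;>
          rw [h1, h2] at hup <;> rw [h1] <;>
          rcases hends with ⟨e1, e2⟩ | ⟨e1, e2⟩ <;>
          simp only [e1, e2] at hup ⊢ <;> omega
      · exfalso
        have h0 := hD0 g hgD
        rcases hends with ⟨e1, e2⟩ | ⟨e1, e2⟩ <;> simp only [e1, e2] at h0 <;> omega
    · rintro ⟨hgD, hlev⟩
      have hup := hD1 g hgD
      apply (mem_cutEdges_iff (G := G) ε₁ (Sk k) g).2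
      left
      constructor
      · show f (G.tail ε₁ g) < k
        omega
      · show ¬ (f (G.head ε₁ g) < k)
        omega
  have hdirk : ∀ k : ℤ, ∀ g ∈ G.cutEdges (Sk k), G.tail ε₁ g ∈ Sk k := by
    intro k g hg
    have := (hcutk k g).1 hg
    show f (G.tail ε₁ g) < k
    omega
  set 𝔅 : Set (Set E) := {B | ∃ k : ℤ, B ∈ G.bondFam ε₁ (Sk k)} with h𝔅
  have hspec : ∀ k : ℤ, (∀ B ∈ G.bondFam ε₁ (Sk k), G.IsDirectedBond ε₁ B) ∧
      (∀ B ∈ G.bondFam ε₁ (Sk k), ∀ B' ∈ G.bondFam ε₁ (Sk k), B ≠ B' → Disjoint B B') ∧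
      (⋃₀ G.bondFam ε₁ (Sk k) = G.cutEdges (Sk k)) :=
    fun k => bondFam_spec hG ε₁ (Sk k) (hdirk k)
  have hsubcut : ∀ (k : ℤ), ∀ B ∈ G.bondFam ε₁ (Sk k), B ⊆ G.cutEdges (Sk k) := by
    intro k B hB x hx
    rw [← (hspec k).2.2]
    exact ⟨B, hB, hx⟩
  have hbonds : ∀ B ∈ 𝔅, G.IsDirectedBond ε₁ B := by
    rintro B ⟨k, hB⟩
    exact (hspec k).1 B hB
  have hdisj : ∀ B ∈ 𝔅, ∀ B' ∈ 𝔅, B ≠ B' → Disjoint B B' := by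
    rintro B ⟨k, hB⟩ B' ⟨k', hB'⟩ hne
    by_cases hkk : k = k'
    · exact (hspec k).2.1 B hB B' (hkk ▸ hB') hne
    · rw [Set.disjoint_left]
      intro x hx hx'
      have h1 := (hcutk k x).1 (hsubcut k B hB hx)
      have h2 := (hcutk k' x).1 (hsubcut k' B' hB' hx')
      omega
  have hunion : ⋃₀ 𝔅 = D := by
    ext x
    constructor
    · rintro ⟨B, ⟨k, hB⟩, hx⟩
      exact ((hcutk k x).1 (hsubcut k B hB hx)).1
    · intro hx
      have : x ∈ G.cutEdges (Sk (f (G.tail ε₁ x) + 1)) :=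
        (hcutk _ x).2 ⟨hx, by ring⟩
      rw [← (hspec (f (G.tail ε₁ x) + 1)).2.2] at this
      obtain ⟨B, hB, hxB⟩ := this
      exact ⟨B, ⟨_, hB⟩, hxB⟩
  -- now produce the Fin-indexed family
  have hfin : 𝔅.Finite := Set.toFinite 𝔅
  set F := hfin.toFinset with hF
  refine ⟨F.card, fun i => (F.equivFin.symm i : Set E), ?_, ?_, ?_⟩
  · intro i
    apply hbonds
    rw [← Set.Finite.mem_toFinset hfin]
    exact (F.equivFin.symm i).2
  · intro i j hij
    have hne : ((F.equivFin.symm i : Set E)) ≠ ((F.equivFin.symm j : Set E)) := by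
      intro hc
      apply hij
      have : F.equivFin.symm i = F.equivFin.symm j := Subtype.ext hc
      exact F.equivFin.symm.injective.eq_iff.1 this ▸ rfl
    apply hdisj
    · rw [← Set.Finite.mem_toFinset hfin]; exact (F.equivFin.symm i).2
    · rw [← Set.Finite.mem_toFinset hfin]; exact (F.equivFin.symm j).2
    · exact hne
  · rw [← hunion]
    ext x
    simp only [Set.mem_iUnion, Set.mem_sUnion]
    constructor
    · rintro ⟨B, hB, hx⟩
      refine ⟨F.equivFin ⟨B, (Set.Finite.mem_toFinset hfin).2 hB⟩, ?_⟩
      simp only [Equiv.symm_apply_apply]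
      exact hx
    · rintro ⟨i, hx⟩
      exact ⟨(F.equivFin.symm i : Set E),
        (Set.Finite.mem_toFinset hfin).1 (F.equivFin.symm i).2, hx⟩

lemma cutEquiv_iff_inv [Fintype E] (hG : G.Connected) (v₀ : V) (ε₁ ε₂ : E → Bool) :
    G.CutEquiv ε₁ ε₂ ↔ G.Inv ε₁ ε₂ := by
  constructor
  · exact inv_of_cutEquiv
  · intro h
    exact Or.inl (isDirectedCut_of_inv hG v₀ h)

/-! ### Uniqueness of the all-reachable representative -/

lemma tail_congr {ε η : E → Bool} {g : E} (h : η g = ε g) :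
    G.tail η g = G.tail ε g ∧ G.head η g = G.head ε g := by
  unfold tail head
  rw [h]
  exact ⟨rfl, rfl⟩

lemma not_crossing_iff {S : Set V} {g : E} :
    g ∉ G.cutEdges S ↔ (G.fst g ∈ S ↔ G.snd g ∈ S) := by
  simp only [cutEdges, Set.mem_setOf_eq]
  tauto

lemma not_crossing_th {ε : E → Bool} {S : Set V} {g : E} (h : g ∉ G.cutEdges S) :
    (G.tail ε g ∈ S ↔ G.head ε g ∈ S) := by
  rw [not_crossing_iff] at h
  rcases tail_head_cases (G := G) ε g with ⟨h1, h2⟩ | ⟨h1, h2⟩ <;> rw [h1, h2] <;> tauto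

lemma allreach_unique [Fintype V] (hG : G.Connected) {v₀ : V} {ε₁ ε₂ : E → Bool}
    (h1 : G.AllReach ε₁ v₀) (h2 : G.AllReach ε₂ v₀) (hinv : G.Inv ε₁ ε₂) : ε₁ = ε₂ := by
  classical
  by_contra hne
  have hD : ∃ g₀, g₀ ∈ diffSet ε₁ ε₂ := by
    by_contra hc
    push_neg at hc
    apply hne
    funext g
    have := hc g
    simp only [diffSet, Set.mem_setOf_eq, not_not] at this
    exact this
  obtain ⟨g₀, hg₀⟩ := hD
  obtain ⟨f, hD0, hD1⟩ := exists_potential hG v₀ (D := diffSet ε₁ ε₂) (ε := ε₁)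
    (fun u W hW => hinv u W hW)
  set M : ℤ := (Finset.univ.image f).max' ⟨f v₀, Finset.mem_image_of_mem f (Finset.mem_univ _)⟩
    with hM
  have hle : ∀ v, f v ≤ M :=
    fun v => Finset.le_max' _ _ (Finset.mem_image_of_mem f (Finset.mem_univ _))
  obtain ⟨vmax, _, hvmax⟩ := Finset.mem_image.1 ((Finset.univ.image f).max'_mem
    ⟨f v₀, Finset.mem_image_of_mem f (Finset.mem_univ _)⟩)
  set S : Set V := {v | f v < M} with hS
  have hcross : ∀ g ∈ G.cutEdges S, g ∈ diffSet ε₁ ε₂ ∧ G.tail ε₁ g ∈ S ∧ G.head ε₁ g ∉ S := by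
    intro g hg
    obtain ⟨a, b, ha, hb, hends⟩ := cutEdges_elim (G := G) hg
    have ha' : f a < M := ha
    have hb' : ¬ f b < M := hb
    by_cases hgD : g ∈ diffSet ε₁ ε₂
    · refine ⟨hgD, ?_, ?_⟩
      · show f (G.tail ε₁ g) < M
        have hup := hD1 g hgD
        have hhle := hle (G.head ε₁ g)
        rcases tail_head_cases (G := G) ε₁ g with ⟨ht, hh⟩ | ⟨ht, hh⟩ <;>
          rcases hends with ⟨e1, e2⟩ | ⟨e1, e2⟩ <;>
          rw [ht, hh] at hup <;> rw [hh] at hhle <;> rw [ht] <;>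
          simp only [e1, e2] at hup hhle ⊢ <;> omega
      · show ¬ f (G.head ε₁ g) < M
        have hup := hD1 g hgD
        have htle := hle (G.tail ε₁ g)
        rcases tail_head_cases (G := G) ε₁ g with ⟨ht, hh⟩ | ⟨ht, hh⟩ <;>
          rcases hends with ⟨e1, e2⟩ | ⟨e1, e2⟩ <;>
          rw [ht, hh] at hup <;> rw [ht] at htle <;> rw [hh] <;>
          simp only [e1, e2] at hup htle ⊢ <;> omega
    · exfalso
      have h0 := hD0 g hgD
      rcases hends with ⟨e1, e2⟩ | ⟨e1, e2⟩ <;> simp only [e1, e2] at h0 <;> omega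
  have htail₀S : G.tail ε₁ g₀ ∈ S := by
    show f (G.tail ε₁ g₀) < M
    have hup := hD1 g₀ hg₀
    have := hle (G.head ε₁ g₀)
    omega
  have hvmaxS : vmax ∉ S := by
    show ¬ f vmax < M
    omega
  by_cases hv₀ : v₀ ∈ S
  · -- with ε₂ nothing leaves S, but vmax ∉ S is reachable
    have hcl : ∀ e, G.head ε₂ e ∈ Sᶜ → G.tail ε₂ e ∈ Sᶜ := by
      intro e hh ht
      have ht' : G.tail ε₂ e ∈ S := by simpa using ht
      have hh' : G.head ε₂ e ∉ S := hh
      have hcr : e ∈ G.cutEdges S :=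
        (mem_cutEdges_iff (G := G) ε₂ S e).2 (Or.inl ⟨ht', hh'⟩)
      obtain ⟨heD, ht1, hh1⟩ := hcross e hcr
      -- e ∈ diffSet: ε₂ e = !ε₁ e, so tail ε₂ = head ε₁ ∉ S
      have hflip : ε₂ e = !(ε₁ e) := by
        have : ε₁ e ≠ ε₂ e := heD
        cases h1 : ε₁ e <;> cases h2 : ε₂ e <;> simp_all
      have := (tail_flip (G := G) (ε := ε₁) (ε' := ε₂) hflip).1
      rw [this] at ht'
      exact hh1 ht'
    exact (reaches_closed hcl (h2 vmax) hvmaxS) hv₀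
  · -- with ε₁ nothing enters S, but tail g₀ ∈ S is reachable
    have hcl : ∀ e, G.head ε₁ e ∈ S → G.tail ε₁ e ∈ S := by
      intro e hh
      by_contra ht
      have hcr : e ∈ G.cutEdges S :=
        (mem_cutEdges_iff (G := G) ε₁ S e).2 (Or.inr ⟨ht, hh⟩)
      obtain ⟨_, ht1, _⟩ := hcross e hcr
      exact ht ht1
    exact hv₀ (reaches_closed hcl (h1 (G.tail ε₁ g₀)) htail₀S)

/-! ### Existence of an all-reachable representative -/

lemma exists_allReach [Fintype V] (hG : G.Connected) (v₀ : V) {ε : E → Bool}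
    (hac : G.Acyclic ε) : ∃ η, G.Acyclic η ∧ G.AllReach η v₀ ∧ G.Inv ε η := by
  classical
  suffices h : ∀ k : ℕ, ∀ ε : E → Bool, G.Acyclic ε →
      (Finset.univ.filter (fun v => ¬ G.Reaches ε v₀ v)).card ≤ k →
      ∃ η, G.Acyclic η ∧ G.AllReach η v₀ ∧ G.Inv ε η by
    exact h _ ε hac le_rfl
  intro k
  induction k with
  | zero =>
    intro ε hac hcard
    refine ⟨ε, hac, ?_, inv_refl ε⟩
    intro v
    by_contra hc
    have : v ∈ Finset.univ.filter (fun v => ¬ G.Reaches ε v₀ v) :=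
      Finset.mem_filter.2 ⟨Finset.mem_univ _, hc⟩
    have := Finset.card_pos.2 ⟨v, this⟩
    omega
  | succ k ih =>
    intro ε hac hcard
    by_cases hAR : G.AllReach ε v₀
    · exact ⟨ε, hac, hAR, inv_refl ε⟩
    · obtain ⟨u, hu⟩ : ∃ u, ¬ G.Reaches ε v₀ u := by
        by_contra hc; push_neg at hc; exact hAR hc
      set S : Set V := {v | G.Reaches ε v₀ v} with hSdef
      have hv₀S : v₀ ∈ S := Relation.ReflTransGen.refl
      have fS : ∀ g, G.tail ε g ∈ S → G.head ε g ∈ S := by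
        intro g hg
        exact Relation.ReflTransGen.tail hg ⟨g, rfl, rfl⟩
      have fcross : ∀ g ∈ G.cutEdges S, G.tail ε g ∉ S ∧ G.head ε g ∈ S := by
        intro g hg
        rcases (mem_cutEdges_iff (G := G) ε S g).1 hg with ⟨ht, hh⟩ | ⟨ht, hh⟩
        · exact absurd (fS g ht) hh
        · exact ⟨ht, hh⟩
      set η₁ : E → Bool := fun g => if g ∈ G.cutEdges S then !(ε g) else ε g with hη₁
      have hdiff : diffSet ε η₁ = G.cutEdges S := by
        ext g
        by_cases hg : g ∈ G.cutEdges S <;>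
          simp [diffSet, hη₁, hg]
      have hflip : ∀ g ∈ G.cutEdges S, G.tail η₁ g = G.head ε g ∧ G.head η₁ g = G.tail ε g := by
        intro g hg
        exact tail_flip (G := G) (by simp [hη₁, hg])
      have hsame : ∀ g, g ∉ G.cutEdges S → G.tail η₁ g = G.tail ε g ∧ G.head η₁ g = G.head ε g := by
        intro g hg
        exact tail_congr (G := G) (by simp [hη₁, hg])
      -- steps of η₁ ending in S
      have hstepS : ∀ g, G.head η₁ g ∈ S →
          G.tail η₁ g ∈ S ∧ G.tail ε g = G.tail η₁ g ∧ G.head ε g = G.head η₁ g := by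
        intro g hh
        by_cases hg : g ∈ G.cutEdges S
        · exact absurd hh (by rw [(hflip g hg).2]; exact (fcross g hg).1)
        · obtain ⟨ht', hh'⟩ := hsame g hg
          have hside := not_crossing_th (G := G) (ε := η₁) hg
          exact ⟨hside.2 hh, ht'.symm, hh'.symm⟩
      have hstepOut : ∀ g, G.tail η₁ g ∉ S →
          G.head η₁ g ∉ S ∧ G.tail ε g = G.tail η₁ g ∧ G.head ε g = G.head η₁ g := by
        intro g ht
        by_cases hg : g ∈ G.cutEdges S
        · exact absurd ((hflip g hg).1 ▸ (fcross g hg).2) ht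
        · obtain ⟨ht', hh'⟩ := hsame g hg
          have hside := not_crossing_th (G := G) (ε := η₁) hg
          exact ⟨fun hh => ht (hside.2 hh), ht'.symm, hh'.symm⟩
      have R1 : ∀ u' v, G.Reaches η₁ u' v → v ∈ S → G.Reaches ε u' v ∧ u' ∈ S := by
        intro u' v h
        induction h with
        | refl => exact fun hv => ⟨Relation.ReflTransGen.refl, hv⟩
        | tail hpre hstep ih2 =>
          intro hv
          obtain ⟨g, hg1, hg2⟩ := hstep
          obtain ⟨htS, he1, he2⟩ := hstepS g (hg2 ▸ hv)
          obtain ⟨hr, hu⟩ := ih2 (hg1 ▸ htS)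
          exact ⟨Relation.ReflTransGen.tail hr ⟨g, by rw [he1, hg1], by rw [he2, hg2]⟩, hu⟩
      have R2 : ∀ u' v, G.Reaches η₁ u' v → u' ∉ S → G.Reaches ε u' v ∧ v ∉ S := by
        intro u' v h hu'
        induction h with
        | refl => exact ⟨Relation.ReflTransGen.refl, hu'⟩
        | tail hpre hstep ih2 =>
          obtain ⟨hr, hb⟩ := ih2
          obtain ⟨g, hg1, hg2⟩ := hstep
          obtain ⟨hhS, he1, he2⟩ := hstepOut g (hg1 ▸ hb)
          exact ⟨Relation.ReflTransGen.tail hr ⟨g, by rw [he1, hg1], by rw [he2, hg2]⟩,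
            hg2 ▸ hhS⟩
      have hac₁ : G.Acyclic η₁ := by
        intro g hcyc
        by_cases hg : g ∈ G.cutEdges S
        · obtain ⟨hf1, hf2⟩ := hflip g hg
          have := (R1 _ _ hcyc (hf1 ▸ (fcross g hg).2)).2
          rw [hf2] at this
          exact (fcross g hg).1 this
        · obtain ⟨ht', hh'⟩ := hsame g hg
          by_cases htS : G.tail η₁ g ∈ S
          · have := (R1 _ _ hcyc htS).1
            rw [ht', hh'] at this
            exact hac g this
          · have hside := not_crossing_th (G := G) (ε := η₁) hg
            have hhS : G.head η₁ g ∉ S := fun hh => htS (hside.2 hh)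
            have := (R2 _ _ hcyc hhS).1
            rw [ht', hh'] at this
            exact hac g this
      have hkeep : ∀ w ∈ S, G.Reaches η₁ v₀ w := by
        intro w hw
        have hw' : G.Reaches ε v₀ w := hw
        clear hw
        induction hw' with
        | refl => exact Relation.ReflTransGen.refl
        | tail hpre hstep ih2 =>
          obtain ⟨g, hg1, hg2⟩ := hstep
          have hbS : G.tail ε g ∈ S := hg1 ▸ hpre
          have hcS : G.head ε g ∈ S := fS g hbS
          have hg : g ∉ G.cutEdges S := by
            intro hc
            exact (fcross g hc).1 hbS
          obtain ⟨ht', hh'⟩ := hsame g hg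
          exact Relation.ReflTransGen.tail ih2 ⟨g, by rw [ht', hg1], by rw [hh', hg2]⟩
      -- strict decrease of the unreachable set
      obtain ⟨gstar, hgstar⟩ := exists_crossing hG hv₀S hu
      have hnew : G.Reaches η₁ v₀ (G.tail ε gstar) := by
        have h1 : G.Reaches η₁ v₀ (G.tail η₁ gstar) := by
          rw [(hflip gstar hgstar).1]
          exact hkeep _ (fcross gstar hgstar).2
        exact Relation.ReflTransGen.tail h1 ⟨gstar, rfl, (hflip gstar hgstar).2⟩
      have hsubset : Finset.univ.filter (fun v => ¬ G.Reaches η₁ v₀ v) ⊂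
          Finset.univ.filter (fun v => ¬ G.Reaches ε v₀ v) := by
        constructor
        · intro v hv
          rw [Finset.mem_filter] at hv ⊢
          refine ⟨Finset.mem_univ _, fun hc => hv.2 (hkeep v hc)⟩
        · intro hsub
          have h1 : G.tail ε gstar ∈ Finset.univ.filter (fun v => ¬ G.Reaches ε v₀ v) :=
            Finset.mem_filter.2 ⟨Finset.mem_univ _, (fcross gstar hgstar).1⟩
          have h2 := hsub h1
          rw [Finset.mem_filter] at h2
          exact h2.2 hnew
      have hcard₁ : (Finset.univ.filter (fun v => ¬ G.Reaches η₁ v₀ v)).card ≤ k := by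
        have := Finset.card_lt_card hsubset
        omega
      obtain ⟨η, hη1, hη2, hη3⟩ := ih η₁ hac₁ hcard₁
      refine ⟨η, hη1, hη2, ?_⟩
      have hinv1 : G.Inv ε η₁ := by
        intro u' W hW
        rw [hdiff, ← cutEdges_compl]
        apply netCross_cut_closed (G := G) ε Sᶜ _ hW
        intro g hg
        rw [cutEdges_compl] at hg
        exact (fcross g hg).1
      exact hinv1.trans hη3

/-! ### Unique source iff all-reachable -/

lemma allReach_iff_uniqueSource [Fintype V] {ε : E → Bool} (hac : G.Acyclic ε) (v₀ : V) :
    G.AllReach ε v₀ ↔ (G.IsSource ε v₀ ∧ ∀ v, G.IsSource ε v → v = v₀) := by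
  classical
  constructor
  · intro hAR
    constructor
    · intro e he
      exact hac e (he ▸ hAR (G.tail ε e))
    · intro v hv
      have := hAR v
      -- if v ≠ v₀ the last step of the path contradicts sourcehood
      induction this with
      | refl => rfl
      | tail hpre hstep ih2 =>
        obtain ⟨g, _, hg2⟩ := hstep
        exact absurd hg2 (hv g)
  · rintro ⟨hsrc, huniq⟩
    suffices h : ∀ n : ℕ, ∀ v : V,
        (Finset.univ.filter (fun u => G.Reaches ε u v)).card ≤ n → G.Reaches ε v₀ v by
      intro v
      exact h _ v le_rfl
    intro n
    induction n with
    | zero =>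
      intro v hcard
      exfalso
      have : v ∈ Finset.univ.filter (fun u => G.Reaches ε u v) :=
        Finset.mem_filter.2 ⟨Finset.mem_univ _, Relation.ReflTransGen.refl⟩
      have := Finset.card_pos.2 ⟨v, this⟩
      omega
    | succ n ih =>
      intro v hcard
      by_cases hv : G.IsSource ε v
      · rw [huniq v hv]
        exact Relation.ReflTransGen.refl
      · have : ∃ e, G.head ε e = v := by
          by_contra hc; push_neg at hc; exact hv hc
        obtain ⟨e, he⟩ := this
        have hsub : Finset.univ.filter (fun u => G.Reaches ε u (G.tail ε e)) ⊂
            Finset.univ.filter (fun u => G.Reaches ε u v) := by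
          constructor
          · intro w hw
            rw [Finset.mem_filter] at hw ⊢
            exact ⟨Finset.mem_univ _,
              Relation.ReflTransGen.tail hw.2 ⟨e, rfl, he⟩⟩
          · intro hsub
            have h1 : v ∈ Finset.univ.filter (fun u => G.Reaches ε u v) :=
              Finset.mem_filter.2 ⟨Finset.mem_univ _, Relation.ReflTransGen.refl⟩
            have h2 := hsub h1
            rw [Finset.mem_filter] at h2
            exact hac e (he.symm ▸ h2.2)
        have hcard' : (Finset.univ.filter (fun u => G.Reaches ε u (G.tail ε e))).card ≤ n := by
          have := Finset.card_lt_card hsub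
          omega
        exact Relation.ReflTransGen.tail (ih _ hcard') ⟨e, rfl, he⟩

/-! ### The class bijection -/

lemma cutEquiv_refl (ε : E → Bool) : G.CutEquiv ε ε := by
  left
  refine ⟨0, Fin.elim0, fun i => i.elim0, fun i => i.elim0, ?_⟩
  rw [Set.iUnion_of_empty]
  ext g
  simp [diffSet]

lemma numCutClasses_eq_allReach [Fintype V] [Fintype E] (hG : G.Connected) (v₀ : V) :
    G.numCutClasses = Nat.card {ε : E → Bool // G.Acyclic ε ∧ G.AllReach ε v₀} := by
  classical
  rw [numCutClasses]
  apply Nat.card_congr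
  apply Equiv.symm
  refine Equiv.ofBijective
    (fun η => ⟨G.cutClass η.1, η.1, η.2.1, rfl⟩) ⟨?_, ?_⟩
  · rintro ⟨η₁, hac₁, hAR₁⟩ ⟨η₂, hac₂, hAR₂⟩ hEq
    have hcc : G.cutClass η₁ = G.cutClass η₂ := congrArg Subtype.val hEq
    have hmem : η₁ ∈ G.cutClass η₂ := by
      rw [← hcc]
      exact ⟨hac₁, cutEquiv_refl η₁⟩
    have hinv : G.Inv η₂ η₁ := inv_of_cutEquiv hmem.2
    exact Subtype.ext (allreach_unique hG hAR₂ hAR₁ hinv).symm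
  · rintro ⟨C, ε, hac, rfl⟩
    obtain ⟨η, hacη, hARη, hinvη⟩ := exists_allReach hG v₀ hac
    refine ⟨⟨η, hacη, hARη⟩, ?_⟩
    apply Subtype.ext
    show G.cutClass η = G.cutClass ε
    ext ε'
    show (G.Acyclic ε' ∧ G.CutEquiv η ε') ↔ (G.Acyclic ε' ∧ G.CutEquiv ε ε')
    apply and_congr_right
    intro _
    rw [cutEquiv_iff_inv hG v₀, cutEquiv_iff_inv hG v₀]
    exact ⟨fun h => hinvη.trans h, fun h => hinvη.symm.trans h⟩

lemma numCutClasses_eq_uniqueSource [Fintype V] [Fintype E] (hG : G.Connected) (v₀ : V) :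
    G.numCutClasses = Nat.card {ε : E → Bool // G.Acyclic ε ∧ G.IsSource ε v₀ ∧
      ∀ v, G.IsSource ε v → v = v₀} := by
  rw [numCutClasses_eq_allReach hG v₀]
  apply Nat.card_congr
  apply Equiv.subtypeEquivRight
  intro ε
  constructor
  · rintro ⟨hac, hAR⟩
    exact ⟨hac, (allReach_iff_uniqueSource hac v₀).1 hAR⟩
  · rintro ⟨hac, h⟩
    exact ⟨hac, (allReach_iff_uniqueSource hac v₀).2 h⟩

/-! ### Quotient counting utilities -/

open Relation in
lemma eqvGen_congr {α : Type} {r s : α → α → Prop}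
    (h : ∀ a b, r a b ↔ s a b) : ∀ a b, EqvGen r a b ↔ EqvGen s a b := by
  intro a b
  constructor
  · exact fun hr => eqvMono (fun a b hab => (h a b).1 hab) hr
  · exact fun hs => eqvMono (fun a b hab => (h a b).2 hab) hs

open Relation in
lemma eqvGen_lift_fun {α β : Type} {base : α → α → Prop} {f : α → β}
    (h : ∀ a b, base a b → f a = f b) : ∀ a b, EqvGen base a b → f a = f b := by
  intro a b hab
  induction hab with
  | rel a b hr => exact h a b hr
  | refl => rfl
  | symm a b _ ih => exact ih.symm
  | trans a b c _ _ ih1 ih2 => exact ih1.trans ih2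

open Relation in
/-- Characterization of the equivalence closure of `r` plus one extra pair `(x, y)`. -/
lemma eqvGen_insert_pair {α : Type} {r s : α → α → Prop} {x y : α}
    (hs : ∀ a b, s a b ↔ (r a b ∨ (a = x ∧ b = y) ∨ (a = y ∧ b = x))) :
    ∀ a b, EqvGen s a b ↔ (EqvGen r a b ∨ (EqvGen r a x ∧ EqvGen r y b) ∨
      (EqvGen r a y ∧ EqvGen r x b)) := by
  intro a b
  constructor
  · intro h
    induction h with
    | rel a b hab =>
      rcases (hs a b).1 hab with h | ⟨rfl, rfl⟩ | ⟨rfl, rfl⟩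
      · exact Or.inl (EqvGen.rel _ _ h)
      · exact Or.inr (Or.inl ⟨EqvGen.refl _, EqvGen.refl _⟩)
      · exact Or.inr (Or.inr ⟨EqvGen.refl _, EqvGen.refl _⟩)
    | refl a => exact Or.inl (EqvGen.refl _)
    | symm a b _ ih =>
      rcases ih with h | ⟨h1, h2⟩ | ⟨h1, h2⟩
      · exact Or.inl (EqvGen.symm _ _ h)
      · exact Or.inr (Or.inr ⟨EqvGen.symm _ _ h2, EqvGen.symm _ _ h1⟩)
      · exact Or.inr (Or.inl ⟨EqvGen.symm _ _ h2, EqvGen.symm _ _ h1⟩)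
    | trans a b c _ _ ih1 ih2 =>
      rcases ih1 with h1 | ⟨h1, h1'⟩ | ⟨h1, h1'⟩ <;>
        rcases ih2 with h2 | ⟨h2, h2'⟩ | ⟨h2, h2'⟩
      · exact Or.inl (EqvGen.trans _ _ _ h1 h2)
      · exact Or.inr (Or.inl ⟨EqvGen.trans _ _ _ h1 h2, h2'⟩)
      · exact Or.inr (Or.inr ⟨EqvGen.trans _ _ _ h1 h2, h2'⟩)
      · exact Or.inr (Or.inl ⟨h1, EqvGen.trans _ _ _ h1' h2⟩)
      · -- a~x, y~b ; b~x, y~c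
        exact Or.inl (EqvGen.trans _ _ _ h1 (EqvGen.trans _ _ _ (EqvGen.symm _ _ h2)
          (EqvGen.trans _ _ _ (EqvGen.symm _ _ h1') h2')))
      · -- a~x, y~b ; b~y, x~c : a ~ x ~ c
        exact Or.inl (EqvGen.trans _ _ _ h1 h2')
      · exact Or.inr (Or.inr ⟨h1, EqvGen.trans _ _ _ h1' h2⟩)
      · -- a~y, x~b ; b~x, y~c : a ~ y ~ c
        exact Or.inl (EqvGen.trans _ _ _ h1 h2')
      · -- a~y, x~b ; b~y, x~c
        exact Or.inl (EqvGen.trans _ _ _ h1 (EqvGen.trans _ _ _ (EqvGen.symm _ _ h2)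
          (EqvGen.trans _ _ _ (EqvGen.symm _ _ h1') h2')))
  · intro h
    have hmono : ∀ a b, EqvGen r a b → EqvGen s a b :=
      fun a b hab => eqvMono (fun a b h' => (hs a b).2 (Or.inl h')) hab
    have hxy : EqvGen s x y := EqvGen.rel _ _ ((hs x y).2 (Or.inr (Or.inl ⟨rfl, rfl⟩)))
    rcases h with h | ⟨h1, h2⟩ | ⟨h1, h2⟩
    · exact hmono _ _ h
    · exact EqvGen.trans _ _ _ (hmono _ _ h1) (EqvGen.trans _ _ _ hxy (hmono _ _ h2))
    · exact EqvGen.trans _ _ _ (hmono _ _ h1)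
        (EqvGen.trans _ _ _ (EqvGen.symm _ _ hxy) (hmono _ _ h2))

open Relation in
lemma card_quot_le_insert_pair {α : Type} [Finite α] {r s : α → α → Prop} {x y : α}
    (hs : ∀ a b, s a b ↔ (r a b ∨ (a = x ∧ b = y) ∨ (a = y ∧ b = x))) :
    Nat.card (Quot r) ≤ Nat.card (Quot s) + 1 := by
  classical
  have hiff := eqvGen_insert_pair hs
  have hfinr : Finite (Quot r) := Finite.of_surjective (Quot.mk r) Quot.mk_surjective
  have hfins : Finite (Quot s) := Finite.of_surjective (Quot.mk s) Quot.mk_surjective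
  set q : Quot r → Quot s := Quot.lift (Quot.mk s)
    (fun a b hab => Quot.eqvGen_sound ((hiff a b).2 (Or.inl (EqvGen.rel _ _ hab)))) with hq
  set j : Quot r → (Quot s) ⊕ Unit := fun c =>
    if c = Quot.mk r x then Sum.inr () else Sum.inl (q c) with hj
  have hinj : Function.Injective j := by
    intro c₁ c₂ hc
    by_cases h1 : c₁ = Quot.mk r x <;> by_cases h2 : c₂ = Quot.mk r x
    · rw [h1, h2]
    · rw [hj] at hc; simp only [if_pos h1, if_neg h2] at hc; exact absurd hc (by simp)
    · rw [hj] at hc; simp only [if_neg h1, if_pos h2] at hc; exact absurd hc (by simp)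
    · rw [hj] at hc
      simp only [if_neg h1, if_neg h2, Sum.inl.injEq] at hc
      obtain ⟨a, rfl⟩ := Quot.exists_rep c₁
      obtain ⟨b, rfl⟩ := Quot.exists_rep c₂
      have : Quot.mk s a = Quot.mk s b := hc
      have := Quot.eqvGen_exact this
      rcases (hiff a b).1 this with h | ⟨ha, _⟩ | ⟨_, hb⟩
      · exact Quot.eqvGen_sound h
      · exact absurd (Quot.eqvGen_sound ha) h1
      · exact absurd (Quot.eqvGen_sound hb).symm h2
  calc Nat.card (Quot r) ≤ Nat.card ((Quot s) ⊕ Unit) := Nat.card_le_card_of_injective j hinj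
    _ = Nat.card (Quot s) + 1 := by rw [Nat.card_sum]; simp

/-! ### Component counts under deletion / contraction -/

def connBase (G : LabGraph V E) (A : Set E) (u v : V) : Prop :=
  ∃ e ∈ A, (G.fst e = u ∧ G.snd e = v) ∨ (G.fst e = v ∧ G.snd e = u)

lemma connRel_eq_eqvGen (A : Set E) : G.connRel A = Relation.EqvGen (G.connBase A) := rfl

open Relation in
noncomputable def quotEquivSelf {α : Type} {r : α → α → Prop} (h : ∀ a b, r a b → a = b) :
    Quot r ≃ α where
  toFun := Quot.lift id h
  invFun := Quot.mk r
  left_inv := by intro q; induction q using Quot.ind; rfl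
  right_inv := fun a => rfl

lemma ncomp_no_edges {A : Set E} (h : ∀ a b, ¬ G.connBase A a b) :
    G.ncomp A = Nat.card V := by
  rw [ncomp]
  apply Nat.card_congr
  apply quotEquivSelf
  intro a b hab
  rw [connRel_eq_eqvGen] at hab
  exact eqvGen_lift_fun (f := id) (fun a b hab => absurd hab (h a b)) a b hab

lemma card_quot_eqvGen {α : Type} (r : α → α → Prop) :
    Nat.card (Quot (Relation.EqvGen r)) = Nat.card (Quot r) := by
  apply Nat.card_congr
  apply quotEquivOfEqvGenIff
  intro u v
  exact Equivalence.eqvGen_iff (Relation.EqvGen.is_equivalence r)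

lemma connBase_insert (g : E) (A : Finset E) (a b : V) :
    G.connBase ↑(insert g A) a b ↔ (G.connBase ↑A a b ∨
      (a = G.fst g ∧ b = G.snd g) ∨ (a = G.snd g ∧ b = G.fst g)) := by
  classical
  constructor
  · rintro ⟨f, hf, hends⟩
    rw [Finset.coe_insert, Set.mem_insert_iff] at hf
    rcases hf with rfl | hf
    · rcases hends with ⟨h1, h2⟩ | ⟨h1, h2⟩
      · exact Or.inr (Or.inl ⟨h1.symm, h2.symm⟩)
      · exact Or.inr (Or.inr ⟨h2.symm, h1.symm⟩)
    · exact Or.inl ⟨f, hf, hends⟩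
  · rintro (⟨f, hf, hends⟩ | ⟨rfl, rfl⟩ | ⟨rfl, rfl⟩)
    · exact ⟨f, by simp [hf], hends⟩
    · exact ⟨g, by simp, Or.inl ⟨rfl, rfl⟩⟩
    · exact ⟨g, by simp, Or.inr ⟨rfl, rfl⟩⟩

lemma ncomp_le_insert [Finite V] (g : E) (A : Finset E) :
    G.ncomp ↑A ≤ G.ncomp ↑(insert g A) + 1 := by
  rw [ncomp, ncomp, connRel_eq_eqvGen, connRel_eq_eqvGen, card_quot_eqvGen, card_quot_eqvGen]
  exact card_quot_le_insert_pair (connBase_insert (G := G) g A)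

lemma ncomp_empty [Fintype V] : G.ncomp ↑(∅ : Finset E) = Fintype.card V := by
  rw [ncomp_no_edges, Nat.card_eq_fintype_card]
  rintro a b ⟨f, hf, _⟩
  simp at hf

lemma card_le_ncomp_add_card [Fintype V] (A : Finset E) :
    Fintype.card V ≤ G.ncomp ↑A + A.card := by
  classical
  induction A using Finset.induction_on with
  | empty => rw [ncomp_empty]; simp
  | @insert g A hg ih =>
    have h1 := ncomp_le_insert (G := G) g A
    have h2 : (insert g A).card = A.card + 1 := Finset.card_insert_of_notMem hg
    omega

lemma ncomp_insert_loop (g : E) (hloop : G.fst g = G.snd g) (A : Finset E) :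
    G.ncomp ↑(insert g A) = G.ncomp ↑A := by
  rw [ncomp, ncomp, connRel_eq_eqvGen, connRel_eq_eqvGen, card_quot_eqvGen, card_quot_eqvGen]
  apply Nat.card_congr
  apply quotEquivOfEqvGenIff
  intro u v
  have hbase : ∀ a b : V, G.connBase ↑(insert g A) a b ↔
      (G.connBase ↑A a b ∨ (a = G.snd g ∧ b = G.snd g) ∨ (a = G.snd g ∧ b = G.snd g)) := by
    intro a b
    rw [connBase_insert (G := G) g A, hloop]
  have hins := eqvGen_insert_pair hbase
  constructor
  · intro h
    rcases (hins u v).1 h with h | ⟨h1, h2⟩ | ⟨h1, h2⟩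
    · exact h
    · exact Relation.EqvGen.trans _ _ _ h1 h2
    · exact Relation.EqvGen.trans _ _ _ h1 h2
  · intro h
    exact (hins u v).2 (Or.inl h)

lemma ncomp_deleteEdge (e : E) (A' : Finset {f : E // f ≠ e}) :
    (G.deleteEdge e).ncomp ↑A' = G.ncomp ↑(A'.map (Function.Embedding.subtype _)) := by
  rw [ncomp, ncomp, connRel_eq_eqvGen, connRel_eq_eqvGen, card_quot_eqvGen, card_quot_eqvGen]
  apply Nat.card_congr
  apply quotEquivOfEqvGenIff
  apply eqvGen_congr
  intro a b
  constructor
  · rintro ⟨f, hf, hends⟩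
    exact ⟨f.1, Finset.mem_coe.2 (Finset.mem_map_of_mem _ (Finset.mem_coe.1 hf)), hends⟩
  · rintro ⟨g, hg, hends⟩
    rw [Finset.mem_coe, Finset.mem_map] at hg
    obtain ⟨f, hf, rfl⟩ := hg
    exact ⟨f, Finset.mem_coe.2 hf, hends⟩

lemma ncomp_contractEdge (e : E) (B' : Finset {f : E // f ≠ e}) :
    (G.contractEdge e).ncomp ↑B' =
      G.ncomp ↑(insert e (B'.map (Function.Embedding.subtype _))) := by
  classical
  rw [ncomp, ncomp]
  apply Nat.card_congr
  refine ⟨Quot.lift (Quot.lift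
      (Quot.mk (G.connRel ↑(insert e (B'.map (Function.Embedding.subtype _))))) ?_) ?_,
    Quot.lift (fun v => Quot.mk ((G.contractEdge e).connRel ↑B')
      (Quot.mk (fun a b => a = G.fst e ∧ b = G.snd e) v)) ?_, ?_, ?_⟩
  · -- respr
    rintro a b ⟨rfl, rfl⟩
    exact Quot.sound (Relation.EqvGen.rel _ _
      ⟨e, Finset.mem_coe.2 (Finset.mem_insert_self _ _), Or.inl ⟨rfl, rfl⟩⟩)
  · -- resp2
    apply eqvGen_lift_fun
    rintro p q ⟨f, hf, hends⟩
    have hstep : Quot.mk (G.connRel ↑(insert e (B'.map (Function.Embedding.subtype _))))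
        (G.fst f.1) = Quot.mk _ (G.snd f.1) :=
      Quot.sound (Relation.EqvGen.rel _ _
        ⟨f.1, Finset.mem_coe.2 (Finset.mem_insert_of_mem
          (Finset.mem_map_of_mem _ (Finset.mem_coe.1 hf))), Or.inl ⟨rfl, rfl⟩⟩)
    rcases hends with ⟨h1, h2⟩ | ⟨h1, h2⟩
    · rw [← h1, ← h2]
      exact hstep
    · rw [← h1, ← h2]
      exact hstep.symm
  · -- resp1
    apply eqvGen_lift_fun
    rintro a b ⟨g, hg, hends⟩
    by_cases hge : g = e
    · subst hge
      have hxy : Quot.mk (fun a b => a = G.fst g ∧ b = G.snd g) (G.fst g) = Quot.mk _ (G.snd g) :=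
        Quot.sound ⟨rfl, rfl⟩
      rcases hends with ⟨h1, h2⟩ | ⟨h1, h2⟩
      · rw [← h1, ← h2, hxy]
      · rw [← h1, ← h2, hxy]
    · have hgB : (⟨g, hge⟩ : {f : E // f ≠ e}) ∈ B' := by
        have := Finset.mem_coe.1 hg
        rw [Finset.mem_insert] at this
        rcases this with h | h
        · exact absurd h hge
        · rw [Finset.mem_map] at h
          obtain ⟨f, hf, hfe⟩ := h
          have : f = ⟨g, hge⟩ := Subtype.ext hfe
          exact this ▸ hf
      apply Quot.sound
      apply Relation.EqvGen.rel
      refine ⟨⟨g, hge⟩, Finset.mem_coe.2 hgB, ?_⟩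
      rcases hends with ⟨h1, h2⟩ | ⟨h1, h2⟩
      · exact Or.inl ⟨by rw [← h1]; rfl, by rw [← h2]; rfl⟩
      · exact Or.inr ⟨by rw [← h1]; rfl, by rw [← h2]; rfl⟩
  · -- left inverse
    intro c
    obtain ⟨p, rfl⟩ := Quot.exists_rep c
    obtain ⟨v, rfl⟩ := Quot.exists_rep p
    rfl
  · -- right inverse
    intro c
    obtain ⟨v, rfl⟩ := Quot.exists_rep c
    rfl

lemma card_quot_pair [Fintype V] {x y : V} (hxy : x ≠ y) :
    Nat.card (Quot fun a b => a = x ∧ b = y) = Fintype.card V - 1 := by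
  classical
  have hequiv : (Quot fun a b => a = x ∧ b = y) ≃ {v : V // v ≠ x} := by
    refine ⟨Quot.lift (fun v => if h : v = x then ⟨y, Ne.symm hxy⟩ else ⟨v, h⟩) ?_,
      fun s => Quot.mk _ s.1, ?_, ?_⟩
    · rintro a b ⟨rfl, rfl⟩
      simp [hxy, Ne.symm hxy]
    · intro c
      induction c using Quot.ind with
      | _ v =>
        by_cases hv : v = x
        · subst hv
          simp only [dif_pos rfl]
          exact (Quot.sound ⟨rfl, rfl⟩).symm
        · simp only [dif_neg hv]
    · rintro ⟨v, hv⟩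
      simp only [dif_neg hv]
  rw [Nat.card_congr hequiv, Nat.card_eq_fintype_card]
  rw [Fintype.card_subtype_compl (fun v => v = x)]
  congr 1

lemma ncomp_univ_of_connected [Fintype V] [Nonempty V] (hG : G.Connected) :
    G.ncomp Set.univ = 1 := by
  rw [ncomp, Nat.card_eq_one_iff_unique]
  constructor
  · constructor
    intro c₁ c₂
    obtain ⟨a, rfl⟩ := Quot.exists_rep c₁
    obtain ⟨b, rfl⟩ := Quot.exists_rep c₂
    exact Quot.sound (hG a b)
  · exact ⟨Quot.mk _ (Classical.arbitrary V)⟩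

lemma ncomp_pos [Fintype V] [Nonempty V] (A : Set E) : 1 ≤ G.ncomp A := by
  rw [ncomp]
  have hfin : Finite (Quot (G.connRel A)) :=
    Finite.of_surjective (Quot.mk _) Quot.mk_surjective
  have hne : Nonempty (Quot (G.connRel A)) := ⟨Quot.mk _ (Classical.arbitrary V)⟩
  exact Nat.card_pos

lemma ncomp_le_card [Fintype V] (A : Set E) : G.ncomp A ≤ Fintype.card V := by
  rw [ncomp, ← Nat.card_eq_fintype_card]
  exact Nat.card_le_card_of_surjective (Quot.mk _) Quot.mk_surjective

/-! ### Deletion–contraction reachability translations -/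

lemma reaches_decompose {ε : E → Bool} {e : E} {u v : V} (h : G.Reaches ε u v) :
    G.ReachesAvoiding ε e u v ∨
      (G.ReachesAvoiding ε e u (G.tail ε e) ∧ G.ReachesAvoiding ε e (G.head ε e) v) := by
  induction h with
  | refl => exact Or.inl Relation.ReflTransGen.refl
  | tail hpre hstep ih =>
    obtain ⟨f, ht, hh⟩ := hstep
    by_cases hf : f = e
    · subst hf
      rcases ih with h | ⟨h1, h2⟩
      · exact Or.inr ⟨ht ▸ h, hh ▸ Relation.ReflTransGen.refl⟩
      · exact Or.inr ⟨h1, hh ▸ Relation.ReflTransGen.refl⟩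
    · rcases ih with h | ⟨h1, h2⟩
      · exact Or.inl (Relation.ReflTransGen.tail h ⟨f, hf, ht, hh⟩)
      · exact Or.inr ⟨h1, Relation.ReflTransGen.tail h2 ⟨f, hf, ht, hh⟩⟩

lemma reaches_of_avoiding {ε : E → Bool} {e : E} {u v : V}
    (h : G.ReachesAvoiding ε e u v) : G.Reaches ε u v :=
  rtgMono (fun a b ⟨f, _, ht, hh⟩ => ⟨f, ht, hh⟩) h

lemma reaches_comp {ε : E → Bool} {e : E} {u v : V}
    (h1 : G.ReachesAvoiding ε e u (G.tail ε e)) (h2 : G.ReachesAvoiding ε e (G.head ε e) v) :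
    G.Reaches ε u v :=
  Relation.ReflTransGen.trans
    (Relation.ReflTransGen.tail (reaches_of_avoiding h1) ⟨e, rfl, rfl⟩)
    (reaches_of_avoiding h2)

lemma reaches_iff_avoiding (ε : E → Bool) (e : E) (u v : V) :
    G.Reaches ε u v ↔ (G.ReachesAvoiding ε e u v ∨
      (G.ReachesAvoiding ε e u (G.tail ε e) ∧ G.ReachesAvoiding ε e (G.head ε e) v)) := by
  constructor
  · exact reaches_decompose
  · rintro (h | ⟨h1, h2⟩)
    · exact reaches_of_avoiding h
    · exact reaches_comp h1 h2

lemma avoiding_antisym {ε : E → Bool} {e : E}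
    (hAA : ∀ f, f ≠ e → ¬ G.ReachesAvoiding ε e (G.head ε f) (G.tail ε f))
    {u v : V} (h1 : G.ReachesAvoiding ε e u v) (h2 : G.ReachesAvoiding ε e v u) : u = v := by
  rcases Relation.ReflTransGen.cases_head h1 with rfl | ⟨c, hstep, hrest⟩
  · rfl
  · obtain ⟨f, hf, ht, hh⟩ := hstep
    exfalso
    apply hAA f hf
    rw [hh, ht]
    exact Relation.ReflTransGen.trans hrest h2

lemma acyclic_iff_avoiding (ε : E → Bool) (e : E) :
    G.Acyclic ε ↔ ((∀ f, f ≠ e → ¬ G.ReachesAvoiding ε e (G.head ε f) (G.tail ε f)) ∧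
      ¬ G.ReachesAvoiding ε e (G.head ε e) (G.tail ε e)) := by
  constructor
  · intro hac
    exact ⟨fun f _ h => hac f (reaches_of_avoiding h),
      fun h => hac e (reaches_of_avoiding h)⟩
  · rintro ⟨hAA, hA⟩ f hcyc
    rcases reaches_decompose (e := e) hcyc with h | ⟨h1, h2⟩
    · by_cases hf : f = e
      · exact hA (hf ▸ h)
      · exact hAA f hf h
    · by_cases hf : f = e
      · subst hf
        exact hA h1
      · apply hA
        exact Relation.ReflTransGen.trans h2
          (Relation.ReflTransGen.trans
            (Relation.ReflTransGen.single ⟨f, hf, rfl, rfl⟩) h1)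

/-! ### Extending an orientation of `G - e` -/

noncomputable def extend (e : E) (ε' : {f : E // f ≠ e} → Bool) (b : Bool) : E → Bool :=
  fun f => if h : f = e then b else ε' ⟨f, h⟩

variable {e : E}

lemma extend_self (ε' : {f : E // f ≠ e} → Bool) (b : Bool) : extend e ε' b e = b :=
  dif_pos rfl

lemma extend_ne (ε' : {f : E // f ≠ e} → Bool) (b : Bool) {f : E} (hf : f ≠ e) :
    extend e ε' b f = ε' ⟨f, hf⟩ := dif_neg hf

lemma extend_tail_ne (ε' : {f : E // f ≠ e} → Bool) (b b' : Bool) {f : E} (hf : f ≠ e) :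
    G.tail (extend e ε' b) f = G.tail (extend e ε' b') f ∧
    G.head (extend e ε' b) f = G.head (extend e ε' b') f := by
  apply tail_congr
  rw [extend_ne ε' b hf, extend_ne ε' b' hf]

lemma RA_extend_congr (ε' : {f : E // f ≠ e} → Bool) (b b' : Bool) (u v : V) :
    G.ReachesAvoiding (extend e ε' b) e u v ↔ G.ReachesAvoiding (extend e ε' b') e u v := by
  constructor <;>
  · intro h
    refine rtgMono ?_ h
    rintro a c ⟨f, hf, ht, hh⟩
    refine ⟨f, hf, ?_, ?_⟩
    · rw [← ht]
      exact ((extend_tail_ne (G := G) ε' _ _ hf).1).symm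
    · rw [← hh]
      exact ((extend_tail_ne (G := G) ε' _ _ hf).2).symm

lemma deleteEdge_tail_head (ε' : {f : E // f ≠ e} → Bool) (b : Bool) (f : {f : E // f ≠ e}) :
    (G.deleteEdge e).tail ε' f = G.tail (extend e ε' b) f.1 ∧
    (G.deleteEdge e).head ε' f = G.head (extend e ε' b) f.1 := by
  have : extend e ε' b f.1 = ε' f := by
    rw [extend_ne ε' b f.2]
  unfold tail head deleteEdge
  rw [this]
  exact ⟨rfl, rfl⟩

lemma reaches_deleteEdge_iff (ε' : {f : E // f ≠ e} → Bool) (b : Bool) (u v : V) :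
    (G.deleteEdge e).Reaches ε' u v ↔ G.ReachesAvoiding (extend e ε' b) e u v := by
  constructor
  · intro h
    refine rtgMono ?_ h
    rintro a c ⟨f, ht, hh⟩
    exact ⟨f.1, f.2, by rw [← (deleteEdge_tail_head (G := G) ε' b f).1]; exact ht,
      by rw [← (deleteEdge_tail_head (G := G) ε' b f).2]; exact hh⟩
  · intro h
    refine rtgMono ?_ h
    rintro a c ⟨f, hf, ht, hh⟩
    exact ⟨⟨f, hf⟩, by rw [(deleteEdge_tail_head (G := G) ε' b ⟨f, hf⟩).1]; exact ht,
      by rw [(deleteEdge_tail_head (G := G) ε' b ⟨f, hf⟩).2]; exact hh⟩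

lemma acyclic_deleteEdge_iff (ε' : {f : E // f ≠ e} → Bool) (b : Bool) :
    (G.deleteEdge e).Acyclic ε' ↔ ∀ f : E, ∀ _ : f ≠ e,
      ¬ G.ReachesAvoiding (extend e ε' b) e
        (G.head (extend e ε' b) f) (G.tail (extend e ε' b) f) := by
  constructor
  · intro h f hf hra
    apply h ⟨f, hf⟩
    rw [(deleteEdge_tail_head (G := G) ε' b ⟨f, hf⟩).1,
      (deleteEdge_tail_head (G := G) ε' b ⟨f, hf⟩).2]
    rw [reaches_deleteEdge_iff (G := G) ε' b]
    exact hra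
  · intro h f hra
    apply h f.1 f.2
    rw [← (deleteEdge_tail_head (G := G) ε' b f).1,
      ← (deleteEdge_tail_head (G := G) ε' b f).2]
    rw [← reaches_deleteEdge_iff (G := G) ε' b]
    exact hra

/-! ### The contracted graph -/

open Relation in
lemma quot_mk_pair_eq_iff {x y : V} (hxy : x ≠ y) (a b : V) :
    (Quot.mk (fun a b => a = x ∧ b = y) a = Quot.mk (fun a b => a = x ∧ b = y) b) ↔
      (a = b ∨ (a = x ∧ b = y) ∨ (a = y ∧ b = x)) := by
  constructor
  · intro h
    have h' := Quot.eqvGen_exact h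
    clear h
    induction h' with
    | rel a b hab => exact Or.inr (Or.inl hab)
    | refl a => exact Or.inl rfl
    | symm a b _ ih =>
      rcases ih with rfl | ⟨rfl, rfl⟩ | ⟨rfl, rfl⟩
      · exact Or.inl rfl
      · exact Or.inr (Or.inr ⟨rfl, rfl⟩)
      · exact Or.inr (Or.inl ⟨rfl, rfl⟩)
    | trans a b c _ _ ih1 ih2 =>
      rcases ih1 with h1 | ⟨h1, h2⟩ | ⟨h1, h2⟩ <;>
        rcases ih2 with h3 | ⟨h3, h4⟩ | ⟨h3, h4⟩ <;>
        subst_vars <;> tauto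
  · rintro (rfl | ⟨rfl, rfl⟩ | ⟨rfl, rfl⟩)
    · rfl
    · exact Quot.sound ⟨rfl, rfl⟩
    · exact (Quot.sound ⟨rfl, rfl⟩).symm

def QRel (G : LabGraph V E) (ε : E → Bool) (e : E) : V → V → Prop :=
  Relation.ReflTransGen (fun a b =>
    (∃ f, f ≠ e ∧ G.tail ε f = a ∧ G.head ε f = b) ∨
    (a = G.fst e ∧ b = G.snd e) ∨ (a = G.snd e ∧ b = G.fst e))

lemma contractEdge_tail_head (ε' : {f : E // f ≠ e} → Bool) (b : Bool) (f : {f : E // f ≠ e}) :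
    (G.contractEdge e).tail ε' f
      = Quot.mk (fun a b => a = G.fst e ∧ b = G.snd e) (G.tail (extend e ε' b) f.1) ∧
    (G.contractEdge e).head ε' f
      = Quot.mk (fun a b => a = G.fst e ∧ b = G.snd e) (G.head (extend e ε' b) f.1) := by
  have hv : extend e ε' b f.1 = ε' f := by rw [extend_ne ε' b f.2]
  unfold tail head contractEdge
  rw [hv]
  cases ε' f <;> exact ⟨rfl, rfl⟩

lemma qrel_of_eq {ε : E → Bool} (hxy : G.fst e ≠ G.snd e) {a b : V}
    (h : Quot.mk (fun a b => a = G.fst e ∧ b = G.snd e) a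
       = Quot.mk (fun a b => a = G.fst e ∧ b = G.snd e) b) : G.QRel ε e a b := by
  rcases (quot_mk_pair_eq_iff hxy a b).1 h with rfl | ⟨rfl, rfl⟩ | ⟨rfl, rfl⟩
  · exact Relation.ReflTransGen.refl
  · exact Relation.ReflTransGen.single (Or.inr (Or.inl ⟨rfl, rfl⟩))
  · exact Relation.ReflTransGen.single (Or.inr (Or.inr ⟨rfl, rfl⟩))

lemma reaches_contract_iff (hxy : G.fst e ≠ G.snd e)
    (ε' : {f : E // f ≠ e} → Bool) (b : Bool) (u v : V) :
    (G.contractEdge e).Reaches ε' (Quot.mk _ u) (Quot.mk _ v) ↔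
      G.QRel (extend e ε' b) e u v := by
  constructor
  · intro h
    have key : ∀ c d, (G.contractEdge e).Reaches ε' c d →
        ∀ u v : V, c = Quot.mk _ u → d = Quot.mk _ v → G.QRel (extend e ε' b) e u v := by
      intro c d h
      induction h with
      | refl =>
        intro u v hc hd
        exact qrel_of_eq hxy (hc.symm.trans hd)
      | tail hpre hstep ih =>
        intro u v hc hd
        obtain ⟨f, ht, hh⟩ := hstep
        have h1 := (contractEdge_tail_head (G := G) ε' b f).1
        have h2 := (contractEdge_tail_head (G := G) ε' b f).2
        have hq1 : G.QRel (extend e ε' b) e u (G.tail (extend e ε' b) f.1) :=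
          ih u _ hc (ht.symm.trans h1)
        have hq2 : G.QRel (extend e ε' b) e (G.head (extend e ε' b) f.1) v := by
          apply qrel_of_eq hxy
          rw [← h2, hh, hd]
        exact Relation.ReflTransGen.trans
          (Relation.ReflTransGen.tail hq1 (Or.inl ⟨f.1, f.2, rfl, rfl⟩)) hq2
    exact key _ _ h u v rfl rfl
  · intro h
    induction h with
    | refl => exact Relation.ReflTransGen.refl
    | tail hpre hstep ih =>
      rcases hstep with ⟨f, hf, ht, hh⟩ | ⟨rfl, rfl⟩ | ⟨rfl, rfl⟩
      · refine Relation.ReflTransGen.tail ih ⟨⟨f, hf⟩, ?_, ?_⟩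
        · rw [(contractEdge_tail_head (G := G) ε' b ⟨f, hf⟩).1, ht]
        · rw [(contractEdge_tail_head (G := G) ε' b ⟨f, hf⟩).2, hh]
      · have hq : Quot.mk (fun a b => a = G.fst e ∧ b = G.snd e) (G.fst e)
            = Quot.mk _ (G.snd e) := Quot.sound ⟨rfl, rfl⟩
        rw [← hq]
        exact ih
      · have hq : Quot.mk (fun a b => a = G.fst e ∧ b = G.snd e) (G.fst e)
            = Quot.mk _ (G.snd e) := Quot.sound ⟨rfl, rfl⟩
        rw [hq]
        exact ih

lemma allReach_contract_iff (hxy : G.fst e ≠ G.snd e)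
    (ε' : {f : E // f ≠ e} → Bool) (b : Bool) (v₀ : V) :
    (G.contractEdge e).AllReach ε' (Quot.mk _ v₀) ↔ ∀ v, G.QRel (extend e ε' b) e v₀ v := by
  constructor
  · intro h v
    exact (reaches_contract_iff (G := G) hxy ε' b v₀ v).1 (h _)
  · intro h q
    obtain ⟨v, rfl⟩ := Quot.exists_rep q
    exact (reaches_contract_iff (G := G) hxy ε' b v₀ v).2 (h v)

lemma qrel_collapse {ε : E → Bool}
    (hnxy : ¬ G.ReachesAvoiding ε e (G.fst e) (G.snd e))
    (hnyx : ¬ G.ReachesAvoiding ε e (G.snd e) (G.fst e)) (u v : V) :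
    G.QRel ε e u v ↔ (G.ReachesAvoiding ε e u v ∨
      (G.ReachesAvoiding ε e u (G.fst e) ∧ G.ReachesAvoiding ε e (G.snd e) v) ∨
      (G.ReachesAvoiding ε e u (G.snd e) ∧ G.ReachesAvoiding ε e (G.fst e) v)) := by
  constructor
  · intro h
    induction h with
    | refl => exact Or.inl Relation.ReflTransGen.refl
    | tail hpre hstep ih =>
      rcases hstep with ⟨f, hf, ht, hh⟩ | ⟨rfl, rfl⟩ | ⟨rfl, rfl⟩
      · rcases ih with h | ⟨h1, h2⟩ | ⟨h1, h2⟩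
        · exact Or.inl (Relation.ReflTransGen.tail h ⟨f, hf, ht, hh⟩)
        · exact Or.inr (Or.inl ⟨h1, Relation.ReflTransGen.tail h2 ⟨f, hf, ht, hh⟩⟩)
        · exact Or.inr (Or.inr ⟨h1, Relation.ReflTransGen.tail h2 ⟨f, hf, ht, hh⟩⟩)
      · rcases ih with h | ⟨h1, h2⟩ | ⟨h1, h2⟩
        · exact Or.inr (Or.inl ⟨h, Relation.ReflTransGen.refl⟩)
        · exact absurd h2 hnyx
        · exact Or.inl h1
      · rcases ih with h | ⟨h1, h2⟩ | ⟨h1, h2⟩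
        · exact Or.inr (Or.inr ⟨h, Relation.ReflTransGen.refl⟩)
        · exact Or.inl h1
        · exact absurd h2 hnxy
  · have hmono : ∀ a c, G.ReachesAvoiding ε e a c → G.QRel ε e a c :=
      fun a c h => rtgMono (fun p q hs => Or.inl hs) h
    have hstepxy : G.QRel ε e (G.fst e) (G.snd e) :=
      Relation.ReflTransGen.single (Or.inr (Or.inl ⟨rfl, rfl⟩))
    have hstepyx : G.QRel ε e (G.snd e) (G.fst e) :=
      Relation.ReflTransGen.single (Or.inr (Or.inr ⟨rfl, rfl⟩))
    rintro (h | ⟨h1, h2⟩ | ⟨h1, h2⟩)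
    · exact hmono _ _ h
    · exact Relation.ReflTransGen.trans (hmono _ _ h1)
        (Relation.ReflTransGen.trans hstepxy (hmono _ _ h2))
    · exact Relation.ReflTransGen.trans (hmono _ _ h1)
        (Relation.ReflTransGen.trans hstepyx (hmono _ _ h2))

lemma acyclic_contract_of (hxy : G.fst e ≠ G.snd e) (ε' : {f : E // f ≠ e} → Bool) (b : Bool)
    (hAA : ∀ f, f ≠ e → ¬ G.ReachesAvoiding (extend e ε' b) e
      (G.head (extend e ε' b) f) (G.tail (extend e ε' b) f))
    (hnxy : ¬ G.ReachesAvoiding (extend e ε' b) e (G.fst e) (G.snd e))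
    (hnyx : ¬ G.ReachesAvoiding (extend e ε' b) e (G.snd e) (G.fst e)) :
    (G.contractEdge e).Acyclic ε' := by
  intro f hcyc
  rw [(contractEdge_tail_head (G := G) ε' b f).1,
    (contractEdge_tail_head (G := G) ε' b f).2] at hcyc
  have hq := (reaches_contract_iff (G := G) hxy ε' b _ _).1 hcyc
  rcases (qrel_collapse (G := G) hnxy hnyx _ _).1 hq with h | ⟨h1, h2⟩ | ⟨h1, h2⟩
  · exact hAA f.1 f.2 h
  · -- head ⇝ x and y ⇝ tail : then y ⇝ tail → head ⇝ x gives y ⇝ x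
    apply hnyx
    exact Relation.ReflTransGen.trans h2
      (Relation.ReflTransGen.trans
        (Relation.ReflTransGen.single ⟨f.1, f.2, rfl, rfl⟩) h1)
  · apply hnxy
    exact Relation.ReflTransGen.trans h2
      (Relation.ReflTransGen.trans
        (Relation.ReflTransGen.single ⟨f.1, f.2, rfl, rfl⟩) h1)

lemma acyclic_contract_imp (hxy : G.fst e ≠ G.snd e) (ε' : {f : E // f ≠ e} → Bool) (b : Bool)
    (hA : (G.contractEdge e).Acyclic ε') :
    ∀ f, f ≠ e → ¬ G.ReachesAvoiding (extend e ε' b) e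
      (G.head (extend e ε' b) f) (G.tail (extend e ε' b) f) := by
  intro f hf hra
  apply hA ⟨f, hf⟩
  rw [(contractEdge_tail_head (G := G) ε' b ⟨f, hf⟩).1,
    (contractEdge_tail_head (G := G) ε' b ⟨f, hf⟩).2]
  apply (reaches_contract_iff (G := G) hxy ε' b _ _).2
  exact rtgMono (fun p q hs => Or.inl hs) hra

lemma not_acyclic_contract_of_path (hxy : G.fst e ≠ G.snd e)
    (ε' : {f : E // f ≠ e} → Bool) (b : Bool)
    (hp : G.ReachesAvoiding (extend e ε' b) e (G.fst e) (G.snd e) ∨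
          G.ReachesAvoiding (extend e ε' b) e (G.snd e) (G.fst e)) :
    ¬ (G.contractEdge e).Acyclic ε' := by
  intro hA
  have hmono : ∀ a c, G.ReachesAvoiding (extend e ε' b) e a c →
      G.QRel (extend e ε' b) e a c :=
    fun a c h => rtgMono (fun p q hs => Or.inl hs) h
  rcases hp with h | h
  · rcases Relation.ReflTransGen.cases_head h with heq | ⟨c, hstep, hrest⟩
    · exact hxy heq
    · obtain ⟨f, hf, ht, hh⟩ := hstep
      apply hA ⟨f, hf⟩
      rw [(contractEdge_tail_head (G := G) ε' b ⟨f, hf⟩).1,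
        (contractEdge_tail_head (G := G) ε' b ⟨f, hf⟩).2]
      apply (reaches_contract_iff (G := G) hxy ε' b _ _).2
      have h1 : G.QRel (extend e ε' b) e (G.head (extend e ε' b) f) (G.snd e) := by
        rw [hh]
        exact hmono _ _ hrest
      have h2 : G.QRel (extend e ε' b) e (G.snd e) (G.tail (extend e ε' b) f) := by
        rw [ht]
        exact Relation.ReflTransGen.single (Or.inr (Or.inr ⟨rfl, rfl⟩))
      exact Relation.ReflTransGen.trans h1 h2
  · rcases Relation.ReflTransGen.cases_head h with heq | ⟨c, hstep, hrest⟩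
    · exact hxy heq.symm
    · obtain ⟨f, hf, ht, hh⟩ := hstep
      apply hA ⟨f, hf⟩
      rw [(contractEdge_tail_head (G := G) ε' b ⟨f, hf⟩).1,
        (contractEdge_tail_head (G := G) ε' b ⟨f, hf⟩).2]
      apply (reaches_contract_iff (G := G) hxy ε' b _ _).2
      have h1 : G.QRel (extend e ε' b) e (G.head (extend e ε' b) f) (G.fst e) := by
        rw [hh]
        exact hmono _ _ hrest
      have h2 : G.QRel (extend e ε' b) e (G.fst e) (G.tail (extend e ε' b) f) := by
        rw [ht]
        exact Relation.ReflTransGen.single (Or.inr (Or.inl ⟨rfl, rfl⟩))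
      exact Relation.ReflTransGen.trans h1 h2

/-! ### The pointwise deletion–contraction count -/

lemma tail_head_extend_true (ε' : {f : E // f ≠ e} → Bool) :
    G.tail (extend e ε' true) e = G.fst e ∧ G.head (extend e ε' true) e = G.snd e := by
  unfold tail head
  rw [extend_self]
  exact ⟨rfl, rfl⟩

lemma tail_head_extend_false (ε' : {f : E // f ≠ e} → Bool) :
    G.tail (extend e ε' false) e = G.snd e ∧ G.head (extend e ε' false) e = G.fst e := by
  unfold tail head
  rw [extend_self]
  exact ⟨rfl, rfl⟩

lemma pointwise_count (hxy : G.fst e ≠ G.snd e) (v₀ : V) (ε' : {f : E // f ≠ e} → Bool) :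
    ((if (G.Acyclic (extend e ε' true) ∧ G.AllReach (extend e ε' true) v₀) then 1 else 0) +
     (if (G.Acyclic (extend e ε' false) ∧ G.AllReach (extend e ε' false) v₀) then 1 else 0) : ℕ) =
    (if ((G.deleteEdge e).Acyclic ε' ∧ (G.deleteEdge e).AllReach ε' v₀) then 1 else 0) +
    (if ((G.contractEdge e).Acyclic ε' ∧
        (G.contractEdge e).AllReach ε' (Quot.mk _ v₀)) then 1 else 0) := by
  classical
  set RA := G.ReachesAvoiding (extend e ε' true) e with hRA
  have hcongrRA : ∀ u v, G.ReachesAvoiding (extend e ε' false) e u v ↔ RA u v :=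
    fun u v => RA_extend_congr (G := G) ε' false true u v
  set AA : Prop := ∀ f, f ≠ e → ¬ RA (G.head (extend e ε' true) f) (G.tail (extend e ε' true) f)
    with hAAdef
  have hT : (G.Acyclic (extend e ε' true) ∧ G.AllReach (extend e ε' true) v₀) ↔
      ((AA ∧ ¬ RA (G.snd e) (G.fst e)) ∧
        (∀ v, RA v₀ v ∨ (RA v₀ (G.fst e) ∧ RA (G.snd e) v))) := by
    rw [acyclic_iff_avoiding (G := G) (extend e ε' true) e]
    rw [(tail_head_extend_true (G := G) ε').1, (tail_head_extend_true (G := G) ε').2]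
    apply and_congr Iff.rfl
    constructor
    · intro h v
      rcases reaches_decompose (e := e) (h v) with h1 | ⟨h1, h2⟩
      · exact Or.inl h1
      · rw [(tail_head_extend_true (G := G) ε').1] at h1
        rw [(tail_head_extend_true (G := G) ε').2] at h2
        exact Or.inr ⟨h1, h2⟩
    · intro h v
      rcases h v with h1 | ⟨h1, h2⟩
      · exact reaches_of_avoiding h1
      · refine reaches_comp (e := e) ?_ ?_
        · rw [(tail_head_extend_true (G := G) ε').1]
          exact h1
        · rw [(tail_head_extend_true (G := G) ε').2]
          exact h2
  have hF : (G.Acyclic (extend e ε' false) ∧ G.AllReach (extend e ε' false) v₀) ↔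
      ((AA ∧ ¬ RA (G.fst e) (G.snd e)) ∧
        (∀ v, RA v₀ v ∨ (RA v₀ (G.snd e) ∧ RA (G.fst e) v))) := by
    rw [acyclic_iff_avoiding (G := G) (extend e ε' false) e]
    rw [(tail_head_extend_false (G := G) ε').1, (tail_head_extend_false (G := G) ε').2]
    apply and_congr
    · apply and_congr
      · constructor
        · intro h f hf hra
          apply h f hf
          rw [(extend_tail_ne (G := G) ε' false true hf).1,
            (extend_tail_ne (G := G) ε' false true hf).2]
          exact (hcongrRA _ _).2 hra
        · intro h f hf hra
          apply h f hf
          rw [(extend_tail_ne (G := G) ε' false true hf).1,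
            (extend_tail_ne (G := G) ε' false true hf).2] at hra
          exact (hcongrRA _ _).1 hra
      · rw [hcongrRA]
    · constructor
      · intro h v
        rcases reaches_decompose (e := e) (h v) with h1 | ⟨h1, h2⟩
        · exact Or.inl ((hcongrRA _ _).1 h1)
        · rw [(tail_head_extend_false (G := G) ε').1] at h1
          rw [(tail_head_extend_false (G := G) ε').2] at h2
          exact Or.inr ⟨(hcongrRA _ _).1 h1, (hcongrRA _ _).1 h2⟩
      · intro h v
        rcases h v with h1 | ⟨h1, h2⟩
        · exact reaches_of_avoiding ((hcongrRA _ _).2 h1)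
        · refine reaches_comp (e := e) ?_ ?_
          · rw [(tail_head_extend_false (G := G) ε').1]
            exact (hcongrRA _ _).2 h1
          · rw [(tail_head_extend_false (G := G) ε').2]
            exact (hcongrRA _ _).2 h2
  have hD : ((G.deleteEdge e).Acyclic ε' ∧ (G.deleteEdge e).AllReach ε' v₀) ↔
      (AA ∧ (∀ v, RA v₀ v)) := by
    apply and_congr
    · exact acyclic_deleteEdge_iff (G := G) ε' true
    · constructor
      · intro h v
        exact (reaches_deleteEdge_iff (G := G) ε' true v₀ v).1 (h v)
      · intro h v
        exact (reaches_deleteEdge_iff (G := G) ε' true v₀ v).2 (h v)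
  by_cases hAA : AA
  · by_cases h1 : RA (G.fst e) (G.snd e) <;> by_cases h2 : RA (G.snd e) (G.fst e)
    · exact absurd (avoiding_antisym hAA h1 h2) hxy
    · -- RA x y holds
      have hCneg : ¬ ((G.contractEdge e).Acyclic ε' ∧
          (G.contractEdge e).AllReach ε' (Quot.mk _ v₀)) := by
        rintro ⟨hc, _⟩
        exact not_acyclic_contract_of_path (G := G) hxy ε' true (Or.inl h1) hc
      have hFneg : ¬ (G.Acyclic (extend e ε' false) ∧ G.AllReach (extend e ε' false) v₀) :=
        fun h => (hF.1 h).1.2 h1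
      rw [if_neg hCneg, if_neg hFneg]
      by_cases hp : ∀ v, RA v₀ v
      · rw [if_pos (hT.2 ⟨⟨hAA, h2⟩, fun v => Or.inl (hp v)⟩), if_pos (hD.2 ⟨hAA, hp⟩)]
      · have hTneg : ¬ _ := fun h => hp (by
          intro v
          rcases (hT.1 h).2 v with hv | ⟨ha, hb⟩
          · exact hv
          · exact Relation.ReflTransGen.trans ha (Relation.ReflTransGen.trans h1 hb))
        rw [if_neg hTneg, if_neg (fun h => hp (hD.1 h).2)]
    · -- RA y x holds
      have hCneg : ¬ ((G.contractEdge e).Acyclic ε' ∧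
          (G.contractEdge e).AllReach ε' (Quot.mk _ v₀)) := by
        rintro ⟨hc, _⟩
        exact not_acyclic_contract_of_path (G := G) hxy ε' true (Or.inr h2) hc
      have hTneg : ¬ (G.Acyclic (extend e ε' true) ∧ G.AllReach (extend e ε' true) v₀) :=
        fun h => (hT.1 h).1.2 h2
      rw [if_neg hCneg, if_neg hTneg]
      by_cases hp : ∀ v, RA v₀ v
      · rw [if_pos (hF.2 ⟨⟨hAA, h1⟩, fun v => Or.inl (hp v)⟩), if_pos (hD.2 ⟨hAA, hp⟩)]
      · have hFneg : ¬ _ := fun h => hp (by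
          intro v
          rcases (hF.1 h).2 v with hv | ⟨ha, hb⟩
          · exact hv
          · exact Relation.ReflTransGen.trans ha (Relation.ReflTransGen.trans h2 hb))
        rw [if_neg hFneg, if_neg (fun h => hp (hD.1 h).2)]
    · -- neither direction: the generic case
      have hacC : (G.contractEdge e).Acyclic ε' :=
        acyclic_contract_of (G := G) hxy ε' true hAA h1 h2
      have hC : ((G.contractEdge e).Acyclic ε' ∧
          (G.contractEdge e).AllReach ε' (Quot.mk _ v₀)) ↔
          (∀ v, RA v₀ v ∨ (RA v₀ (G.fst e) ∧ RA (G.snd e) v) ∨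
            (RA v₀ (G.snd e) ∧ RA (G.fst e) v)) := by
        constructor
        · rintro ⟨_, hr⟩ v
          exact (qrel_collapse (G := G) h1 h2 v₀ v).1
            ((allReach_contract_iff (G := G) hxy ε' true v₀).1 hr v)
        · intro hC
          exact ⟨hacC, (allReach_contract_iff (G := G) hxy ε' true v₀).2
            (fun v => (qrel_collapse (G := G) h1 h2 v₀ v).2 (hC v))⟩
      have hTiff : (G.Acyclic (extend e ε' true) ∧ G.AllReach (extend e ε' true) v₀) ↔
          (∀ v, RA v₀ v ∨ (RA v₀ (G.fst e) ∧ RA (G.snd e) v)) :=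
        ⟨fun h => (hT.1 h).2, fun h => hT.2 ⟨⟨hAA, h2⟩, h⟩⟩
      have hFiff : (G.Acyclic (extend e ε' false) ∧ G.AllReach (extend e ε' false) v₀) ↔
          (∀ v, RA v₀ v ∨ (RA v₀ (G.snd e) ∧ RA (G.fst e) v)) :=
        ⟨fun h => (hF.1 h).2, fun h => hF.2 ⟨⟨hAA, h1⟩, h⟩⟩
      have hDiff : ((G.deleteEdge e).Acyclic ε' ∧ (G.deleteEdge e).AllReach ε' v₀) ↔
          (∀ v, RA v₀ v) :=
        ⟨fun h => (hD.1 h).2, fun h => hD.2 ⟨hAA, h⟩⟩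
      by_cases hα : ∀ v, RA v₀ v
      · rw [if_pos (hTiff.2 (fun v => Or.inl (hα v))),
          if_pos (hFiff.2 (fun v => Or.inl (hα v))),
          if_pos (hDiff.2 hα), if_pos (hC.2 (fun v => Or.inl (hα v)))]
      · rw [if_neg (fun h => hα (hDiff.1 h))]
        by_cases hA : ∀ v, RA v₀ v ∨ (RA v₀ (G.fst e) ∧ RA (G.snd e) v)
        · have hBneg : ¬ (∀ v, RA v₀ v ∨ (RA v₀ (G.snd e) ∧ RA (G.fst e) v)) := by
            intro hB
            apply hα
            intro v
            rcases hA v with hv | ⟨ha1, ha2⟩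
            · exact hv
            · rcases hB v with hv | ⟨hb1, hb2⟩
              · exact hv
              · exact Relation.ReflTransGen.trans hb1 ha2
          rw [if_pos (hTiff.2 hA), if_neg (fun h => hBneg (hFiff.1 h)),
            if_pos (hC.2 (fun v => by
              rcases hA v with hv | hv
              · exact Or.inl hv
              · exact Or.inr (Or.inl hv)))]
        · by_cases hB : ∀ v, RA v₀ v ∨ (RA v₀ (G.snd e) ∧ RA (G.fst e) v)
          · rw [if_neg (fun h => hA (hTiff.1 h)), if_pos (hFiff.2 hB),
              if_pos (hC.2 (fun v => by
                rcases hB v with hv | hv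
                · exact Or.inl hv
                · exact Or.inr (Or.inr hv)))]
          · have hCneg : ¬ (∀ v, RA v₀ v ∨ (RA v₀ (G.fst e) ∧ RA (G.snd e) v) ∨
                (RA v₀ (G.snd e) ∧ RA (G.fst e) v)) := by
              intro hCp
              rw [not_forall] at hA hB
              obtain ⟨v₁, hv₁⟩ := hA
              obtain ⟨v₂, hv₂⟩ := hB
              push_neg at hv₁ hv₂
              obtain ⟨hv₁0, hv₁x⟩ := hv₁
              obtain ⟨hv₂0, hv₂y⟩ := hv₂
              rcases hCp v₁ with hv | hv | ⟨hy0, hxv₁⟩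
              · exact hv₁0 hv
              · exact (hv₁x hv.1) hv.2
              · rcases hCp v₂ with hv | ⟨hx0, hyv₂⟩ | hv
                · exact hv₂0 hv
                · exact hv₁0 (Relation.ReflTransGen.trans hx0 hxv₁)
                · exact (hv₂y hv.1) hv.2
            rw [if_neg (fun h => hA (hTiff.1 h)), if_neg (fun h => hB (hFiff.1 h)),
              if_neg (fun h => hCneg (hC.1 h))]
  · have k1 : ¬ (G.Acyclic (extend e ε' true) ∧ G.AllReach (extend e ε' true) v₀) :=
      fun h => hAA (hT.1 h).1.1
    have k2 : ¬ (G.Acyclic (extend e ε' false) ∧ G.AllReach (extend e ε' false) v₀) :=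
      fun h => hAA (hF.1 h).1.1
    have k3 : ¬ ((G.deleteEdge e).Acyclic ε' ∧ (G.deleteEdge e).AllReach ε' v₀) :=
      fun h => hAA (hD.1 h).1
    have k4 : ¬ ((G.contractEdge e).Acyclic ε' ∧
        (G.contractEdge e).AllReach ε' (Quot.mk _ v₀)) := by
      rintro ⟨hc, _⟩
      exact hAA (acyclic_contract_imp (G := G) hxy ε' true hc)
    rw [if_neg k1, if_neg k2, if_neg k3, if_neg k4]

/-! ### Greene–Zaslavsky via deletion–contraction -/

theorem gz_count (m : ℕ) : ∀ (V E : Type) [Fintype V] [Fintype E] (G : LabGraph V E) (v₀ : V),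
    Fintype.card E = m →
    (Nat.card {ε : E → Bool // G.Acyclic ε ∧ G.AllReach ε v₀} : ℤ) =
      (-1)^(Fintype.card V - 1) *
        ∑ A : Finset E, (if G.ncomp ↑A = 1 then (-1)^(A.card) else (0:ℤ)) := by
  induction m with
  | zero =>
    intro V E _ _ G v₀ hE
    classical
    have hEe : IsEmpty E := Fintype.card_eq_zero_iff.1 hE
    have hsum : ∑ A : Finset E, (if G.ncomp ↑A = 1 then (-1)^(A.card) else (0:ℤ)) =
        (if G.ncomp ↑(∅ : Finset E) = 1 then (-1)^(Finset.card (∅ : Finset E)) else (0:ℤ)) := by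
      apply Finset.sum_eq_single (∅ : Finset E)
      · intro b _ hb
        exfalso
        apply hb
        ext a
        exact isEmptyElim a
      · intro h
        exact absurd (Finset.mem_univ _) h
    rw [hsum, ncomp_empty]
    by_cases hV : ∀ v : V, v = v₀
    · have hcard : Fintype.card V = 1 := Fintype.card_eq_one_iff.2 ⟨v₀, fun y => hV y⟩
      have hone : Nat.card {ε : E → Bool // G.Acyclic ε ∧ G.AllReach ε v₀} = 1 := by
        rw [Nat.card_eq_one_iff_unique]
        constructor
        · constructor
          rintro ⟨ε₁, _⟩ ⟨ε₂, _⟩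
          apply Subtype.ext
          funext f
          exact isEmptyElim f
        · refine ⟨⟨fun _ => true, fun f => isEmptyElim f, fun v => ?_⟩⟩
          rw [hV v]
          exact Relation.ReflTransGen.refl
      rw [hone, hcard, if_pos rfl]
      norm_num
    · push_neg at hV
      obtain ⟨v, hv⟩ := hV
      have hempty : IsEmpty {ε : E → Bool // G.Acyclic ε ∧ G.AllReach ε v₀} := by
        refine ⟨?_⟩
        rintro ⟨ε, hac, hAR⟩
        rcases Relation.ReflTransGen.cases_head (hAR v) with h | ⟨c, ⟨f, _⟩, _⟩
        · exact hv h.symm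
        · exact isEmptyElim f
      rw [Nat.card_of_isEmpty]
      have hne : Fintype.card V ≠ 1 := by
        intro h
        obtain ⟨a, ha⟩ := Fintype.card_eq_one_iff.1 h
        exact hv ((ha v).trans (ha v₀).symm)
      rw [if_neg hne]
      norm_num
  | succ k ih =>
    intro V E instV instE G v₀ hE
    classical
    obtain ⟨e⟩ : Nonempty E := Fintype.card_pos_iff.1 (by omega)
    have hcardE' : Fintype.card {f : E // f ≠ e} = k := by
      have h1 : Fintype.card {f : E // ¬ f = e}
          = Fintype.card E - Fintype.card {f : E // f = e} :=
        Fintype.card_subtype_compl _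
      rw [Fintype.card_subtype_eq, hE] at h1
      exact h1.trans (by omega)
    by_cases hxy : G.fst e = G.snd e
    · -- loop: both sides vanish
      have hzero : Nat.card {ε : E → Bool // G.Acyclic ε ∧ G.AllReach ε v₀} = 0 := by
        have : IsEmpty {ε : E → Bool // G.Acyclic ε ∧ G.AllReach ε v₀} := by
          refine ⟨?_⟩
          rintro ⟨ε, hac, _⟩
          have hht : G.head ε e = G.tail ε e := by
            unfold head tail
            cases ε e <;> simp [hxy]
          apply hac e
          rw [hht]
          exact Relation.ReflTransGen.refl
        rw [Nat.card_of_isEmpty]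
      rw [hzero]
      have hsum0 : ∑ A : Finset E, (if G.ncomp ↑A = 1 then (-1)^(A.card) else (0:ℤ)) = 0 := by
        refine Finset.sum_involution (fun A _ => if e ∈ A then A.erase e else insert e A)
          ?_ ?_ (fun A _ => Finset.mem_univ _) ?_
        · intro A _
          by_cases he : e ∈ A
          · simp only [if_pos he]
            have hc : G.ncomp ↑A = G.ncomp ↑(A.erase e) := by
              conv_lhs => rw [← Finset.insert_erase he]
              exact ncomp_insert_loop (G := G) e hxy (A.erase e)
            have hcard : A.card = (A.erase e).card + 1 := by
              rw [Finset.card_erase_of_mem he]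
              have := Finset.card_pos.2 ⟨e, he⟩
              omega
            rw [hc, hcard]
            by_cases h1 : G.ncomp ↑(A.erase e) = 1
            · rw [if_pos h1, if_pos h1, pow_succ]
              ring
            · rw [if_neg h1, if_neg h1]
              ring
          · simp only [if_neg he]
            have hc : G.ncomp ↑(insert e A) = G.ncomp ↑A := ncomp_insert_loop (G := G) e hxy A
            have hcard : (insert e A).card = A.card + 1 := Finset.card_insert_of_notMem he
            rw [hc, hcard]
            by_cases h1 : G.ncomp ↑A = 1
            · rw [if_pos h1, if_pos h1, pow_succ]
              ring
            · rw [if_neg h1, if_neg h1]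
              ring
        · intro A _ _
          by_cases he : e ∈ A
          · simp only [if_pos he]
            intro hEq
            apply Finset.notMem_erase e A
            rw [hEq]
            exact he
          · simp only [if_neg he]
            intro hEq
            exact he (hEq ▸ Finset.mem_insert_self e A)
        · intro A _
          by_cases he : e ∈ A
          · rw [if_pos he, if_neg (Finset.notMem_erase e A), Finset.insert_erase he]
          · rw [if_neg he, if_pos (Finset.mem_insert_self e A), Finset.erase_insert he]
      rw [hsum0]
      norm_num
    · -- main case
      have hext : ∀ ε : E → Bool, extend e (fun f => ε f.1) (ε e) = ε := by
        intro ε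
        funext f
        by_cases hf : f = e
        · subst hf
          exact extend_self _ _
        · exact extend_ne _ _ hf
      have hLHSnat : Nat.card {ε : E → Bool // G.Acyclic ε ∧ G.AllReach ε v₀} =
          ∑ ε' : {f : E // f ≠ e} → Bool,
            ((if (G.Acyclic (extend e ε' true) ∧ G.AllReach (extend e ε' true) v₀)
                then 1 else 0) +
             (if (G.Acyclic (extend e ε' false) ∧ G.AllReach (extend e ε' false) v₀)
                then 1 else 0)) := by
        have h1 : Nat.card {ε : E → Bool // G.Acyclic ε ∧ G.AllReach ε v₀}
            = Nat.card {p : ({f : E // f ≠ e} → Bool) × Bool //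
                G.Acyclic (extend e p.1 p.2) ∧ G.AllReach (extend e p.1 p.2) v₀} := by
          apply Nat.card_congr
          refine ⟨fun ε => ⟨((fun f => ε.1 f.1), ε.1 e), ?_⟩,
            fun p => ⟨extend e p.1.1 p.1.2, p.2⟩, ?_, ?_⟩
          · rw [hext ε.1]
            exact ε.2
          · intro ε
            apply Subtype.ext
            exact hext ε.1
          · rintro ⟨⟨ε', b⟩, hp⟩
            apply Subtype.ext
            have h1 : (fun f : {f : E // f ≠ e} => extend e ε' b f.1) = ε' := by
              funext f
              exact extend_ne ε' b f.2
            simp only [extend_self, h1]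
        rw [h1, Nat.card_eq_fintype_card, Fintype.card_subtype, Finset.card_filter,
          Fintype.sum_prod_type]
        apply Finset.sum_congr rfl
        intro ε' _
        rw [Fintype.sum_bool]
      have hDELnat : Nat.card {ε' : {f : E // f ≠ e} → Bool //
            (G.deleteEdge e).Acyclic ε' ∧ (G.deleteEdge e).AllReach ε' v₀} =
          ∑ ε' : {f : E // f ≠ e} → Bool,
            (if ((G.deleteEdge e).Acyclic ε' ∧ (G.deleteEdge e).AllReach ε' v₀)
              then 1 else 0) := by
        rw [Nat.card_eq_fintype_card, Fintype.card_subtype, Finset.card_filter]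
      have hCONnat : Nat.card {ε' : {f : E // f ≠ e} → Bool //
            (G.contractEdge e).Acyclic ε' ∧
            (G.contractEdge e).AllReach ε' (Quot.mk _ v₀)} =
          ∑ ε' : {f : E // f ≠ e} → Bool,
            (if ((G.contractEdge e).Acyclic ε' ∧
                (G.contractEdge e).AllReach ε' (Quot.mk _ v₀))
              then 1 else 0) := by
        rw [Nat.card_eq_fintype_card, Fintype.card_subtype, Finset.card_filter]
      have hsplitnat : Nat.card {ε : E → Bool // G.Acyclic ε ∧ G.AllReach ε v₀} =
          Nat.card {ε' : {f : E // f ≠ e} → Bool //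
            (G.deleteEdge e).Acyclic ε' ∧ (G.deleteEdge e).AllReach ε' v₀} +
          Nat.card {ε' : {f : E // f ≠ e} → Bool //
            (G.contractEdge e).Acyclic ε' ∧
            (G.contractEdge e).AllReach ε' (Quot.mk _ v₀)} := by
        rw [hLHSnat, hDELnat, hCONnat, ← Finset.sum_add_distrib]
        exact Finset.sum_congr rfl (fun ε' _ => pointwise_count (G := G) hxy v₀ ε')
      -- instances for the contracted graph
      letI : DecidableEq (Quot fun a b => a = G.fst e ∧ b = G.snd e) := Classical.decEq _
      letI instVq : Fintype (Quot fun a b => a = G.fst e ∧ b = G.snd e) :=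
        Fintype.ofSurjective (Quot.mk _) Quot.mk_surjective
      have hcardVq : Fintype.card (Quot fun a b => a = G.fst e ∧ b = G.snd e)
          = Fintype.card V - 1 := by
        rw [← Nat.card_eq_fintype_card]
        exact card_quot_pair hxy
      have hdel := ih V {f : E // f ≠ e} (G.deleteEdge e) v₀ hcardE'
      have hcon := ih (Quot fun a b => a = G.fst e ∧ b = G.snd e) {f : E // f ≠ e}
        (G.contractEdge e) (Quot.mk _ v₀) hcardE'
      rw [hsplitnat, Nat.cast_add, hdel, hcon, hcardVq]
      -- now pure sum manipulation
      have hVge2 : 2 ≤ Fintype.card V := Fintype.one_lt_card_iff_nontrivial.2 ⟨⟨_, _, hxy⟩⟩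
      have hdelsum : (∑ A' : Finset {f : E // f ≠ e},
            (if (G.deleteEdge e).ncomp ↑A' = 1 then (-1:ℤ)^(A'.card) else 0)) =
          ∑ A ∈ Finset.univ.filter (fun A : Finset E => e ∉ A),
            (if G.ncomp ↑A = 1 then (-1:ℤ)^(A.card) else 0) := by
        refine Finset.sum_bij' (fun A' _ => A'.map (Function.Embedding.subtype _))
          (fun A _ => A.subtype (fun f => f ≠ e)) ?_ ?_ ?_ ?_ ?_
        · intro A' _
          rw [Finset.mem_filter]
          refine ⟨Finset.mem_univ _, ?_⟩
          rw [Finset.mem_map]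
          rintro ⟨f, _, hfe⟩
          exact f.2 hfe
        · intro A _
          exact Finset.mem_univ _
        · intro A' _
          ext f
          constructor
          · intro hf
            rw [Finset.mem_subtype, Finset.mem_map] at hf
            obtain ⟨g, hg, hge⟩ := hf
            have : g = f := Subtype.ext hge
            exact this ▸ hg
          · intro hf
            rw [Finset.mem_subtype, Finset.mem_map]
            exact ⟨f, hf, rfl⟩
        · intro A hA
          rw [Finset.mem_filter] at hA
          rw [Finset.subtype_map]
          apply Finset.filter_true_of_mem
          intro f hf hfe
          exact hA.2 (hfe ▸ hf)
        · intro A' _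
          rw [← ncomp_deleteEdge, Finset.card_map]
      have hconsum : (∑ A' : Finset {f : E // f ≠ e},
            (if (G.contractEdge e).ncomp ↑A' = 1 then (-1:ℤ)^(A'.card) else 0)) =
          - ∑ A ∈ Finset.univ.filter (fun A : Finset E => e ∈ A),
            (if G.ncomp ↑A = 1 then (-1:ℤ)^(A.card) else 0) := by
        rw [← Finset.sum_neg_distrib]
        refine Finset.sum_bij' (fun A' _ => insert e (A'.map (Function.Embedding.subtype _)))
          (fun A _ => (A.erase e).subtype (fun f => f ≠ e)) ?_ ?_ ?_ ?_ ?_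
        · intro A' _
          rw [Finset.mem_filter]
          exact ⟨Finset.mem_univ _, Finset.mem_insert_self _ _⟩
        · intro A _
          exact Finset.mem_univ _
        · intro A' _
          have hnm : e ∉ A'.map (Function.Embedding.subtype _) := by
            rw [Finset.mem_map]
            rintro ⟨f, _, hfe⟩
            exact f.2 hfe
          rw [Finset.erase_insert hnm]
          ext f
          constructor
          · intro hf
            rw [Finset.mem_subtype, Finset.mem_map] at hf
            obtain ⟨g, hg, hge⟩ := hf
            have : g = f := Subtype.ext hge
            exact this ▸ hg
          · intro hf
            rw [Finset.mem_subtype, Finset.mem_map]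
            exact ⟨f, hf, rfl⟩
        · intro A hA
          rw [Finset.mem_filter] at hA
          have h1 : ((A.erase e).subtype (fun f => f ≠ e)).map (Function.Embedding.subtype _)
              = A.erase e := by
            rw [Finset.subtype_map]
            apply Finset.filter_true_of_mem
            intro f hf hfe
            exact (Finset.notMem_erase e A) (hfe ▸ hf)
          rw [h1, Finset.insert_erase hA.2]
        · intro A' _
          have hnm : e ∉ A'.map (Function.Embedding.subtype _) := by
            rw [Finset.mem_map]
            rintro ⟨f, _, hfe⟩
            exact f.2 hfe
          rw [ncomp_contractEdge (G := G) e A',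
            Finset.card_insert_of_notMem hnm, Finset.card_map]
          by_cases h1 : G.ncomp ↑(insert e (A'.map (Function.Embedding.subtype _))) = 1
          · rw [if_pos h1, if_pos h1, pow_succ]
            ring
          · rw [if_neg h1, if_neg h1]
            ring
      rw [hdelsum, hconsum]
      rw [← Finset.sum_filter_add_sum_filter_not Finset.univ (fun A : Finset E => e ∈ A)]
      have hpow : (-1:ℤ)^(Fintype.card V - 1 - 1) = -(-1:ℤ)^(Fintype.card V - 1) := by
        obtain ⟨m, hm⟩ : ∃ m, Fintype.card V = m + 2 := ⟨Fintype.card V - 2, by omega⟩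
        rw [hm]
        have h1 : m + 2 - 1 = m + 1 := by omega
        have h2 : m + 2 - 1 - 1 = m := by omega
        rw [h2, h1, pow_succ]
        ring
      rw [hpow]
      ring

/-! ### Evaluating the Tutte polynomial at (1, 0) -/

lemma tutte_one_zero [Fintype V] [Fintype E] (hG : G.Connected) (v₀ : V) :
    G.tutte 1 0 = (-1)^(Fintype.card V - 1) *
      ∑ A : Finset E, (if G.ncomp ↑A = 1 then (-1)^(A.card) else (0:ℤ)) := by
  classical
  haveI : Nonempty V := ⟨v₀⟩
  have huniv : G.ncomp Set.univ = 1 := ncomp_univ_of_connected hG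
  have hrankuniv : G.rank (Set.univ) = Fintype.card V - 1 := by rw [rank, huniv]
  have hkey : ∀ a b : ℕ, b ≤ a → (-1:ℤ)^(a - b) = (-1:ℤ)^b * (-1:ℤ)^a := by
    intro a b hba
    have h1 : (-1:ℤ)^a = (-1)^(a - b) * (-1)^b := by
      rw [← pow_add, Nat.sub_add_cancel hba]
    have hsq : (-1:ℤ)^b * (-1)^b = 1 := by
      rw [← pow_add, ← two_mul, pow_mul]
      norm_num
    rw [h1, show (-1:ℤ)^b * ((-1:ℤ)^(a-b) * (-1)^b) = (-1)^(a-b) * ((-1)^b * (-1)^b) from by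
      ring, hsq, mul_one]
  rw [tutte, Finset.mul_sum]
  apply Finset.sum_congr rfl
  intro A _
  by_cases hA : G.ncomp ↑A = 1
  · have hrankA : G.rank ↑A = Fintype.card V - 1 := by rw [rank, hA]
    have hle : Fintype.card V - 1 ≤ A.card := by
      have h1 := card_le_ncomp_add_card (G := G) A
      rw [hA] at h1
      omega
    rw [hrankuniv, hrankA, if_pos hA, Nat.sub_self]
    simp only [pow_zero, one_mul]
    have h1 : ((0:ℤ) - 1) = -1 := by ring
    rw [h1, hkey A.card (Fintype.card V - 1) hle]
  · rw [if_neg hA, hrankuniv]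
    have hc1 : 1 ≤ G.ncomp (↑A : Set E) := ncomp_pos _
    have hc2 : G.ncomp (↑A : Set E) ≤ Fintype.card V := ncomp_le_card _
    have hexp : Fintype.card V - 1 - G.rank ↑A = G.ncomp ↑A - 1 := by
      rw [rank]
      omega
    have h0 : ((1:ℤ) - 1) = 0 := by ring
    rw [hexp, h0, zero_pow (by omega : G.ncomp (↑A : Set E) - 1 ≠ 0), zero_mul, mul_zero]

end Aux

end LabGraph

/-- For a connected graph `G`, the number of cut equivalence classes of
acyclic orientations equals `T_G(1,0)`, which also equals the number of acyclic
orientations with unique source a given fixed vertex `v₀`. -/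
theorem stmt18 {V E : Type} [Fintype V] [Fintype E] (G : LabGraph V E) (hG : G.Connected)
    (v₀ : V) :
    (G.numCutClasses : ℤ) = G.tutte 1 0 ∧
      G.numCutClasses = Nat.card {ε : E → Bool // G.Acyclic ε ∧ G.IsSource ε v₀ ∧
        ∀ v, G.IsSource ε v → v = v₀} := by
  constructor
  · rw [LabGraph.numCutClasses_eq_allReach hG v₀, LabGraph.tutte_one_zero hG v₀]
    exact LabGraph.gz_count (Fintype.card E) V E G v₀ rfl
  · exact LabGraph.numCutClasses_eq_uniqueSource hG v₀
end
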